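/- arXiv:2309.09383 — 7 statements merged into one kernel-verified Lean document; each statement's English description precedes it below -/
import Mathlib

section
/- Let n ∈ ℕ with n ≥ k, and let N = b^n. Then the Lebesgue measure of the set of θ ∈ ℝ/ℤ such that |μ̂_n(θ)| ≥ 1 − (1/4)b^{−3k²} is at most 2b^{k²} N^{−k}. -/
open scoped BigOperators

/-- The Fourier transform `μ̂_n(θ)` of the probability measure `μ_n` on `ℤ` which places
mass `2^{-n}` on each number `(∑_{i<n} x_i b^i)^k` with all digits `x_i ∈ {d₁, d₂}`. -/
noncomputable def muHat (b k d₁ d₂ n : ℕ) (θ : ℝ) : ℂ :=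
  (2 ^ n : ℂ)⁻¹ * ∑ x : Fin n → Bool,
    Complex.exp (2 * Real.pi * Complex.I *
      ((((∑ i : Fin n, (if x i then d₂ else d₁) * b ^ (i : ℕ)) ^ k : ℕ) : ℝ) * θ))

open Finset Real
open scoped Nat

/-!
If `|μ̂_n(θ)| ≥ 1 - ε`, then, since `1 - cos 2πv ≥ 8 ‖v‖²`, the phases `m ^ k θ` of the `2 ^ n`
digit numbers `m` lie in mean square within `O(√ε)` of a common value modulo `1`. Averaging over
the digits outside a set `J` of `k` positions gives a cube of `2 ^ k` such numbers on which this
holds, and the `k`-th finite difference over that cube cancels the common value and turns `m ^ k`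
into `G b ^ s` with `G = (-1)^k k! (d₂ - d₁)^k` and `s = ∑ J`. Sums of `k` distinct positions
cover `k(n - k) + 1` consecutive values of `s`, so `‖G b ^ s θ‖ ≤ η` for all of them. As
`(b + 1) η < 1`, the integer nearest to `G b ^ (s + 1) θ` is `b` times the one nearest to
`G b ^ s θ`, which improves the bound at the bottom `s₀` of the range to `η b ^ (-k(n - k))`.
The `θ ∈ [0, 1)` with this property lie in `|G| b ^ s₀ + 1` intervals of length
`2 η b ^ (-k(n - k)) / (|G| b ^ s₀)`.
-/

theorem eight_mul_sq_sub_round_le_one_sub_cos (v : ℝ) :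
    8 * (v - round v) ^ 2 ≤ 1 - cos (2 * π * v) := by
  have hcos : cos (2 * π * v) = cos (2 * π * (v - round v)) := by
    rw [mul_sub, ← cos_sub_int_mul_two_pi (2 * π * v) (round v)]
    ring_nf
  have hw : |2 * π * (v - round v)| ≤ π := by
    rw [abs_mul, abs_of_pos (by positivity : (0 : ℝ) < 2 * π)]
    nlinarith [abs_sub_round v, pi_pos]
  have := cos_le_one_sub_mul_cos_sq hw
  rw [hcos]
  field_simp at this ⊢
  nlinarith [pi_pos]

theorem sum_cos_sub_arg_eq_norm {ι : Type*} [Fintype ι] (u : ι → ℝ) :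
    ∑ i, cos (2 * π * u i - (∑ i, Complex.exp (2 * π * Complex.I * u i)).arg) =
      ‖∑ i, Complex.exp (2 * π * Complex.I * u i)‖ := by
  set S := ∑ i, Complex.exp (2 * π * Complex.I * u i)
  have hS : S * Complex.exp (-S.arg * Complex.I) = ‖S‖ := by
    calc S * Complex.exp (-S.arg * Complex.I)
        = ‖S‖ * Complex.exp (S.arg * Complex.I) * Complex.exp (-S.arg * Complex.I) := by
          rw [Complex.norm_mul_exp_arg_mul_I]
      _ = ‖S‖ := by rw [mul_assoc, ← Complex.exp_add]; simp
  rw [← Complex.ofReal_re ‖S‖, ← hS, sum_mul, Complex.re_sum]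
  refine sum_congr rfl fun i _ => ?_
  rw [← Complex.exp_add, ← Complex.exp_ofReal_mul_I_re]
  congr 2
  push_cast
  ring

theorem exists_sum_sq_sub_round_le_of_norm_sum_exp_ge {ι : Type*} [Fintype ι] (u : ι → ℝ)
    {ε : ℝ} (h : (1 - ε) * Fintype.card ι ≤ ‖∑ i, Complex.exp (2 * π * Complex.I * u i)‖) :
    ∃ ψ : ℝ, 8 * ∑ i, (u i - ψ - round (u i - ψ)) ^ 2 ≤ ε * Fintype.card ι := by
  set S := ∑ i, Complex.exp (2 * π * Complex.I * u i)
  refine ⟨S.arg / (2 * π), ?_⟩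
  have harg : ∀ i, 2 * π * (u i - S.arg / (2 * π)) = 2 * π * u i - S.arg := fun i => by
    field_simp
  calc 8 * ∑ i, (u i - S.arg / (2 * π) - round (u i - S.arg / (2 * π))) ^ 2
      ≤ ∑ i, (1 - cos (2 * π * (u i - S.arg / (2 * π)))) := by
        rw [mul_sum]
        exact sum_le_sum fun i _ => eight_mul_sq_sub_round_le_one_sub_cos _
    _ = Fintype.card ι - ‖S‖ := by
        simp [harg, sum_sub_distrib, sum_cos_sub_arg_eq_norm, S]
    _ ≤ ε * Fintype.card ι := by linarith

section FiniteDifference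

variable {ι R : Type*} [DecidableEq ι] [CommRing R] (h : ι → R) (A : R)

theorem sum_powerset_insert_neg_one_pow_mul_add_sum_pow {J : Finset ι} {a : ι} (ha : a ∉ J)
    (m : ℕ) :
    ∑ v ∈ (insert a J).powerset, (-1) ^ #v * (A + ∑ j ∈ v, h j) ^ m =
      -∑ i ∈ range m, (m.choose i : R) * h a ^ (m - i) *
        ∑ v ∈ J.powerset, (-1) ^ #v * (A + ∑ j ∈ v, h j) ^ i := by
  have hshift : ∀ v ∈ J.powerset, (-1) ^ #(insert a v) * (A + ∑ j ∈ insert a v, h j) ^ m =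
      -∑ i ∈ range (m + 1), (m.choose i : R) * h a ^ (m - i) *
        ((-1) ^ #v * (A + ∑ j ∈ v, h j) ^ i) := by
    intro v hv
    have hav : a ∉ v := fun hav => ha (mem_powerset.mp hv hav)
    rw [card_insert_of_notMem hav, sum_insert hav,
      show A + (h a + ∑ j ∈ v, h j) = (A + ∑ j ∈ v, h j) + h a by ring, add_pow, mul_sum,
      ← sum_neg_distrib]
    refine sum_congr rfl fun i _ => ?_
    ring
  rw [sum_powerset_insert ha, sum_congr rfl hshift, sum_neg_distrib, sum_comm]
  simp_rw [← mul_sum]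
  rw [sum_range_succ, Nat.choose_self, Nat.sub_self]
  ring

theorem sum_powerset_neg_one_pow_mul_add_sum_pow_eq_zero {J : Finset ι} {m : ℕ}
    (hm : m < #J) : ∑ v ∈ J.powerset, (-1) ^ #v * (A + ∑ j ∈ v, h j) ^ m = 0 := by
  induction J using Finset.induction_on generalizing m with
  | empty => simp at hm
  | insert a J ha ih =>
    rw [card_insert_of_notMem ha] at hm
    rw [sum_powerset_insert_neg_one_pow_mul_add_sum_pow h A ha, neg_eq_zero]
    refine sum_eq_zero fun i hi => ?_
    rw [ih ((mem_range.mp hi).trans_le (Nat.lt_succ_iff.mp hm)), mul_zero]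

theorem sum_powerset_neg_one_pow_mul_add_sum_pow_card (J : Finset ι) :
    ∑ v ∈ J.powerset, (-1) ^ #v * (A + ∑ j ∈ v, h j) ^ #J =
      (-1) ^ #J * (#J)! * ∏ j ∈ J, h j := by
  induction J using Finset.induction_on with
  | empty => simp
  | insert a J ha ih =>
    rw [sum_powerset_insert_neg_one_pow_mul_add_sum_pow h A ha, card_insert_of_notMem ha,
      sum_range_succ, ih, sum_eq_zero fun i hi =>
        by rw [sum_powerset_neg_one_pow_mul_add_sum_pow_eq_zero h A (by simpa using hi), mul_zero],
      Nat.choose_succ_self_right, Nat.add_sub_cancel_left, prod_insert ha, Nat.factorial_succ]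
    push_cast
    ring

end FiniteDifference

theorem exists_int_abs_sum_neg_one_pow_mul_sub_le {ι : Type*} (s : Finset (Finset ι))
    (w : Finset ι → ℝ) {δ : ℝ} (hw : ∀ v ∈ s, |w v - round (w v)| ≤ δ) :
    ∃ P : ℤ, |∑ v ∈ s, (-1) ^ #v * w v - P| ≤ #s * δ := by
  refine ⟨∑ v ∈ s, (-1) ^ #v * round (w v), ?_⟩
  push_cast
  rw [← sum_sub_distrib]
  calc |∑ v ∈ s, ((-1) ^ #v * w v - (-1) ^ #v * round (w v))|
      ≤ ∑ v ∈ s, |(-1) ^ #v * w v - (-1) ^ #v * round (w v)| := abs_sum_le_sum_abs _ _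
    _ ≤ ∑ _v ∈ s, δ := sum_le_sum fun v hv => by
        rw [← mul_sub, abs_mul, abs_pow, abs_neg, abs_one, one_pow, one_mul]
        exact hw v hv
    _ = #s * δ := by rw [sum_const, nsmul_eq_mul]

theorem exists_int_abs_factorial_mul_prod_mul_sub_le {ι : Type*} [DecidableEq ι]
    {J : Finset ι} (hJ : J.Nonempty) (h : ι → ℝ) (A θ ψ : ℝ) {δ : ℝ}
    (hw : ∀ v ∈ J.powerset, |(A + ∑ j ∈ v, h j) ^ #J * θ - ψ -
      round ((A + ∑ j ∈ v, h j) ^ #J * θ - ψ)| ≤ δ) :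
    ∃ P : ℤ, |(-1) ^ #J * (#J)! * (∏ j ∈ J, h j) * θ - P| ≤ 2 ^ #J * δ := by
  obtain ⟨P, hP⟩ := exists_int_abs_sum_neg_one_pow_mul_sub_le _ _ hw
  have hsum : ∑ v ∈ J.powerset, (-1) ^ #v * ((A + ∑ j ∈ v, h j) ^ #J * θ - ψ) =
      (-1) ^ #J * (#J)! * (∏ j ∈ J, h j) * θ := by
    have hconst := sum_powerset_neg_one_pow_mul_add_sum_pow_eq_zero h A hJ.card_pos
    simp only [pow_zero, mul_one] at hconst
    simp only [mul_sub, sum_sub_distrib, ← mul_assoc, ← sum_mul,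
      sum_powerset_neg_one_pow_mul_add_sum_pow_card, hconst, zero_mul, sub_zero]
  rw [hsum, card_powerset, Nat.cast_pow, Nat.cast_two] at hP
  exact ⟨P, hP⟩

theorem sum_univ_eq_sum_powerset_compl_sum_powerset_union {α M : Type*} [Fintype α]
    [DecidableEq α] [AddCommMonoid M] (J : Finset α) (f : Finset α → M) :
    ∑ T, f T = ∑ U ∈ Jᶜ.powerset, ∑ v ∈ J.powerset, f (v ∪ U) := by
  rw [← sum_product_right' (f := fun v U => f (v ∪ U))]
  refine sum_nbij' (fun T => (T ∩ J, T \ J)) (fun p => p.1 ∪ p.2) ?_ (fun _ _ => mem_univ _)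
    ?_ ?_ ?_
  · intro T _
    simp only [mem_product, mem_powerset]
    exact ⟨inter_subset_right, fun i hi => mem_compl.mpr (mem_sdiff.mp hi).2⟩
  · intro T _
    rw [union_comm, sdiff_union_inter]
  · rintro ⟨v, U⟩ hp
    simp only [mem_product, mem_powerset, subset_compl_iff_disjoint_right] at hp
    refine Prod.ext ?_ ?_
    · rw [union_inter_distrib_right, inter_eq_left.mpr hp.1, disjoint_iff_inter_eq_empty.mp hp.2,
        union_empty]
    · rw [union_sdiff_distrib, sdiff_eq_empty_iff_subset.mpr hp.1, empty_union,
        hp.2.sdiff_eq_left]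
  · intro T _
    rw [union_comm, sdiff_union_inter]

theorem exists_sum_powerset_union_le {α : Type*} [Fintype α] [DecidableEq α] (J : Finset α)
    {f : Finset α → ℝ} {D : ℝ} (hf : ∑ T, f T ≤ 2 ^ #Jᶜ * D) :
    ∃ U ∈ Jᶜ.powerset, ∑ v ∈ J.powerset, f (v ∪ U) ≤ D := by
  refine exists_le_of_sum_le (powerset_nonempty _) ?_
  rwa [← sum_univ_eq_sum_powerset_compl_sum_powerset_union, sum_const, card_powerset,
    nsmul_eq_mul, Nat.cast_pow, Nat.cast_two]

theorem exists_finset_fin_card_eq_sum_val_eq {n k t : ℕ} (hk : k ≤ n) (ht : t ≤ k * (n - k)) :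
    ∃ J : Finset (Fin n), #J = k ∧ ∑ i ∈ J, (i : ℕ) = ∑ i ∈ range k, i + t := by
  induction n generalizing k t with
  | zero => exact ⟨∅, by simp_all⟩
  | succ n ih =>
    rcases k with _ | k
    · exact ⟨∅, by simp_all⟩
    by_cases htop : n - k ≤ t
    · obtain ⟨J, hJk, hJs⟩ := ih (k := k) (t := t - (n - k)) (by omega)
        (by rw [Nat.succ_sub_succ, Nat.succ_mul] at ht; omega)
      refine ⟨insert (Fin.last n) (J.map Fin.castSuccEmb), ?_, ?_⟩
      · rw [card_insert_of_notMem (by simp), card_map, hJk]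
      · rw [sum_insert (by simp), sum_map, sum_range_succ]
        simp only [Fin.coe_castSuccEmb, Fin.val_castSucc, Fin.val_last]
        omega
    · obtain ⟨J, hJk, hJs⟩ := ih (k := k + 1) (t := t) (by omega)
        (le_trans (by omega) (Nat.le_mul_of_pos_left _ k.succ_pos))
      exact ⟨J.map Fin.castSuccEmb, by rw [card_map, hJk], by rw [sum_map]; exact hJs⟩

theorem exists_int_abs_sub_le_div_pow {b : ℕ} (hb : 0 < b) {η : ℝ} (hη : (b + 1) * η < 1)
    (m : ℕ) {x : ℝ} (H : ∀ j ≤ m, ∃ P : ℤ, |b ^ j * x - P| ≤ η) :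
    ∃ P : ℤ, |x - P| ≤ η / b ^ m := by
  induction m generalizing x with
  | zero => simpa using H 0 le_rfl
  | succ m ih =>
    obtain ⟨P', hP'⟩ := ih (x := b * x) fun j hj => by
      simpa [pow_succ, mul_assoc] using H (j + 1) (by omega)
    obtain ⟨P, hP⟩ : ∃ P : ℤ, |x - P| ≤ η := by simpa using H 0 (Nat.zero_le _)
    have hb' : (0 : ℝ) < b := by exact_mod_cast hb
    have hbm : η / b ^ m ≤ η :=
      div_le_self ((abs_nonneg _).trans hP) (one_le_pow₀ (by exact_mod_cast hb))
    -- `b * P` and `P'` are integers at distance less than one from each other.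
    have hbP : (b * P : ℤ) = P' := by
      rw [← sub_eq_zero, ← Int.abs_lt_one_iff, ← Int.cast_lt (R := ℝ), Int.cast_one]
      calc ((|b * P - P'| : ℤ) : ℝ)
          = |(b * x - P') - b * (x - P)| := by push_cast; ring_nf
        _ ≤ |b * x - P'| + |b * (x - P)| := abs_sub _ _
        _ ≤ η / b ^ m + b * η := by
          rw [abs_mul, abs_of_pos hb']
          exact add_le_add hP' (mul_le_mul_of_nonneg_left hP hb'.le)
        _ < 1 := by linarith
    refine ⟨P, ?_⟩
    rw [← hbP, Int.cast_mul, Int.cast_natCast, ← mul_sub, abs_mul, abs_of_pos hb'] at hP'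
    rw [pow_succ, ← div_div, le_div_iff₀ hb', mul_comm]
    exact hP'

theorem volume_setOf_abs_nat_mul_sub_int_le {M : ℕ} (hM : 0 < M) {c : ℝ} (hc₀ : 0 ≤ c)
    (hc₁ : c < 1) :
    MeasureTheory.volume {θ : ℝ | θ ∈ Set.Ico 0 1 ∧ ∃ P : ℤ, |M * θ - P| ≤ c} ≤
      ENNReal.ofReal (4 * c) := by
  have hM' : (0 : ℝ) < M := by exact_mod_cast hM
  have hsub : {θ : ℝ | θ ∈ Set.Ico 0 1 ∧ ∃ P : ℤ, |M * θ - P| ≤ c} ⊆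
      ⋃ p ∈ range (M + 1), Set.Icc ((p - c) / M) ((p + c) / M) := by
    rintro θ ⟨⟨hθ₀, hθ₁⟩, P, hP⟩
    obtain ⟨hPl, hPu⟩ := abs_le.mp hP
    have hP₀ : (-1 : ℤ) < P := by
      have : (-1 : ℝ) < P := by nlinarith
      exact_mod_cast this
    have hP₁ : P < M + 1 := by
      have : (P : ℝ) < M + 1 := by nlinarith
      exact_mod_cast this
    lift P to ℕ using by omega
    simp only [Set.mem_iUnion, mem_range, Set.mem_Icc]
    push_cast at hPl hPu
    refine ⟨P, by omega, ?_, ?_⟩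
    · rw [div_le_iff₀ hM']; linarith
    · rw [le_div_iff₀ hM']; linarith
  calc MeasureTheory.volume _
      ≤ MeasureTheory.volume (⋃ p ∈ range (M + 1), Set.Icc ((p - c) / M) ((p + c) / M)) :=
        MeasureTheory.measure_mono hsub
    _ ≤ ∑ p ∈ range (M + 1), MeasureTheory.volume (Set.Icc ((p - c) / M) ((p + c) / M)) :=
        MeasureTheory.measure_biUnion_finset_le _ _
    _ = ENNReal.ofReal ((M + 1 : ℕ) * (2 * c / M)) := by
        rw [ENNReal.ofReal_mul (by positivity), ENNReal.ofReal_natCast]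
        rw [sum_congr rfl fun p _ => by
          rw [Real.volume_Icc, show (p + c) / M - (p - c) / M = 2 * c / M by ring],
          sum_const, card_range, nsmul_eq_mul]
    _ ≤ ENNReal.ofReal (4 * c) := by
        refine ENNReal.ofReal_le_ofReal ?_
        rw [mul_div_assoc', div_le_iff₀ hM']
        push_cast
        have : (1 : ℝ) ≤ M := by exact_mod_cast hM
        nlinarith

theorem exists_int_abs_natAbs_mul_sub_le {M : ℤ} {x c : ℝ} (h : ∃ P : ℤ, |M * x - P| ≤ c) :
    ∃ P : ℤ, |(M.natAbs : ℝ) * x - P| ≤ c := by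
  obtain ⟨P, hP⟩ := h
  rcases M.natAbs_eq with hM | hM
  · exact ⟨P, by rwa [hM, Int.cast_natCast] at hP⟩
  · refine ⟨-P, ?_⟩
    rw [hM, Int.cast_neg, Int.cast_natCast, ← abs_neg] at hP
    convert hP using 2
    push_cast
    ring

/-- The base-`b` digit number with digit `d₂` at the positions in `T` and `d₁` elsewhere. -/
def digitValue (b d₁ d₂ : ℕ) {n : ℕ} (T : Finset (Fin n)) : ℤ :=
  ∑ i : Fin n, (d₁ : ℤ) * b ^ (i : ℕ) + ∑ i ∈ T, ((d₂ : ℤ) - d₁) * b ^ (i : ℕ)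

theorem digitValue_union {b d₁ d₂ n : ℕ} {v U : Finset (Fin n)} (h : Disjoint v U) :
    digitValue b d₁ d₂ (v ∪ U) =
      digitValue b d₁ d₂ U + ∑ i ∈ v, ((d₂ : ℤ) - d₁) * b ^ (i : ℕ) := by
  rw [digitValue, digitValue, sum_union h]
  ring

theorem natCast_sum_digit_eq_digitValue (b d₁ d₂ : ℕ) {n : ℕ} (T : Finset (Fin n)) :
    ((∑ i : Fin n, (if decide (i ∈ T) then d₂ else d₁) * b ^ (i : ℕ) : ℕ) : ℤ) =
      digitValue b d₁ d₂ T := by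
  have hdigit : ∀ i : Fin n, ((if decide (i ∈ T) then d₂ else d₁ : ℕ) : ℤ) =
      d₁ + if i ∈ T then (d₂ : ℤ) - d₁ else 0 := fun i => by split_ifs <;> simp_all
  have hT := sum_ite_mem univ T fun i => ((d₂ : ℤ) - d₁) * b ^ (i : ℕ)
  rw [univ_inter] at hT
  rw [digitValue, ← hT, ← sum_add_distrib, Nat.cast_sum]
  refine sum_congr rfl fun i _ => ?_
  push_cast [hdigit]
  split_ifs <;> ring

theorem sum_fun_bool_eq_sum_finset {α M : Type*} [Fintype α] [DecidableEq α] [AddCommMonoid M]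
    (f : (α → Bool) → M) : ∑ x, f x = ∑ T : Finset α, f (fun i => decide (i ∈ T)) := by
  refine (Fintype.sum_bijective (fun (T : Finset α) i => decide (i ∈ T))
    ⟨fun T T' h => ?_, fun x => ⟨univ.filter (x ·), ?_⟩⟩ _ _ fun T => rfl).symm
  · ext i
    simpa using congrFun h i
  · funext i
    simp

theorem muHat_eq_sum_finset (b k d₁ d₂ n : ℕ) (θ : ℝ) :
    muHat b k d₁ d₂ n θ = (2 ^ n : ℂ)⁻¹ * ∑ T : Finset (Fin n),
      Complex.exp (2 * π * Complex.I * ((digitValue b d₁ d₂ T ^ k : ℤ) * θ : ℝ)) := by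
  rw [muHat, sum_fun_bool_eq_sum_finset]
  simp only [← natCast_sum_digit_eq_digitValue]
  push_cast
  rfl

/-- The `k`-th finite difference of `m ↦ m ^ k` over a cube with edges `(d₂ - d₁) b ^ j` is
`diffCoeff k d₁ d₂ * b ^ (∑ j)`. -/
def diffCoeff (k d₁ d₂ : ℕ) : ℤ :=
  (-1) ^ k * k ! * ((d₂ : ℤ) - d₁) ^ k

theorem diffCoeff_ne_zero {k d₁ d₂ : ℕ} (h : d₁ ≠ d₂) : diffCoeff k d₁ d₂ ≠ 0 := by
  simp [diffCoeff, Nat.factorial_ne_zero, sub_eq_zero, h.symm]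

theorem exists_int_abs_mul_pow_sub_le_of_norm_muHat_ge {b k d₁ d₂ n : ℕ} (hk : 0 < k)
    (hn : k ≤ n) {ε η θ : ℝ} (hη : 0 ≤ η) (hεη : 8 ^ k * ε ≤ 8 * η ^ 2)
    (hμ : 1 - ε ≤ ‖muHat b k d₁ d₂ n θ‖) {s : ℕ} (hs₀ : ∑ i ∈ range k, i ≤ s)
    (hs₁ : s ≤ ∑ i ∈ range k, i + k * (n - k)) :
    ∃ P : ℤ, |((diffCoeff k d₁ d₂ * b ^ s : ℤ) : ℝ) * θ - P| ≤ η := by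
  set δ := η / 2 ^ k
  have hδ : 2 ^ k * ε ≤ 8 * δ ^ 2 := by
    have h8 : (8 : ℝ) ^ k = 2 ^ k * (2 ^ k) ^ 2 := by
      rw [← pow_mul, ← pow_add, show k + k * 2 = 3 * k by ring, pow_mul]
      norm_num
    rw [h8] at hεη
    rw [div_pow, mul_div_assoc', le_div_iff₀ (by positivity)]
    nlinarith
  set u : Finset (Fin n) → ℝ := fun T => ((digitValue b d₁ d₂ T ^ k : ℤ) : ℝ) * θ
  obtain ⟨ψ, hψ⟩ := exists_sum_sq_sub_round_le_of_norm_sum_exp_ge u (ε := ε) (by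
    rw [muHat_eq_sum_finset, norm_mul, norm_inv, norm_pow, Complex.norm_ofNat] at hμ
    rw [Fintype.card_finset, Fintype.card_fin, Nat.cast_pow, Nat.cast_two]
    rw [le_inv_mul_iff₀ (by positivity)] at hμ
    exact (mul_comm _ _).trans_le hμ)
  obtain ⟨J, hJk, hJs⟩ :=
    exists_finset_fin_card_eq_sum_val_eq hn (t := s - ∑ i ∈ range k, i) (by omega)
  set f : Finset (Fin n) → ℝ := fun T => (u T - ψ - round (u T - ψ)) ^ 2
  obtain ⟨U, hU, hUJ⟩ := exists_sum_powerset_union_le J (f := f) (D := δ ^ 2) (by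
    rw [card_compl, Fintype.card_fin, hJk]
    have h2n : (2 : ℝ) ^ n = 2 ^ (n - k) * 2 ^ k := by rw [← pow_add, Nat.sub_add_cancel hn]
    rw [Fintype.card_finset, Fintype.card_fin, Nat.cast_pow, Nat.cast_two, h2n] at hψ
    nlinarith [pow_pos (two_pos : (0 : ℝ) < 2) (n - k)])
  have hcube : ∀ v ∈ J.powerset,
      |(digitValue b d₁ d₂ U + ∑ i ∈ v, ((d₂ : ℝ) - d₁) * b ^ (i : ℕ)) ^ #J * θ - ψ -
        round ((digitValue b d₁ d₂ U + ∑ i ∈ v, ((d₂ : ℝ) - d₁) * b ^ (i : ℕ)) ^ #J * θ - ψ)|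
        ≤ δ := by
    intro v hv
    have hvU : Disjoint v U := disjoint_compl_right.mono (mem_powerset.mp hv) (mem_powerset.mp hU)
    have hfv : f (v ∪ U) ≤ δ ^ 2 :=
      (single_le_sum (f := fun v => f (v ∪ U)) (fun _ _ => sq_nonneg _) hv).trans hUJ
    refine abs_le_of_sq_le_sq ?_ (by positivity)
    simpa [f, u, hJk, digitValue_union hvU] using hfv
  obtain ⟨P, hP⟩ :=
    exists_int_abs_factorial_mul_prod_mul_sub_le (card_pos.mp (hJk ▸ hk)) _ _ θ ψ hcube
  refine ⟨P, ?_⟩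
  rw [prod_mul_distrib, prod_const, prod_pow_eq_pow_sum, hJk, hJs, Nat.add_sub_cancel' hs₀] at hP
  convert hP using 3
  · push_cast [diffCoeff]
    ring
  · exact (mul_div_cancel₀ η (by positivity)).symm

theorem eight_pow_mul_le_eight_mul_inv_sq {k b : ℕ} (hk : 2 ≤ k) (hb : 3 ≤ b) :
    8 ^ k * ((1 / 4) * ((b : ℝ) ^ (3 * k ^ 2))⁻¹) ≤ 8 * (2 * (b : ℝ))⁻¹ ^ 2 := by
  have hpow : 8 ^ k * b ^ 2 ≤ b ^ (3 * k ^ 2) :=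
    calc 8 ^ k * b ^ 2 ≤ (b ^ 2) ^ k * b ^ 2 := by
          gcongr
          nlinarith
      _ = b ^ (2 * k + 2) := by ring
      _ ≤ b ^ (3 * k ^ 2) := Nat.pow_le_pow_right (by omega) (by nlinarith)
  have hpow' : (8 : ℝ) ^ k * b ^ 2 ≤ b ^ (3 * k ^ 2) := by exact_mod_cast hpow
  field_simp
  nlinarith [(by positivity : (0 : ℝ) ≤ b ^ (3 * k ^ 2))]

theorem exists_int_abs_mul_sub_le_of_norm_muHat_ge {b k d₁ d₂ n : ℕ} (hk : 2 ≤ k) (hb : 3 ≤ b)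
    (hn : k ≤ n) {θ : ℝ} (hμ : 1 - (1 / 4) * ((b : ℝ) ^ (3 * k ^ 2))⁻¹ ≤ ‖muHat b k d₁ d₂ n θ‖) :
    ∃ P : ℤ, |((diffCoeff k d₁ d₂ * b ^ ∑ i ∈ range k, i : ℤ) : ℝ) * θ - P| ≤
      (2 * (b : ℝ))⁻¹ / b ^ (k * (n - k)) := by
  have hb₃ : (3 : ℝ) ≤ b := by exact_mod_cast hb
  have hbη : (b + 1) * (2 * (b : ℝ))⁻¹ < 1 := by
    rw [← div_eq_mul_inv, div_lt_one (by positivity)]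
    linarith
  refine exists_int_abs_sub_le_div_pow (by omega) hbη _ fun j hj => ?_
  obtain ⟨P, hP⟩ := exists_int_abs_mul_pow_sub_le_of_norm_muHat_ge (s := ∑ i ∈ range k, i + j)
    (by omega) hn (by positivity) (eight_pow_mul_le_eight_mul_inv_sq hk hb) hμ le_self_add
    (by omega)
  exact ⟨P, by convert hP using 3; push_cast; ring⟩

theorem four_mul_inv_div_pow_le {b k n : ℕ} (hb : 1 ≤ b) (hn : k ≤ n) :
    4 * ((2 * (b : ℝ))⁻¹ / b ^ (k * (n - k))) ≤ 2 * (b : ℝ) ^ (k ^ 2) / ((b : ℝ) ^ n) ^ k := by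
  have hb₁ : (1 : ℝ) ≤ b := by exact_mod_cast hb
  have hNk : ((b : ℝ) ^ n) ^ k = b ^ (k ^ 2) * b ^ (k * (n - k)) := by
    obtain ⟨m, rfl⟩ := Nat.exists_eq_add_of_le hn
    rw [← pow_mul, ← pow_add, Nat.add_sub_cancel_left]
    ring_nf
  rw [hNk]
  field_simp
  nlinarith [(by positivity : (0 : ℝ) < b ^ (k * (n - k)))]

theorem measure_of_very_large_values_general (k b d₁ d₂ : ℕ) (hk : 2 ≤ k) (hb : 3 ≤ b)
    (hne : d₁ ≠ d₂)
    (n : ℕ) (hn : k ≤ n) (N : ℝ) (hN : N = (b : ℝ) ^ n) :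
    MeasureTheory.volume {θ : ℝ | θ ∈ Set.Ico (0 : ℝ) 1 ∧
        1 - (1 / 4) * ((b : ℝ) ^ (3 * k ^ 2))⁻¹ ≤ ‖muHat b k d₁ d₂ n θ‖} ≤
      ENNReal.ofReal (2 * (b : ℝ) ^ (k ^ 2) / N ^ k) := by
  set M := diffCoeff k d₁ d₂ * b ^ ∑ i ∈ range k, i
  set c : ℝ := (2 * (b : ℝ))⁻¹ / b ^ (k * (n - k))
  have hM : 0 < M.natAbs :=
    Int.natAbs_pos.mpr (mul_ne_zero (diffCoeff_ne_zero hne) (pow_ne_zero _ (by omega)))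
  have hc₁ : c < 1 := by
    have hb₁ : (1 : ℝ) ≤ b := by exact_mod_cast (by omega : 1 ≤ b)
    exact (div_le_self (by positivity) (one_le_pow₀ hb₁)).trans_lt
      (inv_lt_one_of_one_lt₀ (by norm_cast; omega))
  calc MeasureTheory.volume _
      ≤ MeasureTheory.volume {θ : ℝ | θ ∈ Set.Ico 0 1 ∧ ∃ P : ℤ, |M.natAbs * θ - P| ≤ c} :=
        MeasureTheory.measure_mono fun θ hθ => ⟨hθ.1, exists_int_abs_natAbs_mul_sub_le
          (exists_int_abs_mul_sub_le_of_norm_muHat_ge hk hb hn hθ.2)⟩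
    _ ≤ ENNReal.ofReal (4 * c) := volume_setOf_abs_nat_mul_sub_int_le hM (by positivity) hc₁
    _ ≤ ENNReal.ofReal (2 * (b : ℝ) ^ (k ^ 2) / N ^ k) :=
        ENNReal.ofReal_le_ofReal (hN ▸ four_mul_inv_div_pow_le (by omega) hn)

/-- The measure of the set of `θ ∈ ℝ/ℤ` (identified with `[0,1)`) with
`|μ̂_n(θ)| ≥ 1 - (1/4) b^{-3k²}` is at most `2 b^{k²} N^{-k}`. -/
theorem measure_of_very_large_values (k b d₁ d₂ : ℕ) (hk : 2 ≤ k) (hb : 3 ≤ b)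
    (hd₁ : d₁ < b) (hd₂ : d₂ < b) (hne : d₁ ≠ d₂) (hcop : Nat.Coprime d₁ d₂)
    (n : ℕ) (hn : k ≤ n) (N : ℝ) (hN : N = (b : ℝ) ^ n) :
    MeasureTheory.volume {θ : ℝ | θ ∈ Set.Ico (0 : ℝ) 1 ∧
        1 - (1 / 4) * ((b : ℝ) ^ (3 * k ^ 2))⁻¹ ≤ ‖muHat b k d₁ d₂ n θ‖} ≤
      ENNReal.ofReal (2 * (b : ℝ) ^ (k ^ 2) / N ^ k) :=
  measure_of_very_large_values_general k b d₁ d₂ hk hb hne n hn N hN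
end

section
/- Let b ≥ 3 be an integer and r ∈ ℤ_{≥0}. Suppose that A ⊂ ℤ is a finite set, all of whose elements have at most r nonzero digits in their centred base-b expansion. Then E(A) ≤ (2b)^{4r} |A|². -/
open scoped BigOperators

/-- `x` has at most `r` nonzero digits in its (unique) centred base-`b` expansion,
i.e. an expansion `x = ∑ cᵢ bⁱ` with integer digits `cᵢ ∈ (-b/2, b/2]`. -/
def AtMostCentredDigits (b r : ℕ) (x : ℤ) : Prop :=
  ∃ (m : ℕ) (c : ℕ → ℤ),
    (∀ i, -(b : ℤ) < 2 * c i ∧ 2 * c i ≤ (b : ℤ)) ∧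
    x = ∑ i ∈ Finset.range m, c i * (b : ℤ) ^ i ∧
    ((Finset.range m).filter (fun i => c i ≠ 0)).card ≤ r

/-- The additive energy of a finite set of integers: the number of quadruples
`(a₁,a₂,a₃,a₄) ∈ A⁴` with `a₁ + a₂ = a₃ + a₄`. -/
def additiveEnergy (A : Finset ℤ) : ℕ :=
  (((A ×ˢ A) ×ˢ (A ×ˢ A)).filter (fun p => p.1.1 + p.1.2 = p.2.1 + p.2.2)).card

/-!
Write `E(A)` as the number of pairs `(p, q)` in `(A × A)²` with `p.1 + p.2 = q.1 + q.2`. From the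
digits of `p.1` and `p.2` remove a vanishing subfamily of maximal size: what is left, the skeleton
of `p`, is a zero-sum-free family of at most `2r` centred digits with value `p.1 + p.2`. A given
value `s` has at most `(4b)^(2r)` such families: if `b^n` exactly divides `s`, some digit sits at
position `n - 1` or `n` (at most `4b` choices of index and value), and removing it leaves a shorter
family. By Cauchy–Schwarz over the skeletons of the pairs with sum `s`, `E(A)` is at most
`(4b)^(2r)` times the number of pairs `(p, q)` with equal skeletons; such a pair is determined by
`p.1`, `q.2` and the removed digits of `p.1` and of `q.2`, so there are at most `(2^r |A|)²` of them.
-/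

open Finset

section Families

variable {κ : Type*} (e : κ → ℤ)

def IsZeroSumFree (f : κ →₀ ℤ) : Prop :=
  ∀ s ⊆ f.support, ∑ i ∈ s, f i * e i = 0 → s = ∅

theorem sum_support_erase [DecidableEq κ] (f : κ →₀ ℤ) (i : κ) :
    ∑ j ∈ (f.erase i).support, f.erase i j * e j = ∑ j ∈ f.support, f j * e j - f i * e i := by
  by_cases hi : i ∈ f.support
  · rw [Finsupp.support_erase, ← sum_erase_eq_sub hi]
    exact sum_congr rfl fun j hj => by rw [Finsupp.erase_ne (ne_of_mem_erase hj)]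
  · rw [Finsupp.erase_of_notMem_support hi, Finsupp.notMem_support_iff.1 hi]
    simp

theorem sum_support_filter_notMem [DecidableEq κ] (f : κ →₀ ℤ) {s : Finset κ}
    (hs : s ⊆ f.support) :
    ∑ i ∈ (f.filter (· ∉ s)).support, f.filter (· ∉ s) i * e i =
      ∑ i ∈ f.support, f i * e i - ∑ i ∈ s, f i * e i := by
  rw [eq_sub_iff_add_eq, ← sum_filter_add_sum_filter_not f.support (· ∉ s), Finsupp.support_filter]
  congr 1
  · exact sum_congr rfl fun i hi => by rw [Finsupp.filter_apply, if_pos (mem_filter.1 hi).2]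
  · simp only [not_not]
    rw [filter_mem_eq_inter, inter_eq_right.2 hs]

variable {e}

theorem IsZeroSumFree.eq_zero {f : κ →₀ ℤ} (hf : IsZeroSumFree e f)
    (h : ∑ i ∈ f.support, f i * e i = 0) : f = 0 :=
  Finsupp.support_eq_empty.1 (hf _ subset_rfl h)

theorem IsZeroSumFree.erase [DecidableEq κ] {f : κ →₀ ℤ} (hf : IsZeroSumFree e f) (i : κ) :
    IsZeroSumFree e (f.erase i) := by
  intro s hs h
  rw [Finsupp.support_erase] at hs
  refine hf s (hs.trans (erase_subset _ _)) ?_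
  rw [← h]
  refine sum_congr rfl fun j hj => ?_
  rw [Finsupp.erase_ne (ne_of_mem_erase (hs hj))]

/-- A vanishing subfamily of maximal size will do. -/
theorem exists_sum_eq_zero_isZeroSumFree_filter [DecidableEq κ] (f : κ →₀ ℤ) :
    ∃ s ⊆ f.support, ∑ i ∈ s, f i * e i = 0 ∧ IsZeroSumFree e (f.filter (· ∉ s)) := by
  obtain ⟨s, hs, hmax⟩ := exists_max_image
    (f.support.powerset.filter fun s => ∑ i ∈ s, f i * e i = 0) card ⟨∅, by simp⟩
  rw [mem_filter, mem_powerset] at hs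
  refine ⟨s, hs.1, hs.2, fun t ht h => ?_⟩
  rw [Finsupp.support_filter, subset_iff] at ht
  simp only [mem_filter] at ht
  have hdisj : Disjoint s t := disjoint_right.2 fun i hi => (ht hi).2
  have hsum : ∑ i ∈ t, f i * e i = 0 := by
    rw [← h]
    exact sum_congr rfl fun i hi => by rw [Finsupp.filter_apply, if_pos (ht hi).2]
  have hle := hmax (s ∪ t) (by
    rw [mem_filter, mem_powerset, sum_union hdisj, hs.2, hsum, add_zero]
    exact ⟨union_subset hs.1 fun i hi => (ht hi).1, rfl⟩)
  rw [card_union_of_disjoint hdisj] at hle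
  exact card_eq_zero.1 (by omega)

end Families

section Centred

variable {κ : Type*} {b : ℕ}

variable (b) in
def IsCentred (f : κ →₀ ℤ) : Prop :=
  ∀ i, -(b : ℤ) < 2 * f i ∧ 2 * f i ≤ b

theorem IsCentred.abs_lt {f : κ →₀ ℤ} (hf : IsCentred b f) (i : κ) : |f i| < b :=
  _root_.abs_lt.2 (by have := hf i; omega)

theorem IsCentred.filter {f : κ →₀ ℤ} (hf : IsCentred b f) (p : κ → Prop) [DecidablePred p] :
    IsCentred b (f.filter p) := fun i => by
  have := hf i
  rw [Finsupp.filter_apply]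
  split_ifs <;> omega

theorem IsCentred.erase [DecidableEq κ] {f : κ →₀ ℤ} (hf : IsCentred b f) (j : κ) :
    IsCentred b (f.erase j) := fun i => by
  have := hf i
  rw [Finsupp.erase_apply]
  split_ifs <;> omega

theorem IsCentred.sumElim {κ' : Type*} {f : κ →₀ ℤ} {g : κ' →₀ ℤ} (hf : IsCentred b f)
    (hg : IsCentred b g) : IsCentred b (Finsupp.sumElim f g) := by
  rintro (i | i)
  exacts [hf i, hg i]

end Centred

section PairExpansions

variable {b : ℕ}

theorem abs_sum_range_mul_pow_lt {c : ℕ → ℤ} (hc : ∀ j, |c j| < b) (m : ℕ) :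
    |∑ j ∈ range m, c j * (b : ℤ) ^ j| < (b : ℤ) ^ m := by
  induction m with
  | zero => simp
  | succ m ih =>
    have hpow : (0 : ℤ) ≤ (b : ℤ) ^ m := by positivity
    have hcm : |c m| + 1 ≤ b := hc m
    calc |∑ j ∈ range (m + 1), c j * (b : ℤ) ^ j|
        ≤ |∑ j ∈ range m, c j * (b : ℤ) ^ j| + |c m| * (b : ℤ) ^ m := by
          rw [sum_range_succ]
          refine (abs_add_le _ _).trans_eq ?_
          rw [abs_mul, abs_of_nonneg hpow]
      _ < (b : ℤ) ^ (m + 1) := by rw [pow_succ]; nlinarith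

variable (b) in
/-- A pair of base-`b` expansions is one family of digits indexed by `ℕ ⊕ ℕ`;
`i.elim id id` is the position of the digit `i`. -/
def pairPlaceValue (i : ℕ ⊕ ℕ) : ℤ := (b : ℤ) ^ i.elim id id

theorem sum_support_sumElim (g h : ℕ →₀ ℤ) :
    ∑ i ∈ (Finsupp.sumElim g h).support, Finsupp.sumElim g h i * pairPlaceValue b i =
      ∑ j ∈ g.support, g j * (b : ℤ) ^ j + ∑ j ∈ h.support, h j * (b : ℤ) ^ j := by
  simp [pairPlaceValue]

theorem abs_sum_low_digits_lt {f : ℕ ⊕ ℕ →₀ ℤ} (hf : ∀ i, |f i| < b) (m : ℕ) :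
    |∑ i ∈ f.support with i.elim id id < m, f i * pairPlaceValue b i| < 2 * (b : ℤ) ^ m := by
  have hsub : {i ∈ f.support | i.elim id id < m} ⊆ (range m).disjSum (range m) := by
    intro i hi
    rcases i with j | j <;> simpa using (mem_filter.1 hi).2
  rw [sum_subset hsub fun i _ hi => by rcases i with j | j <;> simp_all, sum_disjSum, two_mul]
  refine (abs_add_le _ _).trans_lt (add_lt_add ?_ ?_) <;>
    exact abs_sum_range_mul_pow_lt (fun j => hf _) m

/-- Otherwise the digits below position `n - 1`, summing to less than `b ^ n` in absolute value,
would sum to `0`, and the value would be divisible by `b ^ (n + 1)`. -/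
theorem exists_mem_support_position_mem (hb : 2 ≤ b) {f : ℕ ⊕ ℕ →₀ ℤ} (hf : ∀ i, |f i| < b)
    {n : ℕ} (hn : (b : ℤ) ^ n ∣ ∑ i ∈ f.support, f i * pairPlaceValue b i)
    (hn' : ¬ (b : ℤ) ^ (n + 1) ∣ ∑ i ∈ f.support, f i * pairPlaceValue b i) :
    ∃ i ∈ f.support, i.elim id id ∈ ({n - 1, n} : Finset ℕ) := by
  by_contra! hpos
  simp only [mem_insert, mem_singleton, not_or] at hpos
  rw [← sum_filter_add_sum_filter_not _ (fun i => i.elim id id < n)] at hn hn'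
  have hhigh : (b : ℤ) ^ (n + 1) ∣
      ∑ i ∈ f.support with ¬ i.elim id id < n, f i * pairPlaceValue b i := by
    refine dvd_sum fun i hi => Dvd.dvd.mul_left (pow_dvd_pow _ ?_) _
    have := (hpos i (mem_filter.1 hi).1).2
    have := (mem_filter.1 hi).2
    omega
  have hlow : ∑ i ∈ f.support with i.elim id id < n, f i * pairPlaceValue b i = 0 := by
    rcases n with _ | n
    · simp
    · refine Int.eq_zero_of_abs_lt_dvd
        ((dvd_add_left ((pow_dvd_pow _ (n + 1).le_succ).trans hhigh)).1 hn) ?_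
      rw [filter_congr fun i hi => show i.elim id id < n + 1 ↔ i.elim id id < n by
        have := (hpos i hi).1; omega]
      calc _ < 2 * (b : ℤ) ^ n := abs_sum_low_digits_lt hf n
        _ ≤ (b : ℤ) ^ (n + 1) := by rw [pow_succ']; gcongr; exact_mod_cast hb
  rw [hlow, zero_add] at hn'
  exact hn' hhigh

theorem injOn_erase_of_apply_eq {κ M : Type*} [DecidableEq κ] [AddZeroClass M] (i : κ) (c : M) :
    Set.InjOn (Finsupp.erase i) {f : κ →₀ M | f i = c} := fun f hf g hg hfg => by
  rw [← Finsupp.single_add_erase i f, ← Finsupp.single_add_erase i g, show f i = c from hf,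
    show g i = c from hg, hfg]

variable (b) in
/-- `Ioc (-((b + 1) / 2)) (b / 2)` is the set of centred digits. -/
noncomputable def digitCandidates (s : ℤ) : Finset ((ℕ ⊕ ℕ) × ℤ) :=
  let n := multiplicity (b : ℤ) s
  ({n - 1, n} : Finset ℕ).disjSum {n - 1, n} ×ˢ Ioc (-(((b : ℤ) + 1) / 2)) ((b : ℤ) / 2)

theorem card_digitCandidates_le (s : ℤ) : #(digitCandidates b s) ≤ 4 * b := by
  have : #({multiplicity (b : ℤ) s - 1, multiplicity (b : ℤ) s} : Finset ℕ) ≤ 2 := card_le_two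
  rw [digitCandidates, card_product, card_disjSum, Int.card_Ioc]
  have : ((b : ℤ) / 2 - -(((b : ℤ) + 1) / 2)).toNat = b := by omega
  rw [this]
  gcongr
  omega

theorem exists_mem_support_mem_digitCandidates (hb : 2 ≤ b) {s : ℤ} (hs : s ≠ 0)
    {f : ℕ ⊕ ℕ →₀ ℤ} (hf : IsCentred b f) (hval : ∑ i ∈ f.support, f i * pairPlaceValue b i = s) :
    ∃ i ∈ f.support, (i, f i) ∈ digitCandidates b s := by
  subst hval
  obtain ⟨hn, hn'⟩ :=
    (Int.finiteMultiplicity_iff (a := b).2 ⟨by simp; omega, hs⟩).multiplicity_eq_iff.1 rfl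
  obtain ⟨i, hi, hipos⟩ := exists_mem_support_position_mem hb hf.abs_lt hn hn'
  refine ⟨i, hi, mem_product.2 ⟨?_, ?_⟩⟩
  · rcases i with j | j <;> simpa using hipos
  · have := hf i
    rw [mem_Ioc]
    omega

theorem card_le_pow_of_isZeroSumFree (hb : 2 ≤ b) (k : ℕ) (s : ℤ) (T : Finset (ℕ ⊕ ℕ →₀ ℤ))
    (hcent : ∀ f ∈ T, IsCentred b f) (hfree : ∀ f ∈ T, IsZeroSumFree (pairPlaceValue b) f)
    (hcard : ∀ f ∈ T, #f.support ≤ k)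
    (hval : ∀ f ∈ T, ∑ i ∈ f.support, f i * pairPlaceValue b i = s) :
    #T ≤ (4 * b) ^ k := by
  induction k generalizing s T with
  | zero =>
    have hT : T ⊆ {0} := fun f hf => mem_singleton.2 <|
      Finsupp.support_eq_empty.1 (card_eq_zero.1 (Nat.le_zero.1 (hcard f hf)))
    simpa using card_le_card hT
  | succ k ih =>
    rcases eq_or_ne s 0 with rfl | hs
    · have hT : T ⊆ {0} := fun f hf => mem_singleton.2 <| (hfree f hf).eq_zero (hval f hf)
      exact (card_le_card hT).trans ((card_singleton _).trans_le (Nat.one_le_pow _ _ (by omega)))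
    have hcover : T ⊆ (digitCandidates b s).biUnion
        fun ic => {f ∈ T | ic.1 ∈ f.support ∧ f ic.1 = ic.2} := fun f hf => by
      obtain ⟨i, hi, hic⟩ := exists_mem_support_mem_digitCandidates hb hs (hcent f hf) (hval f hf)
      exact mem_biUnion.2 ⟨(i, f i), hic, mem_filter.2 ⟨hf, hi, rfl⟩⟩
    have hpiece : ∀ ic : (ℕ ⊕ ℕ) × ℤ,
        #{f ∈ T | ic.1 ∈ f.support ∧ f ic.1 = ic.2} ≤ (4 * b) ^ k := by
      rintro ⟨i, c⟩
      rw [← card_image_of_injOn <|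
        (injOn_erase_of_apply_eq i c).mono fun f hf => (mem_filter.1 hf).2.2]
      refine ih (s - c * pairPlaceValue b i) _ ?_ ?_ ?_ ?_ <;>
        simp only [mem_image, mem_filter] <;> rintro _ ⟨f, ⟨hf, hi, rfl⟩, rfl⟩
      · exact (hcent f hf).erase i
      · exact (hfree f hf).erase i
      · rw [Finsupp.support_erase, card_erase_of_mem hi]
        exact Nat.sub_le_of_le_add (hcard f hf)
      · rw [sum_support_erase, hval f hf]
    calc #T ≤ ∑ ic ∈ digitCandidates b s, #{f ∈ T | ic.1 ∈ f.support ∧ f ic.1 = ic.2} :=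
          (card_le_card hcover).trans card_biUnion_le
      _ ≤ #(digitCandidates b s) * (4 * b) ^ k :=
          (sum_le_card_nsmul _ _ _ fun ic _ => hpiece ic).trans_eq (smul_eq_mul _ _)
      _ ≤ (4 * b) ^ (k + 1) := by
        rw [pow_succ']
        gcongr
        exact card_digitCandidates_le s

theorem exists_pair_vanishing_isZeroSumFree (g h : ℕ →₀ ℤ) :
    ∃ P ⊆ g.support, ∃ Q ⊆ h.support,
      ∑ j ∈ P, g j * (b : ℤ) ^ j + ∑ j ∈ Q, h j * (b : ℤ) ^ j = 0 ∧
      IsZeroSumFree (pairPlaceValue b)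
        (Finsupp.sumElim (g.filter (· ∉ P)) (h.filter (· ∉ Q))) := by
  obtain ⟨S, hS, hsum, hfree⟩ :=
    exists_sum_eq_zero_isZeroSumFree_filter (e := pairPlaceValue b) (Finsupp.sumElim g h)
  rw [Finsupp.sumElim_support, subset_disjSum] at hS
  refine ⟨S.toLeft, hS.1, S.toRight, hS.2, ?_, ?_⟩
  · simpa [sum_sum_eq_sum_toLeft_add_sum_toRight, pairPlaceValue] using hsum
  · convert hfree using 1
    ext (j | j) <;> simp [Finsupp.filter_apply]

end PairExpansions

section Fibres

variable {α β γ : Type*} [DecidableEq β] [DecidableEq γ] (X : Finset α) (f : α → β)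

theorem card_filter_eq_and_eq_sum (P : α × α → Prop) [DecidablePred P] :
    #{pq ∈ X ×ˢ X | f pq.1 = f pq.2 ∧ P pq} =
      ∑ s ∈ X.image f, #{pq ∈ {p ∈ X | f p = s} ×ˢ {p ∈ X | f p = s} | P pq} := by
  rw [card_eq_sum_card_fiberwise (f := fun pq => f pq.1) fun pq hpq =>
    mem_image_of_mem f (mem_product.1 (mem_filter.1 hpq).1).1]
  refine sum_congr rfl fun s _ => congrArg card ?_
  ext ⟨p, q⟩
  simp only [mem_filter, mem_product]
  constructor
  · rintro ⟨⟨⟨hp, hq⟩, hpq, hP⟩, rfl⟩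
    exact ⟨⟨⟨hp, rfl⟩, hq, hpq.symm⟩, hP⟩
  · rintro ⟨⟨⟨hp, rfl⟩, hq, hqs⟩, hP⟩
    exact ⟨⟨⟨hp, hq⟩, hqs.symm, hP⟩, rfl⟩

theorem card_filter_eq_eq_sum_sq :
    #{pq ∈ X ×ˢ X | f pq.1 = f pq.2} = ∑ s ∈ X.image f, #{p ∈ X | f p = s} ^ 2 := by
  simpa [sq] using card_filter_eq_and_eq_sum X f (fun _ => True)

theorem sq_card_le_card_image_mul_card_filter_eq :
    #X ^ 2 ≤ #(X.image f) * #{pq ∈ X ×ˢ X | f pq.1 = f pq.2} := by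
  rw [card_filter_eq_eq_sum_sq, card_eq_sum_card_image f X]
  exact sq_sum_le_card_mul_sum_sq

theorem card_filter_eq_le_mul_card_filter_eq_and_eq (g : α → γ) {N : ℕ}
    (hN : ∀ s, #({p ∈ X | f p = s}.image g) ≤ N) :
    #{pq ∈ X ×ˢ X | f pq.1 = f pq.2} ≤
      N * #{pq ∈ X ×ˢ X | f pq.1 = f pq.2 ∧ g pq.1 = g pq.2} := by
  rw [card_filter_eq_eq_sum_sq, card_filter_eq_and_eq_sum, mul_sum]
  refine sum_le_sum fun s _ => (sq_card_le_card_image_mul_card_filter_eq _ g).trans ?_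
  gcongr
  exact hN s

end Fibres

/-- A pair `(p, q)` counted here is determined by `p.1`, `t p`, `q.2` and `t' q`. -/
theorem card_filter_sub_eq_sub_le (A : Finset ℤ) (sub : ℤ → Finset ℤ) {K : ℕ}
    (hsub : ∀ x ∈ A, #(sub x) ≤ K) (t t' : ℤ × ℤ → ℤ)
    (ht : ∀ p ∈ A ×ˢ A, t p ∈ sub p.1) (ht' : ∀ p ∈ A ×ˢ A, t' p ∈ sub p.2)
    (htt' : ∀ p ∈ A ×ˢ A, t p + t' p = 0) :
    #{pq ∈ (A ×ˢ A) ×ˢ (A ×ˢ A) |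
        pq.1.1 - t pq.1 = pq.2.1 - t pq.2 ∧ pq.1.2 - t' pq.1 = pq.2.2 - t' pq.2} ≤
      (K * #A) ^ 2 := by
  set W := A.biUnion fun x => (sub x).image (x, ·)
  have hW : #W ≤ K * #A := by
    refine card_biUnion_le.trans ((sum_le_card_nsmul _ _ K fun x hx => ?_).trans_eq ?_)
    · exact card_image_le.trans (hsub x hx)
    · rw [smul_eq_mul, mul_comm]
  have hmem : ∀ p ∈ A ×ˢ A, (p.1, t p) ∈ W ∧ (p.2, t' p) ∈ W := fun p hp =>
    ⟨mem_biUnion.2 ⟨p.1, (mem_product.1 hp).1, mem_image_of_mem _ (ht p hp)⟩,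
      mem_biUnion.2 ⟨p.2, (mem_product.1 hp).2, mem_image_of_mem _ (ht' p hp)⟩⟩
  calc _ ≤ #(W ×ˢ W) := card_le_card_of_injOn (fun pq => ((pq.1.1, t pq.1), (pq.2.2, t' pq.2)))
          (fun pq hpq => by
            obtain ⟨⟨hp, hq⟩, -⟩ := mem_filter.1 hpq |>.imp_left mem_product.1
            exact mem_product.2 ⟨(hmem _ hp).1, (hmem _ hq).2⟩)
          (fun ⟨p, q⟩ hpq ⟨p', q'⟩ hpq' heq => by
            obtain ⟨⟨hp, hq⟩, h1, h2⟩ := mem_filter.1 hpq |>.imp_left mem_product.1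
            obtain ⟨⟨hp', hq'⟩, h1', h2'⟩ := mem_filter.1 hpq' |>.imp_left mem_product.1
            simp only [Prod.mk.injEq] at heq h1 h2 h1' h2'
            have := htt' p hp; have := htt' q hq; have := htt' p' hp'; have := htt' q' hq'
            ext <;> simp only <;> omega)
    _ ≤ (K * #A) ^ 2 := by rw [card_product, ← sq]; gcongr

theorem AtMostCentredDigits.exists_finsupp {b r : ℕ} {x : ℤ} (hx : AtMostCentredDigits b r x) :
    ∃ g : ℕ →₀ ℤ, IsCentred b g ∧ ∑ j ∈ g.support, g j * (b : ℤ) ^ j = x ∧ #g.support ≤ r := by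
  obtain ⟨m, c, hc, rfl, hr⟩ := hx
  let g := Finsupp.onFinset ((range m).filter (c · ≠ 0)) (fun j => if j < m then c j else 0)
    fun j hj => by split_ifs at hj with h <;> simp_all
  have hg : g.support ⊆ (range m).filter (c · ≠ 0) := Finsupp.support_onFinset_subset
  refine ⟨g, fun j => ?_, ?_, (card_le_card hg).trans hr⟩
  · have := hc j
    simp only [g, Finsupp.onFinset_apply]
    split_ifs <;> omega
  · rw [sum_subset (hg.trans (filter_subset _ _)) fun j _ hj => by
      rw [Finsupp.notMem_support_iff.1 hj, zero_mul]]
    exact sum_congr rfl fun j hj => by simp [g, mem_range.1 hj]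

theorem additiveEnergy_le_of_transfer {γ : Type*} [DecidableEq γ] (A : Finset ℤ)
    (sub : ℤ → Finset ℤ) {K N : ℕ} (hsub : ∀ x ∈ A, #(sub x) ≤ K) (t t' : ℤ × ℤ → ℤ)
    (ht : ∀ p ∈ A ×ˢ A, t p ∈ sub p.1) (ht' : ∀ p ∈ A ×ˢ A, t' p ∈ sub p.2)
    (htt' : ∀ p ∈ A ×ˢ A, t p + t' p = 0) (skel : ℤ × ℤ → γ)
    (hskel : ∀ p ∈ A ×ˢ A, ∀ q ∈ A ×ˢ A, skel p = skel q →
      p.1 - t p = q.1 - t q ∧ p.2 - t' p = q.2 - t' q)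
    (hN : ∀ s, #({p ∈ A ×ˢ A | p.1 + p.2 = s}.image skel) ≤ N) :
    additiveEnergy A ≤ N * (K * #A) ^ 2 := by
  refine (card_filter_eq_le_mul_card_filter_eq_and_eq (A ×ˢ A) (fun p => p.1 + p.2) skel hN).trans
    (Nat.mul_le_mul_left _ ((card_le_card fun pq hpq => ?_).trans
      (card_filter_sub_eq_sub_le A sub hsub t t' ht ht' htt')))
  obtain ⟨hpq, -, hskel_eq⟩ := mem_filter.1 hpq
  exact mem_filter.2 ⟨hpq, hskel _ (mem_product.1 hpq).1 _ (mem_product.1 hpq).2 hskel_eq⟩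

theorem additiveEnergy_le_of_expansions {b r : ℕ} (hb : 2 ≤ b) (A : Finset ℤ)
    (d : ℤ → ℕ →₀ ℤ) (hcent : ∀ a ∈ A, IsCentred b (d a))
    (hval : ∀ a ∈ A, ∑ j ∈ (d a).support, d a j * (b : ℤ) ^ j = a)
    (hcard : ∀ a ∈ A, #(d a).support ≤ r) :
    additiveEnergy A ≤ (4 * b) ^ (2 * r) * (2 ^ r * #A) ^ 2 := by
  choose P hP Q hQ hPQ hfree using
    fun p : ℤ × ℤ => exists_pair_vanishing_isZeroSumFree (b := b) (d p.1) (d p.2)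
  set left := fun p : ℤ × ℤ => (d p.1).filter (· ∉ P p)
  set right := fun p : ℤ × ℤ => (d p.2).filter (· ∉ Q p)
  set t := fun p : ℤ × ℤ => ∑ j ∈ P p, d p.1 j * (b : ℤ) ^ j
  set t' := fun p : ℤ × ℤ => ∑ j ∈ Q p, d p.2 j * (b : ℤ) ^ j
  have hleft : ∀ p ∈ A ×ˢ A, ∑ j ∈ (left p).support, left p j * (b : ℤ) ^ j = p.1 - t p :=
    fun p hp => by rw [sum_support_filter_notMem _ _ (hP p), hval _ (mem_product.1 hp).1]
  have hright : ∀ p ∈ A ×ˢ A, ∑ j ∈ (right p).support, right p j * (b : ℤ) ^ j = p.2 - t' p :=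
    fun p hp => by rw [sum_support_filter_notMem _ _ (hQ p), hval _ (mem_product.1 hp).2]
  refine additiveEnergy_le_of_transfer A
    (fun x => (d x).support.powerset.image fun S => ∑ j ∈ S, d x j * (b : ℤ) ^ j)
    (fun x hx => card_image_le.trans
      ((card_powerset _).trans_le (Nat.pow_le_pow_right two_pos (hcard x hx))))
    t t' (fun p _ => mem_image_of_mem _ (mem_powerset.2 (hP p)))
    (fun p _ => mem_image_of_mem _ (mem_powerset.2 (hQ p))) (fun p _ => hPQ p)
    (fun p => Finsupp.sumElim (left p) (right p)) (fun p hp q hq hskel => ?_) fun s => ?_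
  · have h1 : left p = left q := Finsupp.ext fun j => DFunLike.congr_fun hskel (Sum.inl j)
    have h2 : right p = right q := Finsupp.ext fun j => DFunLike.congr_fun hskel (Sum.inr j)
    exact ⟨by rw [← hleft p hp, ← hleft q hq, h1], by rw [← hright p hp, ← hright q hq, h2]⟩
  refine card_le_pow_of_isZeroSumFree hb (2 * r) s _ ?_ ?_ ?_ ?_ <;>
    simp only [mem_image, mem_filter] <;> rintro _ ⟨p, ⟨hp, rfl⟩, rfl⟩ <;>
    obtain ⟨hp1, hp2⟩ := mem_product.1 hp
  · exact ((hcent _ hp1).filter _).sumElim ((hcent _ hp2).filter _)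
  · exact hfree p
  · rw [Finsupp.sumElim_support, card_disjSum, Finsupp.support_filter, Finsupp.support_filter,
      two_mul]
    exact add_le_add ((card_filter_le _ _).trans (hcard _ hp1))
      ((card_filter_le _ _).trans (hcard _ hp2))
  · rw [sum_support_sumElim, hleft p hp, hright p hp]
    linarith [hPQ p]

theorem energy_of_digital_hamming_ball (b : ℕ) (hb : 3 ≤ b) (r : ℕ)
    (A : Finset ℤ) (hA : ∀ a ∈ A, AtMostCentredDigits b r a) :
    additiveEnergy A ≤ (2 * b) ^ (4 * r) * A.card ^ 2 := by
  choose! d hcent hval hcard using fun a ha => (hA a ha).exists_finsupp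
  calc additiveEnergy A ≤ (4 * b) ^ (2 * r) * (2 ^ r * #A) ^ 2 :=
        additiveEnergy_le_of_expansions (by omega) A d hcent hval hcard
    _ = ((4 * b) ^ 2 * 2 ^ 2) ^ r * #A ^ 2 := by
        rw [mul_pow _ #A, ← pow_mul, mul_comm r 2, pow_mul, pow_mul, ← mul_assoc, ← mul_pow]
    _ ≤ ((2 * b) ^ 4) ^ r * #A ^ 2 := by gcongr; ring_nf; nlinarith [Nat.mul_le_mul hb hb]
    _ = (2 * b) ^ (4 * r) * A.card ^ 2 := by rw [pow_mul]
end

section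
/- Let b ≥ 3 be an integer and let r₁, r₂, r₃, r₄ ∈ ℤ_{≥0}. For each i ∈ {1,2,3,4}, suppose that A_i ⊂ ℤ is a finite set all of whose elements have at most r_i nonzero digits in their centred base-b expansion. Let e ∈ ℤ with |e| < b. Then the number of quadruples (a₁, a₂, a₃, a₄) ∈ A₁ × A₂ × A₃ × A₄ with a₁ + a₂ = a₃ + a₄ + e is at most (2b)^{r₁+r₂+r₃+r₄} |A₁|^{1/2} |A₂|^{1/2} |A₃|^{1/2} |A₄|^{1/2}. -/
open scoped BigOperators

open Finset

/-- The centred residue of `x` mod `b`: the unique `c ≡ x (mod b)` with `-b < 2c ≤ b`. -/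
def ctr (b : ℕ) (x : ℤ) : ℤ := if 2 * (x % (b : ℤ)) ≤ (b : ℤ) then x % b else x % b - b

lemma ctr_bound {b : ℕ} (hb : 0 < b) (x : ℤ) :
    -(b : ℤ) < 2 * ctr b x ∧ 2 * ctr b x ≤ (b : ℤ) := by
  have hb' : (0 : ℤ) < b := by exact_mod_cast hb
  have h1 : 0 ≤ x % (b : ℤ) := Int.emod_nonneg x (by positivity)
  have h2 : x % (b : ℤ) < b := Int.emod_lt_of_pos x hb'
  unfold ctr
  split_ifs with h <;> constructor <;> omega

lemma ctr_dvd (b : ℕ) (x : ℤ) : (b : ℤ) ∣ x - ctr b x := by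
  have h : (b : ℤ) ∣ x - x % b := Int.dvd_self_sub_of_emod_eq rfl
  unfold ctr
  split_ifs with hh
  · exact h
  · have : x - (x % b - b) = (x - x % b) + b := by ring
    rw [this]
    exact dvd_add h (dvd_refl _)

lemma ctr_unique {b : ℕ} (hb : 0 < b) {x c : ℤ} (h1 : (b : ℤ) ∣ x - c)
    (h2 : -(b : ℤ) < 2 * c) (h3 : 2 * c ≤ (b : ℤ)) : c = ctr b x := by
  have hd := ctr_dvd b x
  have hcb := ctr_bound hb x
  have hb' : (0 : ℤ) < b := by exact_mod_cast hb
  have h5 : (b : ℤ) ∣ c - ctr b x := by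
    have : c - ctr b x = (x - ctr b x) - (x - c) := by ring
    rw [this]; exact dvd_sub hd h1
  rcases h5 with ⟨k, hk⟩
  have hk0 : k = 0 := by
    rcases lt_trichotomy k 0 with h | h | h
    · nlinarith [hcb.1, hcb.2]
    · exact h
    · nlinarith [hcb.1, hcb.2]
  subst hk0
  simp at hk
  omega

lemma ctr_congr {b : ℕ} (hb : 0 < b) {x y : ℤ} (h : (b : ℤ) ∣ x - y) :
    ctr b x = ctr b y := by
  have hbx := ctr_bound hb x
  refine ctr_unique hb ?_ hbx.1 hbx.2
  have : y - ctr b x = (x - ctr b x) - (x - y) := by ring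
  rw [this]; exact dvd_sub (ctr_dvd b x) h

lemma ctr_zero {b : ℕ} (hb : 0 < b) : ctr b 0 = 0 := by
  have hb' : (0 : ℤ) < b := by exact_mod_cast hb
  refine (ctr_unique hb (by simp) (by omega) (by omega)).symm

/-- `x` is representable with digits in positions `< M`, at most `r` of them nonzero. -/
def DigM (b r M : ℕ) (x : ℤ) : Prop :=
  ∃ c : ℕ → ℤ, (∀ i, -(b : ℤ) < 2 * c i ∧ 2 * c i ≤ (b : ℤ)) ∧
    x = ∑ i ∈ Finset.range M, c i * (b : ℤ) ^ i ∧
    ((Finset.range M).filter (fun i => c i ≠ 0)).card ≤ r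

lemma DigM_mono {x : ℤ} {b r M M' : ℕ} (hb : 0 < b) (h : M ≤ M') (hd : DigM b r M x) :
    DigM b r M' x := by
  obtain ⟨c, hc1, hc2, hc3⟩ := hd
  have hb' : (0 : ℤ) < b := by exact_mod_cast hb
  refine ⟨fun i => if i < M then c i else 0, fun i => ?_, ?_, ?_⟩
  · dsimp only
    split_ifs with h'
    · exact hc1 i
    · constructor <;> omega
  · have e1 : ∑ i ∈ range M, c i * (b : ℤ) ^ i
        = ∑ i ∈ range M, (if i < M then c i else 0) * (b : ℤ) ^ i := by
      refine Finset.sum_congr rfl fun i hi => by simp [Finset.mem_range.1 hi]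
    rw [hc2, e1]
    refine Finset.sum_subset (Finset.range_subset_range.2 h) fun i _ hi => ?_
    simp [Finset.mem_range] at hi
    simp [hi]
  · refine le_trans (Finset.card_le_card ?_) hc3
    intro i hi
    simp only [Finset.mem_filter, Finset.mem_range] at hi ⊢
    rcases hi with ⟨_, hi2⟩
    by_cases h' : i < M
    · simp only [if_pos h'] at hi2; exact ⟨h', hi2⟩
    · simp [if_neg h'] at hi2

lemma DigM_zero {b r : ℕ} {x : ℤ} (h : DigM b r 0 x) : x = 0 := by
  obtain ⟨c, _, hc2, _⟩ := h
  simpa using hc2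

lemma DigM_step {b r M : ℕ} (hb : 0 < b) {x : ℤ} (h : DigM b r (M + 1) x) :
    DigM b (r - (if ctr b x = 0 then 0 else 1)) M ((x - ctr b x) / b)
      ∧ (ctr b x ≠ 0 → 1 ≤ r)
      ∧ x = b * ((x - ctr b x) / b) + ctr b x := by
  have hb' : (0 : ℤ) < b := by exact_mod_cast hb
  obtain ⟨c, hc1, hc2, hc3⟩ := h
  set X' : ℤ := ∑ i ∈ Finset.range M, c (i + 1) * (b : ℤ) ^ i with hX'
  have hsplit : x = (b : ℤ) * X' + c 0 := by
    rw [hc2, Finset.sum_range_succ']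
    rw [hX', Finset.mul_sum]
    simp only [pow_zero, mul_one]
    congr 1
    exact Finset.sum_congr rfl fun i _ => by ring
  have hc0 : c 0 = ctr b x := by
    refine ctr_unique hb ⟨X', ?_⟩ (hc1 0).1 (hc1 0).2
    omega
  have hdiv : (x - ctr b x) / b = X' := by
    rw [← hc0]
    have : x - c 0 = (b : ℤ) * X' := by omega
    rw [this, Int.mul_ediv_cancel_left _ (ne_of_gt hb')]
  have hxrec : x = (b : ℤ) * ((x - ctr b x) / b) + ctr b x := by
    rw [hdiv, ← hc0]; omega
  -- card accounting
  set T := (Finset.range (M + 1)).filter (fun i => c i ≠ 0) with hT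
  have hcard' : ((Finset.range M).filter (fun i => c (i + 1) ≠ 0)).card = (T.erase 0).card := by
    refine Finset.card_bij' (fun i _ => i + 1) (fun j _ => j - 1) ?_ ?_ ?_ ?_
    · intro i hi
      simp only [Finset.mem_filter, Finset.mem_range] at hi
      simp only [Finset.mem_erase, hT, Finset.mem_filter, Finset.mem_range]
      exact ⟨by omega, by omega, hi.2⟩
    · intro j hj
      simp only [Finset.mem_erase, hT, Finset.mem_filter, Finset.mem_range] at hj
      simp only [Finset.mem_filter, Finset.mem_range]
      obtain ⟨hj0, hj1, hj2⟩ := hj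
      constructor
      · omega
      · have : j - 1 + 1 = j := by omega
        rw [this]; exact hj2
    · intro i hi; omega
    · intro j hj
      simp only [Finset.mem_erase] at hj
      omega
  refine ⟨⟨fun i => c (i + 1), fun i => hc1 (i + 1), hdiv.symm ▸ rfl, ?_⟩, ?_, hxrec⟩
  · rw [hcard']
    rw [← hc0]
    by_cases h0 : c 0 = 0
    · rw [if_pos h0]
      have : (T.erase 0).card ≤ T.card := Finset.card_erase_le
      omega
    · rw [if_neg h0]
      have h0T : 0 ∈ T := by
        simp only [hT, Finset.mem_filter, Finset.mem_range]
        exact ⟨by omega, h0⟩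
      have := Finset.card_erase_add_one h0T
      omega
  · intro hne
    rw [← hc0] at hne
    have h0T : 0 ∈ T := by
      simp only [hT, Finset.mem_filter, Finset.mem_range]
      exact ⟨by omega, hne⟩
    have : 1 ≤ T.card := Finset.card_pos.2 ⟨0, h0T⟩
    omega
section Analytic

lemma cs_sum {α : Type*} [Fintype α] (f g : α → ℝ) :
    ∑ a, f a * g a ≤ Real.sqrt (∑ a, f a ^ 2) * Real.sqrt (∑ a, g a ^ 2) := by
  have h := Finset.sum_mul_sq_le_sq_mul_sq Finset.univ f g
  calc ∑ a, f a * g a ≤ |∑ a, f a * g a| := le_abs_self _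
    _ = Real.sqrt ((∑ a, f a * g a) ^ 2) := (Real.sqrt_sq_eq_abs _).symm
    _ ≤ Real.sqrt ((∑ a, f a ^ 2) * ∑ a, g a ^ 2) := Real.sqrt_le_sqrt h
    _ = _ := Real.sqrt_mul (by positivity) _

variable {G : Type*} [Fintype G] [AddCommGroup G] [DecidableEq G]

/-- autocorrelation -/
noncomputable def Cc (v : G → ℝ) (d : G) : ℝ := ∑ ζ, v ζ * v (ζ + d)

noncomputable def Ee (v : G → ℝ) : ℝ := ∑ d, (Cc v d) ^ 2

noncomputable def Ff (f g : G → ℝ) (σ : G) : ℝ := ∑ ζ, f ζ * g (σ - ζ)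

lemma I2 (f g : G → ℝ) : ∑ σ, (Ff f g σ) ^ 2 = ∑ d, Cc f d * Cc g d := by
  have expand : ∀ σ : G, (Ff f g σ) ^ 2
      = ∑ ζ, ∑ ζ', f ζ * g (σ - ζ) * (f ζ' * g (σ - ζ')) := by
    intro σ
    rw [sq, Ff, Finset.sum_mul_sum]
  have lhs : ∑ σ, (Ff f g σ) ^ 2
      = ∑ p : G × G × G, f p.2.1 * g (p.1 - p.2.1) * (f p.2.2 * g (p.1 - p.2.2)) := by
    rw [Fintype.sum_prod_type]
    exact Finset.sum_congr rfl fun σ _ => by rw [expand σ, Fintype.sum_prod_type]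
  have rhs : ∑ d, Cc f d * Cc g d
      = ∑ p : G × G × G, (f p.2.1 * f (p.2.1 + p.1)) * (g p.2.2 * g (p.2.2 + p.1)) := by
    rw [Fintype.sum_prod_type]
    refine Finset.sum_congr rfl fun d _ => ?_
    rw [Cc, Cc, Finset.sum_mul_sum, Fintype.sum_prod_type]
  rw [lhs, rhs]
  refine Fintype.sum_equiv ⟨fun q => (q.2.2 - q.2.1, q.2.1, q.1 - q.2.2),
    fun p => (p.2.2 + p.2.1 + p.1, p.2.1, p.2.1 + p.1), ?_, ?_⟩ _ _ ?_
  · intro q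
    obtain ⟨σ, ζ, ζ'⟩ := q
    refine Prod.ext ?_ (Prod.ext ?_ ?_) <;> simp <;> abel
  · intro p
    obtain ⟨d, ζ, τ⟩ := p
    refine Prod.ext ?_ (Prod.ext ?_ ?_) <;> simp <;> abel
  · intro q
    obtain ⟨σ, ζ, ζ'⟩ := q
    simp only [Equiv.coe_fn_mk]
    have h1 : ζ + (ζ' - ζ) = ζ' := by abel
    have h2 : σ - ζ' + (ζ' - ζ) = σ - ζ := by abel
    rw [h1, h2]
    ring

lemma I3 (f g : G → ℝ) : ∑ d, Cc f d * Cc g d ≤ Real.sqrt (Ee f) * Real.sqrt (Ee g) :=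
  cs_sum _ _

lemma sum_shift_sq (F : G → ℝ) (e : G) : ∑ σ, (F (σ + e)) ^ 2 = ∑ σ, F σ ^ 2 :=
  Fintype.sum_equiv (Equiv.addRight e) _ _ (fun σ => rfl)

lemma I1 (v₁ v₂ v₃ v₄ : G → ℝ) (e : G) :
    ∑ ζ₃, ∑ ζ₄, (v₃ ζ₃ * v₄ ζ₄) * Ff v₁ v₂ (ζ₃ + ζ₄ + e)
      = ∑ σ, Ff v₃ v₄ σ * Ff v₁ v₂ (σ + e) := by
  symm
  calc ∑ σ, Ff v₃ v₄ σ * Ff v₁ v₂ (σ + e)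
      = ∑ σ, ∑ ζ₃, v₃ ζ₃ * v₄ (σ - ζ₃) * Ff v₁ v₂ (σ + e) :=
        Finset.sum_congr rfl fun σ _ => by rw [Ff, Finset.sum_mul]
    _ = ∑ ζ₃, ∑ σ, v₃ ζ₃ * v₄ (σ - ζ₃) * Ff v₁ v₂ (σ + e) := Finset.sum_comm
    _ = ∑ ζ₃, ∑ ζ₄, (v₃ ζ₃ * v₄ ζ₄) * Ff v₁ v₂ (ζ₃ + ζ₄ + e) := by
        refine Finset.sum_congr rfl fun ζ₃ _ => ?_
        refine (Fintype.sum_equiv (Equiv.addLeft ζ₃) _ _ fun ζ₄ => ?_).symm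
        simp only [Equiv.coe_addLeft]
        rw [add_sub_cancel_left]

lemma S_le (v₁ v₂ v₃ v₄ : G → ℝ) (e : G) :
    ∑ ζ₃, ∑ ζ₄, (v₃ ζ₃ * v₄ ζ₄) * Ff v₁ v₂ (ζ₃ + ζ₄ + e)
      ≤ Real.sqrt (Real.sqrt (Ee v₃) * Real.sqrt (Ee v₄))
        * Real.sqrt (Real.sqrt (Ee v₁) * Real.sqrt (Ee v₂)) := by
  rw [I1]
  calc ∑ σ, Ff v₃ v₄ σ * Ff v₁ v₂ (σ + e)
      ≤ Real.sqrt (∑ σ, (Ff v₃ v₄ σ) ^ 2) * Real.sqrt (∑ σ, (Ff v₁ v₂ (σ + e)) ^ 2) :=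
        cs_sum _ _
    _ = Real.sqrt (∑ d, Cc v₃ d * Cc v₄ d) * Real.sqrt (∑ d, Cc v₁ d * Cc v₂ d) := by
        rw [I2, sum_shift_sq (Ff v₁ v₂) e, I2]
    _ ≤ _ := by
        gcongr
        · exact I3 _ _
        · exact I3 _ _

end Analytic

section EBound
variable {G : Type*} [Fintype G] [AddCommGroup G] [DecidableEq G]

lemma le_of_sq_le_sq' {a c : ℝ} (ha : 0 ≤ a) (hc : 0 ≤ c) (h : a ^ 2 ≤ c ^ 2) : a ≤ c := by
  nlinarith

/-- the weighted digit-class vector -/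
noncomputable def vv (b : ℕ) (u : G → ℝ) : G → ℝ :=
  fun ζ => if ζ = 0 then u 0 else u ζ / (2 * b)

lemma vv_nonneg (b : ℕ) (u : G → ℝ) (hu : ∀ ζ, 0 ≤ u ζ) (ζ : G) : 0 ≤ vv b u ζ := by
  unfold vv; split_ifs
  · exact hu 0
  · exact div_nonneg (hu ζ) (by positivity)

lemma final_numeric {β ε x Y S : ℝ} (hS : S ≤ 6 * ε ^ 2 * x ^ 2 * Y + 3 * β * ε ^ 4 * Y ^ 2)
    (hε2 : 8 * ε ^ 2 ≤ 2) (hq : (3 * β + 1) * ε ^ 4 ≤ 1)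
    (hx : 0 ≤ x) (hY : 0 ≤ Y) :
    (x ^ 2 + ε ^ 2 * Y) ^ 2 + S ≤ (x ^ 2 + Y) ^ 2 := by
  have t1 : 8 * ε ^ 2 * (x ^ 2 * Y) ≤ 2 * (x ^ 2 * Y) :=
    mul_le_mul_of_nonneg_right hε2 (mul_nonneg (sq_nonneg x) hY)
  have t2 : (3 * β + 1) * ε ^ 4 * Y ^ 2 ≤ 1 * Y ^ 2 :=
    mul_le_mul_of_nonneg_right hq (sq_nonneg Y)
  nlinarith [t1, t2, hS]

lemma amgm_helper {e x Y L : ℝ} (hY : 0 ≤ Y) :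
    2 * e ^ 3 * x * Y * (2 * L) ≤ 2 * e ^ 2 * x ^ 2 * Y + 2 * e ^ 4 * Y * L ^ 2 := by
  nlinarith [mul_nonneg hY (sq_nonneg (e * x - e ^ 2 * L))]

lemma sq_add_le' (a c : ℝ) : (a + c) ^ 2 ≤ 2 * a ^ 2 + 2 * c ^ 2 := by
  nlinarith [sq_nonneg (a - c)]

lemma E_bound (b : ℕ) (hb : 3 ≤ b) (hcard : Fintype.card G ≤ b)
    (u : G → ℝ) (hu : ∀ ζ, 0 ≤ u ζ) :
    Ee (vv b u) ≤ (∑ ζ, u ζ ^ 2) ^ 2 := by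
  have hB : (3 : ℝ) ≤ (b : ℝ) := by exact_mod_cast hb
  have hB0 : (0 : ℝ) < (b : ℝ) := by linarith
  obtain ⟨ε, hεdef⟩ : ∃ ε : ℝ, ε = 1 / (2 * (b : ℝ)) := ⟨_, rfl⟩
  have hε0 : 0 < ε := by rw [hεdef]; positivity
  have h2Bε : 2 * (b : ℝ) * ε = 1 := by rw [hεdef]; field_simp
  have h6ε : 6 * ε ≤ 1 := by
    calc 6 * ε ≤ 2 * (b : ℝ) * ε := by
          have h := mul_nonneg (show (0:ℝ) ≤ 2 * (b:ℝ) - 6 by linarith) hε0.le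
          linarith
      _ = 1 := h2Bε
  have h36 : 36 * ε ^ 2 ≤ 1 := by
    have h := mul_le_one₀ h6ε (by positivity) h6ε
    calc 36 * ε ^ 2 = (6 * ε) * (6 * ε) := by ring
      _ ≤ 1 := h
  have hε2 : 8 * ε ^ 2 ≤ 2 := by linarith
  have h16 : 16 * (b:ℝ) ^ 4 * ε ^ 4 = 1 := by
    linear_combination (8 * (b:ℝ) ^ 3 * ε ^ 3 + 4 * (b:ℝ) ^ 2 * ε ^ 2 + 2 * (b:ℝ) * ε + 1) * h2Bε
  have hq : (3 * (b:ℝ) + 1) * ε ^ 4 ≤ 1 := by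
    have hB2 : 9 ≤ (b:ℝ) ^ 2 := by nlinarith [hB]
    have hpoly : 3 * (b:ℝ) + 1 ≤ 16 * (b:ℝ) ^ 4 := by nlinarith [hB, hB2]
    calc (3 * (b:ℝ) + 1) * ε ^ 4 ≤ 16 * (b:ℝ) ^ 4 * ε ^ 4 :=
        mul_le_mul_of_nonneg_right hpoly (by positivity)
      _ = 1 := h16
  have hv0 : vv b u 0 = u 0 := by simp [vv]
  have hvε : ∀ ζ : G, ζ ≠ 0 → vv b u ζ = ε * u ζ := by
    intro ζ hζ
    rw [show vv b u ζ = u ζ / (2 * b) from if_neg hζ, hεdef]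
    ring
  have hvnn : ∀ ζ, 0 ≤ vv b u ζ := vv_nonneg b u hu
  obtain ⟨x, hxdef⟩ : ∃ x : ℝ, x = u 0 := ⟨_, rfl⟩
  have hx0 : 0 ≤ x := hxdef ▸ hu 0
  obtain ⟨Y, hYdef⟩ : ∃ Y : ℝ, Y = ∑ ζ ∈ Finset.univ.erase (0 : G), u ζ ^ 2 := ⟨_, rfl⟩
  have hY0 : 0 ≤ Y := hYdef ▸ Finset.sum_nonneg fun ζ _ => sq_nonneg _
  have htot : ∑ ζ, u ζ ^ 2 = x ^ 2 + Y := by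
    rw [hYdef, hxdef]
    rw [← Finset.add_sum_erase _ _ (Finset.mem_univ (0 : G))]
  -- C at 0
  have hC0 : Cc (vv b u) 0 = x ^ 2 + ε ^ 2 * Y := by
    have h1 : Cc (vv b u) 0 = ∑ ζ, (vv b u) ζ ^ 2 :=
      Finset.sum_congr rfl fun ζ _ => by rw [add_zero, sq]
    rw [h1, ← Finset.add_sum_erase _ _ (Finset.mem_univ (0 : G)), hv0, ← hxdef]
    congr 1
    calc ∑ ζ ∈ Finset.univ.erase (0 : G), (vv b u) ζ ^ 2
        = ∑ ζ ∈ Finset.univ.erase (0 : G), ε ^ 2 * u ζ ^ 2 :=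
          Finset.sum_congr rfl fun ζ hζ => by
            rw [hvε ζ (Finset.mem_erase.1 hζ).1]; ring
      _ = ε ^ 2 * Y := by rw [hYdef, Finset.mul_sum]
  -- C at d ≠ 0
  have hCd : ∀ d : G, d ≠ 0 → Cc (vv b u) d ≤ ε * x * (u d + u (-d)) + ε ^ 2 * Y := by
    intro d hd
    have hndd : (-d : G) ≠ 0 := neg_ne_zero.2 hd
    have hmem : (-d : G) ∈ Finset.univ.erase 0 := Finset.mem_erase.2 ⟨hndd, Finset.mem_univ _⟩
    have split1 : Cc (vv b u) d
        = (vv b u) 0 * (vv b u) (0 + d) + ∑ ζ ∈ Finset.univ.erase 0, (vv b u) ζ * (vv b u) (ζ + d) :=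
      (Finset.add_sum_erase _ _ (Finset.mem_univ (0 : G))).symm
    have split2 : ∑ ζ ∈ Finset.univ.erase 0, (vv b u) ζ * (vv b u) (ζ + d)
        = (vv b u) (-d) * (vv b u) (-d + d)
          + ∑ ζ ∈ (Finset.univ.erase 0).erase (-d), (vv b u) ζ * (vv b u) (ζ + d) :=
      (Finset.add_sum_erase _ _ hmem).symm
    have hrest : ∑ ζ ∈ (Finset.univ.erase (0:G)).erase (-d), (vv b u) ζ * (vv b u) (ζ + d)
        ≤ ε ^ 2 * Y := by
      have hterm : ∀ ζ ∈ (Finset.univ.erase (0:G)).erase (-d),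
          (vv b u) ζ * (vv b u) (ζ + d) = ε ^ 2 * (u ζ * u (ζ + d)) := by
        intro ζ hζ
        have h1 : ζ ≠ 0 := (Finset.mem_erase.1 (Finset.mem_of_mem_erase hζ)).1
        have h2 : ζ ≠ -d := (Finset.mem_erase.1 hζ).1
        have h3 : ζ + d ≠ 0 := fun hc => h2 (eq_neg_of_add_eq_zero_left hc)
        rw [hvε ζ h1, hvε _ h3]
        ring
      rw [Finset.sum_congr rfl hterm, ← Finset.mul_sum]
      have hcs := Finset.sum_mul_sq_le_sq_mul_sq ((Finset.univ.erase (0:G)).erase (-d)) u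
        (fun ζ => u (ζ + d))
      have hA : ∑ ζ ∈ (Finset.univ.erase (0:G)).erase (-d), u ζ ^ 2 ≤ Y := by
        rw [hYdef]
        exact Finset.sum_le_sum_of_subset_of_nonneg (Finset.erase_subset _ _)
          fun ζ _ _ => sq_nonneg _
      have hBsum : ∑ ζ ∈ (Finset.univ.erase (0:G)).erase (-d), u (ζ + d) ^ 2 ≤ Y := by
        have hinj : ∀ a ∈ (Finset.univ.erase (0:G)).erase (-d),
            ∀ a' ∈ (Finset.univ.erase (0:G)).erase (-d), a + d = a' + d → a = a' := by
          intro a _ a' _ h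
          simpa using congrArg (· + (-d)) h
        have him := Finset.sum_image (f := fun η => u η ^ 2) (g := (· + d)) hinj
        rw [← him, hYdef]
        refine Finset.sum_le_sum_of_subset_of_nonneg ?_ fun ζ _ _ => sq_nonneg _
        intro η hη
        obtain ⟨ζ, hζ, rfl⟩ := Finset.mem_image.1 hη
        have h2 : ζ ≠ -d := (Finset.mem_erase.1 hζ).1
        exact Finset.mem_erase.2 ⟨fun hc => h2 (eq_neg_of_add_eq_zero_left hc), Finset.mem_univ _⟩
      have hsum0 : 0 ≤ ∑ ζ ∈ (Finset.univ.erase (0:G)).erase (-d), u ζ * u (ζ + d) :=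
        Finset.sum_nonneg fun ζ _ => mul_nonneg (hu _) (hu _)
      have hmain : ∑ ζ ∈ (Finset.univ.erase (0:G)).erase (-d), u ζ * u (ζ + d) ≤ Y := by
        refine le_of_sq_le_sq' hsum0 hY0 ?_
        calc (∑ ζ ∈ (Finset.univ.erase (0:G)).erase (-d), u ζ * u (ζ + d)) ^ 2
            ≤ (∑ ζ ∈ (Finset.univ.erase (0:G)).erase (-d), u ζ ^ 2)
              * ∑ ζ ∈ (Finset.univ.erase (0:G)).erase (-d), u (ζ + d) ^ 2 := hcs
          _ ≤ Y * Y :=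
              mul_le_mul hA hBsum (Finset.sum_nonneg fun ζ _ => sq_nonneg _) hY0
          _ = Y ^ 2 := (sq Y).symm
      exact mul_le_mul_of_nonneg_left hmain (by positivity)
    have hvd : (vv b u) (0 + d) = ε * u d := by rw [zero_add]; exact hvε d hd
    have hvnd : (vv b u) (-d) = ε * u (-d) := hvε _ hndd
    have hvndd : (vv b u) (-d + d) = x := by rw [neg_add_cancel, hv0, hxdef]
    rw [split1, split2, hvd, hvnd, hvndd, hv0, ← hxdef]
    have hexp : ε * x * (u d + u (-d)) = x * (ε * u d) + ε * u (-d) * x := by ring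
    linarith [hrest]
  have hCd0 : ∀ d : G, 0 ≤ Cc (vv b u) d := fun d =>
    Finset.sum_nonneg fun ζ _ => mul_nonneg (hvnn _) (hvnn _)
  -- reindex sums with -d
  have hnegsum_sq : ∑ d ∈ Finset.univ.erase (0:G), u (-d) ^ 2 = Y := by
    have h1 : ∑ d : G, u (-d) ^ 2 = ∑ d : G, u d ^ 2 :=
      Fintype.sum_equiv (Equiv.neg G) _ _ (fun d => rfl)
    have h2 := Finset.add_sum_erase Finset.univ (fun d : G => u (-d) ^ 2) (Finset.mem_univ 0)
    have h3 := Finset.add_sum_erase Finset.univ (fun d : G => u d ^ 2) (Finset.mem_univ 0)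
    simp only [neg_zero] at h2
    rw [hYdef]
    linarith
  obtain ⟨L, hLdef⟩ : ∃ L : ℝ, L = ∑ d ∈ Finset.univ.erase (0:G), u d := ⟨_, rfl⟩
  have hL0 : 0 ≤ L := hLdef ▸ Finset.sum_nonneg fun d _ => hu d
  have hnegsum : ∑ d ∈ Finset.univ.erase (0:G), u (-d) = L := by
    have h1 : ∑ d : G, u (-d) = ∑ d : G, u d :=
      Fintype.sum_equiv (Equiv.neg G) _ _ (fun d => rfl)
    have h2 := Finset.add_sum_erase Finset.univ (fun d : G => u (-d)) (Finset.mem_univ 0)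
    have h3 := Finset.add_sum_erase Finset.univ (fun d : G => u d) (Finset.mem_univ 0)
    simp only [neg_zero] at h2
    rw [hLdef]
    linarith
  have hcount : ((Finset.univ.erase (0 : G)).card : ℝ) ≤ (b : ℝ) := by
    have h1 : (Finset.univ.erase (0 : G)).card ≤ b := by
      calc (Finset.univ.erase (0 : G)).card ≤ Finset.univ.card := Finset.card_erase_le
        _ = Fintype.card G := Finset.card_univ
        _ ≤ b := hcard
    exact_mod_cast h1
  have hL2 : L ^ 2 ≤ (b : ℝ) * Y := by
    have h0 := sq_sum_le_card_mul_sum_sq (s := Finset.univ.erase (0 : G)) (f := u)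
    rw [← hLdef, ← hYdef] at h0
    calc L ^ 2 ≤ ((Finset.univ.erase (0 : G)).card : ℝ) * Y := h0
      _ ≤ (b : ℝ) * Y := mul_le_mul_of_nonneg_right hcount hY0
  -- sum over d ≠ 0
  have hsum_main : ∑ d ∈ Finset.univ.erase (0:G), (Cc (vv b u) d) ^ 2
      ≤ 6 * ε ^ 2 * x ^ 2 * Y + 3 * (b : ℝ) * ε ^ 4 * Y ^ 2 := by
    have step1 : ∑ d ∈ Finset.univ.erase (0:G), (Cc (vv b u) d) ^ 2
        ≤ ∑ d ∈ Finset.univ.erase (0:G), (ε * x * (u d + u (-d)) + ε ^ 2 * Y) ^ 2 :=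
      Finset.sum_le_sum fun d hd =>
        pow_le_pow_left₀ (hCd0 d) (hCd d (Finset.mem_erase.1 hd).1) 2
    have step3 : ∑ d ∈ Finset.univ.erase (0:G), (ε * x * (u d + u (-d)) + ε ^ 2 * Y) ^ 2
        = ε ^ 2 * x ^ 2 * (∑ d ∈ Finset.univ.erase (0:G), (u d + u (-d)) ^ 2)
          + 2 * ε ^ 3 * x * Y * (∑ d ∈ Finset.univ.erase (0:G), (u d + u (-d)))
          + ε ^ 4 * Y ^ 2 * ((Finset.univ.erase (0 : G)).card : ℝ) := by
      have hptw : ∀ d : G, (ε * x * (u d + u (-d)) + ε ^ 2 * Y) ^ 2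
          = ε ^ 2 * x ^ 2 * (u d + u (-d)) ^ 2 + 2 * ε ^ 3 * x * Y * (u d + u (-d))
            + ε ^ 4 * Y ^ 2 := fun d => by ring
      rw [Finset.sum_congr rfl fun d _ => hptw d, Finset.sum_add_distrib,
        Finset.sum_add_distrib, Finset.sum_const, ← Finset.mul_sum, ← Finset.mul_sum,
        nsmul_eq_mul]
      ring
    have hsq : ∑ d ∈ Finset.univ.erase (0:G), (u d + u (-d)) ^ 2 ≤ 4 * Y := by
      have hptw : ∀ d : G, (u d + u (-d)) ^ 2 ≤ 2 * u d ^ 2 + 2 * u (-d) ^ 2 := fun d =>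
        sq_add_le' _ _
      calc ∑ d ∈ Finset.univ.erase (0:G), (u d + u (-d)) ^ 2
          ≤ ∑ d ∈ Finset.univ.erase (0:G), (2 * u d ^ 2 + 2 * u (-d) ^ 2) :=
            Finset.sum_le_sum fun d _ => hptw d
        _ = 4 * Y := by
            rw [Finset.sum_add_distrib, ← Finset.mul_sum, ← Finset.mul_sum, hnegsum_sq, ← hYdef]
            ring
    have hlin : ∑ d ∈ Finset.univ.erase (0:G), (u d + u (-d)) = 2 * L := by
      rw [Finset.sum_add_distrib, hnegsum, ← hLdef]; ring
    have hamgm : 2 * ε ^ 3 * x * Y * (2 * L) ≤ 2 * ε ^ 2 * x ^ 2 * Y + 2 * ε ^ 4 * Y * L ^ 2 :=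
      amgm_helper hY0
    have h2xyL : 2 * ε ^ 4 * Y * L ^ 2 ≤ 2 * ε ^ 4 * Y * ((b : ℝ) * Y) :=
      mul_le_mul_of_nonneg_left hL2 (by positivity)
    calc ∑ d ∈ Finset.univ.erase (0:G), (Cc (vv b u) d) ^ 2
        ≤ ε ^ 2 * x ^ 2 * (∑ d ∈ Finset.univ.erase (0:G), (u d + u (-d)) ^ 2)
          + 2 * ε ^ 3 * x * Y * (∑ d ∈ Finset.univ.erase (0:G), (u d + u (-d)))
          + ε ^ 4 * Y ^ 2 * ((Finset.univ.erase (0 : G)).card : ℝ) := step3 ▸ step1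
      _ = ε ^ 2 * x ^ 2 * (∑ d ∈ Finset.univ.erase (0:G), (u d + u (-d)) ^ 2)
          + 2 * ε ^ 3 * x * Y * (2 * L)
          + ε ^ 4 * Y ^ 2 * ((Finset.univ.erase (0 : G)).card : ℝ) := by rw [hlin]
      _ ≤ ε ^ 2 * x ^ 2 * (4 * Y)
          + (2 * ε ^ 2 * x ^ 2 * Y + 2 * ε ^ 4 * Y * ((b : ℝ) * Y))
          + ε ^ 4 * Y ^ 2 * (b : ℝ) := by
          have t1 : ε ^ 2 * x ^ 2 * (∑ d ∈ Finset.univ.erase (0:G), (u d + u (-d)) ^ 2)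
              ≤ ε ^ 2 * x ^ 2 * (4 * Y) := mul_le_mul_of_nonneg_left hsq (by positivity)
          have t3 : ε ^ 4 * Y ^ 2 * ((Finset.univ.erase (0 : G)).card : ℝ)
              ≤ ε ^ 4 * Y ^ 2 * (b : ℝ) := mul_le_mul_of_nonneg_left hcount (by positivity)
          linarith [hamgm, h2xyL]
      _ = 6 * ε ^ 2 * x ^ 2 * Y + 3 * (b : ℝ) * ε ^ 4 * Y ^ 2 := by ring
  -- assemble
  have hEsplit : Ee (vv b u) = (Cc (vv b u) 0) ^ 2 + ∑ d ∈ Finset.univ.erase (0:G), (Cc (vv b u) d) ^ 2 :=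
    (Finset.add_sum_erase _ _ (Finset.mem_univ (0 : G))).symm
  rw [hEsplit, hC0, htot]
  exact final_numeric hsum_main hε2 hq hx0 hY0

end EBound

section KeyLemma
variable {G : Type*} [Fintype G] [AddCommGroup G] [DecidableEq G]

lemma key_ineq (b : ℕ) (hb : 3 ≤ b) (hcard : Fintype.card G ≤ b)
    (u₁ u₂ u₃ u₄ : G → ℝ) (h1 : ∀ ζ, 0 ≤ u₁ ζ) (h2 : ∀ ζ, 0 ≤ u₂ ζ)
    (h3 : ∀ ζ, 0 ≤ u₃ ζ) (h4 : ∀ ζ, 0 ≤ u₄ ζ) (e : G) :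
    ∑ ζ₃, ∑ ζ₄, (vv b u₃ ζ₃ * vv b u₄ ζ₄) * Ff (vv b u₁) (vv b u₂) (ζ₃ + ζ₄ + e)
      ≤ Real.sqrt (∑ ζ, u₁ ζ ^ 2) * Real.sqrt (∑ ζ, u₂ ζ ^ 2)
        * Real.sqrt (∑ ζ, u₃ ζ ^ 2) * Real.sqrt (∑ ζ, u₄ ζ ^ 2) := by
  have hQ1 : (0:ℝ) ≤ ∑ ζ, u₁ ζ ^ 2 := Finset.sum_nonneg fun ζ _ => sq_nonneg _
  have hQ2 : (0:ℝ) ≤ ∑ ζ, u₂ ζ ^ 2 := Finset.sum_nonneg fun ζ _ => sq_nonneg _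
  have hQ3 : (0:ℝ) ≤ ∑ ζ, u₃ ζ ^ 2 := Finset.sum_nonneg fun ζ _ => sq_nonneg _
  have hQ4 : (0:ℝ) ≤ ∑ ζ, u₄ ζ ^ 2 := Finset.sum_nonneg fun ζ _ => sq_nonneg _
  have hE1 : Real.sqrt (Ee (vv b u₁)) ≤ ∑ ζ, u₁ ζ ^ 2 := by
    calc Real.sqrt (Ee (vv b u₁)) ≤ Real.sqrt ((∑ ζ, u₁ ζ ^ 2) ^ 2) :=
        Real.sqrt_le_sqrt (E_bound b hb hcard u₁ h1)
      _ = ∑ ζ, u₁ ζ ^ 2 := Real.sqrt_sq hQ1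
  have hE2 : Real.sqrt (Ee (vv b u₂)) ≤ ∑ ζ, u₂ ζ ^ 2 := by
    calc Real.sqrt (Ee (vv b u₂)) ≤ Real.sqrt ((∑ ζ, u₂ ζ ^ 2) ^ 2) :=
        Real.sqrt_le_sqrt (E_bound b hb hcard u₂ h2)
      _ = ∑ ζ, u₂ ζ ^ 2 := Real.sqrt_sq hQ2
  have hE3 : Real.sqrt (Ee (vv b u₃)) ≤ ∑ ζ, u₃ ζ ^ 2 := by
    calc Real.sqrt (Ee (vv b u₃)) ≤ Real.sqrt ((∑ ζ, u₃ ζ ^ 2) ^ 2) :=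
        Real.sqrt_le_sqrt (E_bound b hb hcard u₃ h3)
      _ = ∑ ζ, u₃ ζ ^ 2 := Real.sqrt_sq hQ3
  have hE4 : Real.sqrt (Ee (vv b u₄)) ≤ ∑ ζ, u₄ ζ ^ 2 := by
    calc Real.sqrt (Ee (vv b u₄)) ≤ Real.sqrt ((∑ ζ, u₄ ζ ^ 2) ^ 2) :=
        Real.sqrt_le_sqrt (E_bound b hb hcard u₄ h4)
      _ = ∑ ζ, u₄ ζ ^ 2 := Real.sqrt_sq hQ4
  calc ∑ ζ₃, ∑ ζ₄, (vv b u₃ ζ₃ * vv b u₄ ζ₄) * Ff (vv b u₁) (vv b u₂) (ζ₃ + ζ₄ + e)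
      ≤ Real.sqrt (Real.sqrt (Ee (vv b u₃)) * Real.sqrt (Ee (vv b u₄)))
        * Real.sqrt (Real.sqrt (Ee (vv b u₁)) * Real.sqrt (Ee (vv b u₂))) := S_le _ _ _ _ e
    _ ≤ Real.sqrt ((∑ ζ, u₃ ζ ^ 2) * (∑ ζ, u₄ ζ ^ 2))
        * Real.sqrt ((∑ ζ, u₁ ζ ^ 2) * (∑ ζ, u₂ ζ ^ 2)) := by
        gcongr <;> first | exact Real.sqrt_nonneg _ | exact hE1 | exact hE2 | exact hE3 | exact hE4
    _ = Real.sqrt (∑ ζ, u₁ ζ ^ 2) * Real.sqrt (∑ ζ, u₂ ζ ^ 2)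
        * Real.sqrt (∑ ζ, u₃ ζ ^ 2) * Real.sqrt (∑ ζ, u₄ ζ ^ 2) := by
        rw [Real.sqrt_mul hQ3, Real.sqrt_mul hQ1]
        ring

lemma eq_sub_iff' (ζ₁ ζ₂ w : G) : ζ₁ + ζ₂ = w ↔ ζ₂ = w - ζ₁ := by
  constructor
  · intro h; rw [← h]; abel
  · intro h; rw [h]; abel

lemma rearrange (v₁ v₂ v₃ v₄ : G → ℝ) (e0 : G) :
    ∑ z : (G × G) × (G × G),
      (if z.1.1 + z.1.2 = z.2.1 + z.2.2 + e0 then v₁ z.1.1 * v₂ z.1.2 * (v₃ z.2.1 * v₄ z.2.2) else 0)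
    = ∑ ζ₃, ∑ ζ₄, (v₃ ζ₃ * v₄ ζ₄) * Ff v₁ v₂ (ζ₃ + ζ₄ + e0) := by
  rw [Fintype.sum_prod_type]
  calc ∑ p : G × G, ∑ q : (G × G),
        (if p.1 + p.2 = q.1 + q.2 + e0 then v₁ p.1 * v₂ p.2 * (v₃ q.1 * v₄ q.2) else 0)
      = ∑ p : G × G, ∑ ζ₃, ∑ ζ₄,
        (if p.1 + p.2 = ζ₃ + ζ₄ + e0 then v₁ p.1 * v₂ p.2 * (v₃ ζ₃ * v₄ ζ₄) else 0) := by
        exact Finset.sum_congr rfl fun p _ => Fintype.sum_prod_type _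
    _ = ∑ ζ₁, ∑ ζ₂, ∑ ζ₃, ∑ ζ₄,
        (if ζ₁ + ζ₂ = ζ₃ + ζ₄ + e0 then v₁ ζ₁ * v₂ ζ₂ * (v₃ ζ₃ * v₄ ζ₄) else 0) :=
        Fintype.sum_prod_type _
    _ = ∑ ζ₁, ∑ ζ₃, ∑ ζ₄, ∑ ζ₂,
        (if ζ₁ + ζ₂ = ζ₃ + ζ₄ + e0 then v₁ ζ₁ * v₂ ζ₂ * (v₃ ζ₃ * v₄ ζ₄) else 0) := by
        refine Finset.sum_congr rfl fun ζ₁ _ => ?_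
        rw [Finset.sum_comm]
        exact Finset.sum_congr rfl fun ζ₃ _ => Finset.sum_comm
    _ = ∑ ζ₁, ∑ ζ₃, ∑ ζ₄, v₁ ζ₁ * v₂ (ζ₃ + ζ₄ + e0 - ζ₁) * (v₃ ζ₃ * v₄ ζ₄) := by
        refine Finset.sum_congr rfl fun ζ₁ _ => Finset.sum_congr rfl fun ζ₃ _ =>
          Finset.sum_congr rfl fun ζ₄ _ => ?_
        have hcong : ∀ ζ₂ : G, (if ζ₁ + ζ₂ = ζ₃ + ζ₄ + e0 then v₁ ζ₁ * v₂ ζ₂ * (v₃ ζ₃ * v₄ ζ₄) else 0)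
            = (if ζ₂ = ζ₃ + ζ₄ + e0 - ζ₁ then v₁ ζ₁ * v₂ ζ₂ * (v₃ ζ₃ * v₄ ζ₄) else 0) := fun ζ₂ =>
          if_congr (eq_sub_iff' ζ₁ ζ₂ _) rfl rfl
        rw [Finset.sum_congr rfl fun ζ₂ _ => hcong ζ₂]
        rw [Finset.sum_ite_eq' Finset.univ (ζ₃ + ζ₄ + e0 - ζ₁)
          (fun ζ₂ => v₁ ζ₁ * v₂ ζ₂ * (v₃ ζ₃ * v₄ ζ₄))]
        simp
    _ = ∑ ζ₃, ∑ ζ₄, (v₃ ζ₃ * v₄ ζ₄) * Ff v₁ v₂ (ζ₃ + ζ₄ + e0) := by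
        rw [Finset.sum_comm]
        refine Finset.sum_congr rfl fun ζ₃ _ => ?_
        rw [Finset.sum_comm]
        refine Finset.sum_congr rfl fun ζ₄ _ => ?_
        rw [Ff, Finset.mul_sum]
        exact Finset.sum_congr rfl fun ζ₁ _ => by ring

end KeyLemma

section ZModDigits
variable (b : ℕ) [NeZero b]

lemma dvd_sub_val (a : ℤ) : (b : ℤ) ∣ a - ((a : ZMod b).val : ℤ) := by
  have h := ZMod.intCast_zmod_eq_zero_iff_dvd (a - ((a : ZMod b).val : ℤ)) b
  apply h.mp
  push_cast
  rw [ZMod.natCast_val, ZMod.cast_id]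
  ring

/-- the centred digit attached to a residue class -/
def digZ (ζ : ZMod b) : ℤ := ctr b (ζ.val : ℤ)

lemma ctr_eq_digZ (hb : 0 < b) (a : ℤ) : ctr b a = digZ b ((a : ZMod b)) :=
  ctr_congr hb (dvd_sub_val b a)

lemma digZ_zero (hb : 0 < b) : digZ b 0 = 0 := by
  unfold digZ
  rw [ZMod.val_zero]
  exact_mod_cast ctr_zero hb

lemma digZ_ne_zero (hb : 0 < b) {ζ : ZMod b} (h : ζ ≠ 0) : digZ b ζ ≠ 0 := by
  intro hc
  unfold digZ at hc
  have hd := ctr_dvd b ((ζ.val : ℕ) : ℤ)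
  rw [hc, sub_zero] at hd
  have hd' : b ∣ ζ.val := by exact_mod_cast hd
  have hlt : ζ.val < b := ZMod.val_lt ζ
  have hv0 : ζ.val = 0 := Nat.eq_zero_of_dvd_of_lt hd' hlt
  exact h ((ZMod.val_eq_zero ζ).mp hv0)

lemma digZ_cast (ζ : ZMod b) : ((digZ b ζ : ℤ) : ZMod b) = ζ := by
  have hd := ctr_dvd b ((ζ.val : ℕ) : ℤ)
  have h0 : (((ζ.val : ℤ) - digZ b ζ : ℤ) : ZMod b) = 0 :=
    (ZMod.intCast_zmod_eq_zero_iff_dvd _ b).mpr hd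
  have h1 : ((ζ.val : ℤ) : ZMod b) = ζ := by
    push_cast
    rw [ZMod.natCast_val, ZMod.cast_id]
  push_cast at h0
  rw [ZMod.natCast_val, ZMod.cast_id] at h0
  linear_combination -h0

lemma digZ_bound (hb : 0 < b) (ζ : ZMod b) :
    -(b : ℤ) < 2 * digZ b ζ ∧ 2 * digZ b ζ ≤ (b : ℤ) := ctr_bound hb _

end ZModDigits

/-- residue class of `A` -/
def classF (b : ℕ) (A : Finset ℤ) (ζ : ZMod b) : Finset ℤ :=
  A.filter (fun a => (a : ZMod b) = ζ)

lemma class_step (b : ℕ) [NeZero b] (hb0 : 0 < b) (A : Finset ℤ) (r M : ℕ)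
    (hA : ∀ a ∈ A, DigM b r (M + 1) a) (ζ : ZMod b) :
    ∃ B : Finset ℤ, B.card = (classF b A ζ).card ∧
      (∀ a' ∈ B, DigM b (r - (if ζ = 0 then 0 else 1)) M a') ∧
      ((classF b A ζ).Nonempty → ζ ≠ 0 → 1 ≤ r) ∧
      (∀ a ∈ classF b A ζ, (a - digZ b ζ) / b ∈ B) ∧
      (∀ a ∈ classF b A ζ, a = (b : ℤ) * ((a - digZ b ζ) / b) + digZ b ζ) := by
  have hctr : ∀ a ∈ classF b A ζ, ctr b a = digZ b ζ := by
    intro a ha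
    rw [ctr_eq_digZ b hb0 a, (Finset.mem_filter.1 ha).2]
  have hstep : ∀ a ∈ classF b A ζ,
      DigM b (r - (if ζ = 0 then 0 else 1)) M ((a - digZ b ζ) / b)
      ∧ (ζ ≠ 0 → 1 ≤ r)
      ∧ a = (b : ℤ) * ((a - digZ b ζ) / b) + digZ b ζ := by
    intro a ha
    have hAmem : a ∈ A := Finset.mem_filter.1 ha |>.1
    have h := DigM_step hb0 (hA a hAmem)
    rw [hctr a ha] at h
    have hiff : (digZ b ζ = 0) ↔ (ζ = 0) := by
      constructor
      · intro h0
        by_contra hζ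
        exact digZ_ne_zero b hb0 hζ h0
      · intro h0
        rw [h0]; exact digZ_zero b hb0
    refine ⟨?_, fun hζ => h.2.1 (fun h0 => hζ (hiff.1 h0)), h.2.2⟩
    convert h.1 using 2
    by_cases hζ : ζ = 0
    · rw [if_pos hζ, if_pos (hiff.2 hζ)]
    · rw [if_neg hζ, if_neg (fun h0 => hζ (hiff.1 h0))]
  refine ⟨(classF b A ζ).image (fun a => (a - digZ b ζ) / b), ?_, ?_, ?_, ?_, ?_⟩
  · refine Finset.card_image_of_injOn ?_
    intro a ha a' ha' himg
    dsimp only at himg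
    have h1 := (hstep a ha).2.2
    have h2 := (hstep a' ha').2.2
    rw [h1, h2, himg]
  · intro a' ha'
    obtain ⟨a, ha, rfl⟩ := Finset.mem_image.1 ha'
    exact (hstep a ha).1
  · rintro ⟨a, ha⟩ hζ
    exact (hstep a ha).2.1 hζ
  · intro a ha
    exact Finset.mem_image_of_mem _ ha
  · intro a ha
    exact (hstep a ha).2.2

lemma card_le_one_sqrt (A : Finset ℤ) (h : A.card ≤ 1) : (A.card : ℝ) ≤ Real.sqrt A.card := by
  interval_cases h : A.card <;> simp

lemma base_case (b : ℕ) (hb : 3 ≤ b) (r₁ r₂ r₃ r₄ : ℕ) (A₁ A₂ A₃ A₄ : Finset ℤ) (e : ℤ)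
    (h1 : ∀ a ∈ A₁, DigM b r₁ 0 a) (h2 : ∀ a ∈ A₂, DigM b r₂ 0 a)
    (h3 : ∀ a ∈ A₃, DigM b r₃ 0 a) (h4 : ∀ a ∈ A₄, DigM b r₄ 0 a) :
    (((((A₁ ×ˢ A₂) ×ˢ (A₃ ×ˢ A₄)).filter
        (fun p : (ℤ × ℤ) × (ℤ × ℤ) => p.1.1 + p.1.2 = p.2.1 + p.2.2 + e)).card : ℝ) ≤
      (2 * (b : ℝ)) ^ (r₁ + r₂ + r₃ + r₄) *
        Real.sqrt A₁.card * Real.sqrt A₂.card * Real.sqrt A₃.card * Real.sqrt A₄.card) := by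
  have hcard : ∀ (A : Finset ℤ) (r : ℕ), (∀ a ∈ A, DigM b r 0 a) → A.card ≤ 1 := by
    intro A r hA
    have hsub : A ⊆ {0} := fun a ha => Finset.mem_singleton.2 (DigM_zero (hA a ha))
    calc A.card ≤ ({0} : Finset ℤ).card := Finset.card_le_card hsub
      _ = 1 := Finset.card_singleton 0
  have hc1 := hcard A₁ r₁ h1
  have hc2 := hcard A₂ r₂ h2
  have hc3 := hcard A₃ r₃ h3
  have hc4 := hcard A₄ r₄ h4
  have hcnt : (((A₁ ×ˢ A₂) ×ˢ (A₃ ×ˢ A₄)).filter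
      (fun p : (ℤ × ℤ) × (ℤ × ℤ) => p.1.1 + p.1.2 = p.2.1 + p.2.2 + e)).card
      ≤ A₁.card * A₂.card * (A₃.card * A₄.card) := by
    calc (((A₁ ×ˢ A₂) ×ˢ (A₃ ×ˢ A₄)).filter
        (fun p : (ℤ × ℤ) × (ℤ × ℤ) => p.1.1 + p.1.2 = p.2.1 + p.2.2 + e)).card
        ≤ ((A₁ ×ˢ A₂) ×ˢ (A₃ ×ˢ A₄)).card := Finset.card_filter_le _ _
      _ = A₁.card * A₂.card * (A₃.card * A₄.card) := by
          rw [Finset.card_product, Finset.card_product, Finset.card_product]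
  have hreal : ((((A₁ ×ˢ A₂) ×ˢ (A₃ ×ˢ A₄)).filter
      (fun p : (ℤ × ℤ) × (ℤ × ℤ) => p.1.1 + p.1.2 = p.2.1 + p.2.2 + e)).card : ℝ)
      ≤ (A₁.card : ℝ) * A₂.card * (A₃.card * A₄.card) := by exact_mod_cast hcnt
  have hsq : (A₁.card : ℝ) * A₂.card * (A₃.card * A₄.card)
      ≤ Real.sqrt A₁.card * Real.sqrt A₂.card * (Real.sqrt A₃.card * Real.sqrt A₄.card) := by
    have s1 := card_le_one_sqrt A₁ hc1
    have s2 := card_le_one_sqrt A₂ hc2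
    have s3 := card_le_one_sqrt A₃ hc3
    have s4 := card_le_one_sqrt A₄ hc4
    have m1 : (A₁.card : ℝ) * A₂.card ≤ Real.sqrt A₁.card * Real.sqrt A₂.card :=
      mul_le_mul s1 s2 (by positivity) (Real.sqrt_nonneg _)
    have m2 : (A₃.card : ℝ) * A₄.card ≤ Real.sqrt A₃.card * Real.sqrt A₄.card :=
      mul_le_mul s3 s4 (by positivity) (Real.sqrt_nonneg _)
    exact mul_le_mul m1 m2 (by positivity) (by positivity)
  have hone : (1 : ℝ) ≤ (2 * (b : ℝ)) ^ (r₁ + r₂ + r₃ + r₄) := by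
    have : (1 : ℝ) ≤ 2 * (b : ℝ) := by
      have : (3 : ℝ) ≤ (b : ℝ) := by exact_mod_cast hb
      linarith
    exact one_le_pow₀ this
  calc ((((A₁ ×ˢ A₂) ×ˢ (A₃ ×ˢ A₄)).filter
      (fun p : (ℤ × ℤ) × (ℤ × ℤ) => p.1.1 + p.1.2 = p.2.1 + p.2.2 + e)).card : ℝ)
      ≤ Real.sqrt A₁.card * Real.sqrt A₂.card * (Real.sqrt A₃.card * Real.sqrt A₄.card) :=
        le_trans hreal hsq
    _ ≤ (2 * (b : ℝ)) ^ (r₁ + r₂ + r₃ + r₄) *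
        Real.sqrt A₁.card * Real.sqrt A₂.card * Real.sqrt A₃.card * Real.sqrt A₄.card := by
        nlinarith [Real.sqrt_nonneg (A₁.card : ℝ), Real.sqrt_nonneg (A₂.card : ℝ),
          Real.sqrt_nonneg (A₃.card : ℝ), Real.sqrt_nonneg (A₄.card : ℝ), hone,
          mul_nonneg (mul_nonneg (Real.sqrt_nonneg ((A₁.card : ℕ) : ℝ)) (Real.sqrt_nonneg ((A₂.card : ℕ) : ℝ)))
            (mul_nonneg (Real.sqrt_nonneg ((A₃.card : ℕ) : ℝ)) (Real.sqrt_nonneg ((A₄.card : ℕ) : ℝ)))]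

set_option maxHeartbeats 2000000 in
lemma main_induction (b : ℕ) (hb : 3 ≤ b) (N : ℕ) :
    ∀ (r₁ r₂ r₃ r₄ M : ℕ) (A₁ A₂ A₃ A₄ : Finset ℤ) (e : ℤ),
    r₁ + r₂ + r₃ + r₄ + M ≤ N →
    (∀ a ∈ A₁, DigM b r₁ M a) → (∀ a ∈ A₂, DigM b r₂ M a) →
    (∀ a ∈ A₃, DigM b r₃ M a) → (∀ a ∈ A₄, DigM b r₄ M a) →
    |e| < (b : ℤ) →
    (((((A₁ ×ˢ A₂) ×ˢ (A₃ ×ˢ A₄)).filter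
        (fun p : (ℤ × ℤ) × (ℤ × ℤ) => p.1.1 + p.1.2 = p.2.1 + p.2.2 + e)).card : ℝ) ≤
      (2 * (b : ℝ)) ^ (r₁ + r₂ + r₃ + r₄) *
        Real.sqrt A₁.card * Real.sqrt A₂.card * Real.sqrt A₃.card * Real.sqrt A₄.card) := by
  haveI : NeZero b := ⟨by omega⟩
  have hb0 : 0 < b := by omega
  have hb0' : (0 : ℤ) < (b : ℤ) := by exact_mod_cast hb0
  have hbR : (3 : ℝ) ≤ (b : ℝ) := by exact_mod_cast hb
  induction N with
  | zero =>
    intro r₁ r₂ r₃ r₄ M A₁ A₂ A₃ A₄ e hle h1 h2 h3 h4 he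
    have hM : M = 0 := by omega
    subst hM
    exact base_case b hb r₁ r₂ r₃ r₄ A₁ A₂ A₃ A₄ e h1 h2 h3 h4
  | succ N ih =>
    intro r₁ r₂ r₃ r₄ M A₁ A₂ A₃ A₄ e hle h1 h2 h3 h4 he
    match M, hle, h1, h2, h3, h4 with
    | 0, hle, h1, h2, h3, h4 =>
      exact base_case b hb r₁ r₂ r₃ r₄ A₁ A₂ A₃ A₄ e h1 h2 h3 h4
    | M' + 1, hle, h1, h2, h3, h4 =>
      -- setup
      set R := r₁ + r₂ + r₃ + r₄ with hR
      set u₁ : ZMod b → ℝ := fun ζ => Real.sqrt ((classF b A₁ ζ).card) with hu₁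
      set u₂ : ZMod b → ℝ := fun ζ => Real.sqrt ((classF b A₂ ζ).card) with hu₂
      set u₃ : ZMod b → ℝ := fun ζ => Real.sqrt ((classF b A₃ ζ).card) with hu₃
      set u₄ : ZMod b → ℝ := fun ζ => Real.sqrt ((classF b A₄ ζ).card) with hu₄
      have hu1n : ∀ ζ, 0 ≤ u₁ ζ := fun ζ => Real.sqrt_nonneg _
      have hu2n : ∀ ζ, 0 ≤ u₂ ζ := fun ζ => Real.sqrt_nonneg _
      have hu3n : ∀ ζ, 0 ≤ u₃ ζ := fun ζ => Real.sqrt_nonneg _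
      have hu4n : ∀ ζ, 0 ≤ u₄ ζ := fun ζ => Real.sqrt_nonneg _
      have husum : ∀ (A : Finset ℤ), ∑ ζ : ZMod b, ((classF b A ζ).card : ℝ) = (A.card : ℝ) := by
        intro A
        have h := Finset.card_eq_sum_card_fiberwise
          (s := A) (t := Finset.univ) (f := fun a : ℤ => (a : ZMod b))
          (fun x _ => Finset.mem_univ _)
        rw [h]
        push_cast
        rfl
      have hQ1 : ∑ ζ, u₁ ζ ^ 2 = (A₁.card : ℝ) := by
        rw [← husum A₁]
        exact Finset.sum_congr rfl fun ζ _ => Real.sq_sqrt (by positivity)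
      have hQ2 : ∑ ζ, u₂ ζ ^ 2 = (A₂.card : ℝ) := by
        rw [← husum A₂]
        exact Finset.sum_congr rfl fun ζ _ => Real.sq_sqrt (by positivity)
      have hQ3 : ∑ ζ, u₃ ζ ^ 2 = (A₃.card : ℝ) := by
        rw [← husum A₃]
        exact Finset.sum_congr rfl fun ζ _ => Real.sq_sqrt (by positivity)
      have hQ4 : ∑ ζ, u₄ ζ ^ 2 = (A₄.card : ℝ) := by
        rw [← husum A₄]
        exact Finset.sum_congr rfl fun ζ _ => Real.sq_sqrt (by positivity)
      set s := ((A₁ ×ˢ A₂) ×ˢ (A₃ ×ˢ A₄)).filter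
        (fun p : (ℤ × ℤ) × (ℤ × ℤ) => p.1.1 + p.1.2 = p.2.1 + p.2.2 + e) with hs
      set φ : (ℤ × ℤ) × (ℤ × ℤ) → (ZMod b × ZMod b) × (ZMod b × ZMod b) :=
        fun p => (((p.1.1 : ZMod b), (p.1.2 : ZMod b)), ((p.2.1 : ZMod b), (p.2.2 : ZMod b))) with hφ
      have hfib : s.card = ∑ z ∈ (Finset.univ : Finset ((ZMod b × ZMod b) × (ZMod b × ZMod b))),
          (s.filter (fun p => φ p = z)).card :=
        Finset.card_eq_sum_card_fiberwise (fun x _ => Finset.mem_univ _)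
      -- the per-fiber bound
      have hfiber : ∀ z : (ZMod b × ZMod b) × (ZMod b × ZMod b),
          ((s.filter (fun p => φ p = z)).card : ℝ)
            ≤ (if z.1.1 + z.1.2 = z.2.1 + z.2.2 + (e : ZMod b)
                then (2 * (b : ℝ)) ^ R
                  * (vv b u₁ z.1.1 * vv b u₂ z.1.2 * (vv b u₃ z.2.1 * vv b u₄ z.2.2))
                else 0) := by
        rintro ⟨⟨ζ₁, ζ₂⟩, ζ₃, ζ₄⟩
        -- membership extraction
        have hmem : ∀ p ∈ s.filter (fun p => φ p = ((ζ₁, ζ₂), (ζ₃, ζ₄))),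
            p.1.1 ∈ classF b A₁ ζ₁ ∧ p.1.2 ∈ classF b A₂ ζ₂ ∧ p.2.1 ∈ classF b A₃ ζ₃
              ∧ p.2.2 ∈ classF b A₄ ζ₄ ∧ p.1.1 + p.1.2 = p.2.1 + p.2.2 + e := by
          intro p hp
          obtain ⟨hps, hpz⟩ := Finset.mem_filter.1 hp
          obtain ⟨hpprod, hpeq⟩ := Finset.mem_filter.1 hps
          obtain ⟨hp12, hp34⟩ := Finset.mem_product.1 hpprod
          obtain ⟨hpa1, hpa2⟩ := Finset.mem_product.1 hp12
          obtain ⟨hpa3, hpa4⟩ := Finset.mem_product.1 hp34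
          rw [hφ, Prod.ext_iff, Prod.ext_iff, Prod.ext_iff] at hpz
          obtain ⟨⟨hz1, hz2⟩, hz3, hz4⟩ := hpz
          exact ⟨Finset.mem_filter.2 ⟨hpa1, hz1⟩, Finset.mem_filter.2 ⟨hpa2, hz2⟩,
            Finset.mem_filter.2 ⟨hpa3, hz3⟩, Finset.mem_filter.2 ⟨hpa4, hz4⟩, hpeq⟩
        by_cases hcon : ζ₁ + ζ₂ = ζ₃ + ζ₄ + (e : ZMod b)
        swap
        · rw [if_neg hcon]
          have hempty : s.filter (fun p => φ p = ((ζ₁, ζ₂), (ζ₃, ζ₄))) = ∅ := by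
            refine Finset.eq_empty_of_forall_notMem fun p hp => ?_
            obtain ⟨hc1, hc2, hc3, hc4, heq⟩ := hmem p hp
            apply hcon
            have hcast := congrArg (fun t : ℤ => (t : ZMod b)) heq
            push_cast at hcast
            rw [(Finset.mem_filter.1 hc1).2, (Finset.mem_filter.1 hc2).2,
              (Finset.mem_filter.1 hc3).2, (Finset.mem_filter.1 hc4).2] at hcast
            exact hcast
          rw [hempty]
          simp
        · rw [if_pos hcon]
          -- digits
          obtain ⟨B₁, hB1card, hB1dig, hB1r, hB1mem, hB1rec⟩ := class_step b hb0 A₁ r₁ M' h1 ζ₁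
          obtain ⟨B₂, hB2card, hB2dig, hB2r, hB2mem, hB2rec⟩ := class_step b hb0 A₂ r₂ M' h2 ζ₂
          obtain ⟨B₃, hB3card, hB3dig, hB3r, hB3mem, hB3rec⟩ := class_step b hb0 A₃ r₃ M' h3 ζ₃
          obtain ⟨B₄, hB4card, hB4dig, hB4r, hB4mem, hB4rec⟩ := class_step b hb0 A₄ r₄ M' h4 ζ₄
          by_cases hNE : (classF b A₁ ζ₁).Nonempty ∧ (classF b A₂ ζ₂).Nonempty
              ∧ (classF b A₃ ζ₃).Nonempty ∧ (classF b A₄ ζ₄).Nonempty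
          swap
          · -- some class empty ⇒ fiber empty
            have hempty : s.filter (fun p => φ p = ((ζ₁, ζ₂), (ζ₃, ζ₄))) = ∅ := by
              refine Finset.eq_empty_of_forall_notMem fun p hp => ?_
              obtain ⟨hc1, hc2, hc3, hc4, _⟩ := hmem p hp
              exact hNE ⟨⟨_, hc1⟩, ⟨_, hc2⟩, ⟨_, hc3⟩, ⟨_, hc4⟩⟩
            rw [hempty]
            simp only [Finset.card_empty, Nat.cast_zero]
            have hv1 := vv_nonneg b u₁ hu1n ζ₁
            have hv2 := vv_nonneg b u₂ hu2n ζ₂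
            have hv3 := vv_nonneg b u₃ hu3n ζ₃
            have hv4 := vv_nonneg b u₄ hu4n ζ₄
            positivity
          obtain ⟨hne1, hne2, hne3, hne4⟩ := hNE
          -- shifted e
          set d₁ := digZ b ζ₁ with hd₁
          set d₂ := digZ b ζ₂ with hd₂
          set d₃ := digZ b ζ₃ with hd₃
          set d₄ := digZ b ζ₄ with hd₄
          have hd_dvd : (b : ℤ) ∣ (e + d₃ + d₄ - d₁ - d₂) := by
            refine (ZMod.intCast_zmod_eq_zero_iff_dvd _ b).mp ?_
            push_cast
            rw [hd₁, hd₂, hd₃, hd₄, digZ_cast, digZ_cast, digZ_cast, digZ_cast]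
            linear_combination -hcon
          set e' := (e + d₃ + d₄ - d₁ - d₂) / (b : ℤ) with he'def
          have hbe' : (b : ℤ) * e' = e + d₃ + d₄ - d₁ - d₂ := Int.mul_ediv_cancel' hd_dvd
          have he' : |e'| < (b : ℤ) := by
            have hab := abs_lt.mp he
            have hb1 := digZ_bound b hb0 ζ₁
            have hb2 := digZ_bound b hb0 ζ₂
            have hb3 := digZ_bound b hb0 ζ₃
            have hb4 := digZ_bound b hb0 ζ₄
            rw [abs_lt]
            have hup : (b : ℤ) * e' < 3 * b := by omega
            have hlo : -(3 * (b : ℤ)) < (b : ℤ) * e' := by omega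
            have hup' : e' < 3 := by
              rw [show (3 : ℤ) * b = b * 3 by ring] at hup
              exact lt_of_mul_lt_mul_left hup hb0'.le
            have hlo' : -3 < e' := by
              rw [show -(3 * (b : ℤ)) = b * (-3) by ring] at hlo
              exact lt_of_mul_lt_mul_left hlo hb0'.le
            omega
          -- indicator exponents
          set i₁ : ℕ := if ζ₁ = 0 then 0 else 1 with hi₁
          set i₂ : ℕ := if ζ₂ = 0 then 0 else 1 with hi₂
          set i₃ : ℕ := if ζ₃ = 0 then 0 else 1 with hi₃
          set i₄ : ℕ := if ζ₄ = 0 then 0 else 1 with hi₄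
          have hir1 : i₁ ≤ r₁ := by
            rw [hi₁]; split_ifs with h
            · omega
            · exact hB1r hne1 h
          have hir2 : i₂ ≤ r₂ := by
            rw [hi₂]; split_ifs with h
            · omega
            · exact hB2r hne2 h
          have hir3 : i₃ ≤ r₃ := by
            rw [hi₃]; split_ifs with h
            · omega
            · exact hB3r hne3 h
          have hir4 : i₄ ≤ r₄ := by
            rw [hi₄]; split_ifs with h
            · omega
            · exact hB4r hne4 h
          -- IH
          have hIH := ih (r₁ - i₁) (r₂ - i₂) (r₃ - i₃) (r₄ - i₄) M' B₁ B₂ B₃ B₄ e'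
            (by omega) hB1dig hB2dig hB3dig hB4dig he'
          -- injection into the B-problem
          have hinj : (s.filter (fun p => φ p = ((ζ₁, ζ₂), (ζ₃, ζ₄)))).card
              ≤ (((B₁ ×ˢ B₂) ×ˢ (B₃ ×ˢ B₄)).filter
                  (fun p : (ℤ × ℤ) × (ℤ × ℤ) => p.1.1 + p.1.2 = p.2.1 + p.2.2 + e')).card := by
            refine Finset.card_le_card_of_injOn
              (fun p => (((p.1.1 - d₁) / b, (p.1.2 - d₂) / b),
                ((p.2.1 - d₃) / b, (p.2.2 - d₄) / b))) ?_ ?_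
            · intro p hp
              obtain ⟨hc1, hc2, hc3, hc4, heq⟩ := hmem p hp
              refine Finset.mem_filter.2 ⟨?_, ?_⟩
              · refine Finset.mem_product.2 ⟨Finset.mem_product.2 ⟨?_, ?_⟩,
                  Finset.mem_product.2 ⟨?_, ?_⟩⟩
                · exact hB1mem _ hc1
                · exact hB2mem _ hc2
                · exact hB3mem _ hc3
                · exact hB4mem _ hc4
              · have e1 := hB1rec _ hc1
                have e2 := hB2rec _ hc2
                have e3 := hB3rec _ hc3
                have e4 := hB4rec _ hc4
                dsimp only
                apply mul_left_cancel₀ (show (b : ℤ) ≠ 0 from ne_of_gt hb0')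
                have heq2 : ((b:ℤ) * ((p.1.1 - d₁)/b) + d₁) + ((b:ℤ) * ((p.1.2 - d₂)/b) + d₂)
                    = ((b:ℤ) * ((p.2.1 - d₃)/b) + d₃) + ((b:ℤ) * ((p.2.2 - d₄)/b) + d₄) + e := by
                  rw [← e1, ← e2, ← e3, ← e4]; exact heq
                linear_combination heq2 - hbe'
            · intro p hp p' hp' himg
              obtain ⟨hc1, hc2, hc3, hc4, _⟩ := hmem p hp
              obtain ⟨hc1', hc2', hc3', hc4', _⟩ := hmem p' hp'
              simp only [Prod.mk.injEq] at himg
              obtain ⟨⟨g1, g2⟩, g3, g4⟩ := himg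
              have e1 := hB1rec _ hc1
              have e2 := hB2rec _ hc2
              have e3 := hB3rec _ hc3
              have e4 := hB4rec _ hc4
              have e1' := hB1rec _ hc1'
              have e2' := hB2rec _ hc2'
              have e3' := hB3rec _ hc3'
              have e4' := hB4rec _ hc4'
              have q1 : p.1.1 = p'.1.1 := by rw [e1, e1', g1]
              have q2 : p.1.2 = p'.1.2 := by rw [e2, e2', g2]
              have q3 : p.2.1 = p'.2.1 := by rw [e3, e3', g3]
              have q4 : p.2.2 = p'.2.2 := by rw [e4, e4', g4]
              exact Prod.ext (Prod.ext q1 q2) (Prod.ext q3 q4)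
          -- algebra to the vv-form
          have hBu1 : Real.sqrt (B₁.card : ℝ) = vv b u₁ ζ₁ * (2 * (b : ℝ)) ^ i₁ := by
            rw [hB1card]
            show u₁ ζ₁ = vv b u₁ ζ₁ * (2 * (b : ℝ)) ^ i₁
            rw [hi₁]
            by_cases h : ζ₁ = 0
            · rw [if_pos h, pow_zero, mul_one, h]
              exact (if_pos rfl).symm
            · rw [if_neg h, pow_one, show vv b u₁ ζ₁ = u₁ ζ₁ / (2 * b) from if_neg h]
              field_simp
          have hBu2 : Real.sqrt (B₂.card : ℝ) = vv b u₂ ζ₂ * (2 * (b : ℝ)) ^ i₂ := by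
            rw [hB2card]
            show u₂ ζ₂ = vv b u₂ ζ₂ * (2 * (b : ℝ)) ^ i₂
            rw [hi₂]
            by_cases h : ζ₂ = 0
            · rw [if_pos h, pow_zero, mul_one, h]
              exact (if_pos rfl).symm
            · rw [if_neg h, pow_one, show vv b u₂ ζ₂ = u₂ ζ₂ / (2 * b) from if_neg h]
              field_simp
          have hBu3 : Real.sqrt (B₃.card : ℝ) = vv b u₃ ζ₃ * (2 * (b : ℝ)) ^ i₃ := by
            rw [hB3card]
            show u₃ ζ₃ = vv b u₃ ζ₃ * (2 * (b : ℝ)) ^ i₃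
            rw [hi₃]
            by_cases h : ζ₃ = 0
            · rw [if_pos h, pow_zero, mul_one, h]
              exact (if_pos rfl).symm
            · rw [if_neg h, pow_one, show vv b u₃ ζ₃ = u₃ ζ₃ / (2 * b) from if_neg h]
              field_simp
          have hBu4 : Real.sqrt (B₄.card : ℝ) = vv b u₄ ζ₄ * (2 * (b : ℝ)) ^ i₄ := by
            rw [hB4card]
            show u₄ ζ₄ = vv b u₄ ζ₄ * (2 * (b : ℝ)) ^ i₄
            rw [hi₄]
            by_cases h : ζ₄ = 0
            · rw [if_pos h, pow_zero, mul_one, h]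
              exact (if_pos rfl).symm
            · rw [if_neg h, pow_one, show vv b u₄ ζ₄ = u₄ ζ₄ / (2 * b) from if_neg h]
              field_simp
          have hpowmerge : (2 * (b : ℝ)) ^ ((r₁ - i₁) + (r₂ - i₂) + (r₃ - i₃) + (r₄ - i₄))
              * ((2 * (b : ℝ)) ^ i₁ * (2 * (b : ℝ)) ^ i₂ * ((2 * (b : ℝ)) ^ i₃ * (2 * (b : ℝ)) ^ i₄))
              = (2 * (b : ℝ)) ^ R := by
            rw [← pow_add, ← pow_add, ← pow_add, ← pow_add]
            congr 1
            omega
          calc ((s.filter (fun p => φ p = ((ζ₁, ζ₂), (ζ₃, ζ₄)))).card : ℝ)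
              ≤ ((((B₁ ×ˢ B₂) ×ˢ (B₃ ×ˢ B₄)).filter
                  (fun p : (ℤ × ℤ) × (ℤ × ℤ) => p.1.1 + p.1.2 = p.2.1 + p.2.2 + e')).card : ℝ) := by
                exact_mod_cast hinj
            _ ≤ (2 * (b : ℝ)) ^ ((r₁ - i₁) + (r₂ - i₂) + (r₃ - i₃) + (r₄ - i₄)) *
                Real.sqrt B₁.card * Real.sqrt B₂.card * Real.sqrt B₃.card * Real.sqrt B₄.card := hIH
            _ = (2 * (b : ℝ)) ^ R
                  * (vv b u₁ ζ₁ * vv b u₂ ζ₂ * (vv b u₃ ζ₃ * vv b u₄ ζ₄)) := by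
                rw [hBu1, hBu2, hBu3, hBu4, ← hpowmerge]
                ring
      -- aggregate
      have htotal : (s.card : ℝ)
          ≤ (2 * (b : ℝ)) ^ R * ∑ ζ₃, ∑ ζ₄, (vv b u₃ ζ₃ * vv b u₄ ζ₄)
              * Ff (vv b u₁) (vv b u₂) (ζ₃ + ζ₄ + (e : ZMod b)) := by
        calc (s.card : ℝ)
            = ∑ z : (ZMod b × ZMod b) × (ZMod b × ZMod b),
                ((s.filter (fun p => φ p = z)).card : ℝ) := by
              rw [hfib]; push_cast; rfl
          _ ≤ ∑ z : (ZMod b × ZMod b) × (ZMod b × ZMod b),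
                (if z.1.1 + z.1.2 = z.2.1 + z.2.2 + (e : ZMod b)
                  then (2 * (b : ℝ)) ^ R
                    * (vv b u₁ z.1.1 * vv b u₂ z.1.2 * (vv b u₃ z.2.1 * vv b u₄ z.2.2))
                  else 0) := Finset.sum_le_sum fun z _ => hfiber z
          _ = (2 * (b : ℝ)) ^ R * ∑ z : (ZMod b × ZMod b) × (ZMod b × ZMod b),
                (if z.1.1 + z.1.2 = z.2.1 + z.2.2 + (e : ZMod b)
                  then vv b u₁ z.1.1 * vv b u₂ z.1.2 * (vv b u₃ z.2.1 * vv b u₄ z.2.2)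
                  else 0) := by
              rw [Finset.mul_sum]
              refine Finset.sum_congr rfl fun z _ => ?_
              split_ifs
              · rfl
              · rw [mul_zero]
          _ = (2 * (b : ℝ)) ^ R * ∑ ζ₃, ∑ ζ₄, (vv b u₃ ζ₃ * vv b u₄ ζ₄)
                * Ff (vv b u₁) (vv b u₂) (ζ₃ + ζ₄ + (e : ZMod b)) := by
              rw [rearrange]
      -- key inequality
      have hkey := key_ineq b hb (le_of_eq (ZMod.card b)) u₁ u₂ u₃ u₄ hu1n hu2n hu3n hu4n
        (e : ZMod b)
      rw [hQ1, hQ2, hQ3, hQ4] at hkey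
      calc (s.card : ℝ)
          ≤ (2 * (b : ℝ)) ^ R * ∑ ζ₃, ∑ ζ₄, (vv b u₃ ζ₃ * vv b u₄ ζ₄)
              * Ff (vv b u₁) (vv b u₂) (ζ₃ + ζ₄ + (e : ZMod b)) := htotal
        _ ≤ (2 * (b : ℝ)) ^ R * (Real.sqrt A₁.card * Real.sqrt A₂.card
              * Real.sqrt A₃.card * Real.sqrt A₄.card) := by
            refine mul_le_mul_of_nonneg_left hkey (by positivity)
        _ = (2 * (b : ℝ)) ^ R * Real.sqrt A₁.card * Real.sqrt A₂.card
              * Real.sqrt A₃.card * Real.sqrt A₄.card := by ring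

lemma atMost_to_DigM (b r : ℕ) (hb : 0 < b) (A : Finset ℤ)
    (h : ∀ a ∈ A, AtMostCentredDigits b r a) :
    ∃ M : ℕ, ∀ a ∈ A, DigM b r M a := by
  classical
  refine ⟨A.sup (fun a => if h' : AtMostCentredDigits b r a then h'.choose else 0), ?_⟩
  intro a ha
  have h' : AtMostCentredDigits b r a := h a ha
  have hM := Finset.le_sup
    (f := fun a => if h'' : AtMostCentredDigits b r a then h''.choose else 0) ha
  simp only [dif_pos h'] at hM
  have hd : DigM b r h'.choose a := h'.choose_spec
  exact DigM_mono hb hM hd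

theorem quadruple_count_digital_hamming (b : ℕ) (hb : 3 ≤ b)
    (r₁ r₂ r₃ r₄ : ℕ) (A₁ A₂ A₃ A₄ : Finset ℤ)
    (h₁ : ∀ a ∈ A₁, AtMostCentredDigits b r₁ a)
    (h₂ : ∀ a ∈ A₂, AtMostCentredDigits b r₂ a)
    (h₃ : ∀ a ∈ A₃, AtMostCentredDigits b r₃ a)
    (h₄ : ∀ a ∈ A₄, AtMostCentredDigits b r₄ a)
    (e : ℤ) (he : |e| < (b : ℤ)) :
    (((((A₁ ×ˢ A₂) ×ˢ (A₃ ×ˢ A₄)).filter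
        (fun p => p.1.1 + p.1.2 = p.2.1 + p.2.2 + e)).card : ℝ) ≤
      (2 * (b : ℝ)) ^ (r₁ + r₂ + r₃ + r₄) *
        Real.sqrt A₁.card * Real.sqrt A₂.card * Real.sqrt A₃.card * Real.sqrt A₄.card) := by
  have hb0 : 0 < b := by omega
  obtain ⟨M₁, hM₁⟩ := atMost_to_DigM b r₁ hb0 A₁ h₁
  obtain ⟨M₂, hM₂⟩ := atMost_to_DigM b r₂ hb0 A₂ h₂
  obtain ⟨M₃, hM₃⟩ := atMost_to_DigM b r₃ hb0 A₃ h₃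
  obtain ⟨M₄, hM₄⟩ := atMost_to_DigM b r₄ hb0 A₄ h₄
  set M := max (max M₁ M₂) (max M₃ M₄) with hM
  have g₁ : ∀ a ∈ A₁, DigM b r₁ M a := fun a ha => DigM_mono hb0 (by omega) (hM₁ a ha)
  have g₂ : ∀ a ∈ A₂, DigM b r₂ M a := fun a ha => DigM_mono hb0 (by omega) (hM₂ a ha)
  have g₃ : ∀ a ∈ A₃, DigM b r₃ M a := fun a ha => DigM_mono hb0 (by omega) (hM₃ a ha)
  have g₄ : ∀ a ∈ A₄, DigM b r₄ M a := fun a ha => DigM_mono hb0 (by omega) (hM₄ a ha)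
  exact main_induction b hb (r₁ + r₂ + r₃ + r₄ + M) r₁ r₂ r₃ r₄ M A₁ A₂ A₃ A₄ e
    (le_refl _) g₁ g₂ g₃ g₄ he
end

section
/- Let X ≥ 1 be real and suppose that I ⊆ {0, 1, ..., ⌈X⌉ − 1} ∩ [0, X) is a discrete interval of consecutive integers of length L ≥ 2. Set η = L/X and let K ≥ 4 be a real parameter. Then the union ⋃_{1 ≤ j ≤ ⌈2K/η²⌉} jI, where jI denotes the j-fold sumset I + ⋯ + I, contains every integer m with (4/η)X ≤ m ≤ (K/η)X. -/
open scoped BigOperators Pointwise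

lemma key_sumset (x₀ b : ℤ) (hxb : x₀ ≤ b) :
    ∀ j : ℕ, ∀ m : ℤ, ((j : ℤ) + 1) * x₀ ≤ m → m ≤ ((j : ℤ) + 1) * b →
      m ∈ ∑ _i ∈ Finset.range (j + 1), Finset.Icc x₀ b := by
  intro j
  induction j with
  | zero =>
      intro m h1 h2
      rw [zero_add, Finset.sum_range_one, Finset.mem_Icc]
      push_cast at h1 h2
      constructor <;> linarith
  | succ j ih =>
      intro m h1 h2
      have hj0 : (0:ℤ) ≤ (j:ℤ) + 1 := by positivity
      have hAB : ((j : ℤ) + 1) * x₀ ≤ ((j : ℤ) + 1) * b :=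
        mul_le_mul_of_nonneg_left hxb hj0
      have h1' : ((j : ℤ) + 1) * x₀ + x₀ ≤ m := by push_cast at h1; linarith
      have h2' : m ≤ ((j : ℤ) + 1) * b + b := by push_cast at h2; linarith
      set t := min b (m - ((j : ℤ) + 1) * x₀) with ht
      have htx : x₀ ≤ t := by omega
      have htb : t ≤ b := by omega
      have hmA : ((j : ℤ) + 1) * x₀ ≤ m - t := by omega
      have hmB : m - t ≤ ((j : ℤ) + 1) * b := by omega
      have hmem := ih (m - t) hmA hmB
      have hmt : m = (m - t) + t := by ring
      rw [hmt, Finset.sum_range_succ]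
      exact Finset.add_mem_add hmem (Finset.mem_Icc.2 ⟨htx, htb⟩)


set_option maxHeartbeats 1000000 in
/-- Repeated addition of a discrete interval `I ⊆ [0, X)` of length `L ≥ 2`:
with `η = L/X` and `K ≥ 4`, the union `⋃_{1 ≤ j ≤ ⌈2K/η²⌉} jI` of iterated sumsets
contains every integer `m` with `(4/η)X ≤ m ≤ (K/η)X`. -/
theorem interval_sum (X : ℝ) (hX : 1 ≤ X) (L : ℕ) (hL : 2 ≤ L)
    (x₀ : ℤ) (I : Finset ℤ) (hI : I = Finset.Ico x₀ (x₀ + L))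
    (hsub : ∀ m ∈ I, 0 ≤ m ∧ (m : ℝ) < X)
    (η : ℝ) (hη : η = (L : ℝ) / X) (K : ℝ) (hK : 4 ≤ K) :
    ∀ m : ℤ, 4 / η * X ≤ (m : ℝ) → (m : ℝ) ≤ K / η * X →
      ∃ j : ℕ, 1 ≤ j ∧ j ≤ ⌈2 * K / η ^ 2⌉₊ ∧ m ∈ ∑ _i ∈ Finset.range j, I := by
  intro m hm1 hm2
  have hX0 : (0:ℝ) < X := by linarith
  have hL2 : (2:ℝ) ≤ (L:ℝ) := by exact_mod_cast hL
  have hL0 : (0:ℝ) < (L:ℝ) := by linarith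
  have hη0 : 0 < η := by rw [hη]; positivity
  -- rewrite I as an Icc
  have hI' : I = Finset.Icc x₀ (x₀ + (L:ℤ) - 1) := by
    rw [hI]
    ext y
    rw [Finset.mem_Ico, Finset.mem_Icc]
    omega
  obtain ⟨b, hb⟩ : ∃ b : ℤ, b = x₀ + (L:ℤ) - 1 := ⟨_, rfl⟩
  rw [← hb] at hI'
  have hx0mem : x₀ ∈ I := by rw [hI', Finset.mem_Icc]; omega
  have hbmem : b ∈ I := by rw [hI', Finset.mem_Icc]; omega
  obtain ⟨hx0, _⟩ := hsub x₀ hx0mem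
  obtain ⟨hb0, hbX⟩ := hsub b hbmem
  have hxb : x₀ ≤ b := by omega
  have hb1 : (1:ℤ) ≤ b := by omega
  have hbR : (0:ℝ) < (b:ℝ) := by exact_mod_cast hb1.trans_lt' (by norm_num)
  have hx0R : (0:ℝ) ≤ (x₀:ℝ) := by exact_mod_cast hx0
  have hx0bR : (x₀:ℝ) ≤ (b:ℝ) := by exact_mod_cast hxb
  have hbXR : (b:ℝ) < X := hbX
  have hbx0R : (b:ℝ) = (x₀:ℝ) + (L:ℝ) - 1 := by rw [hb]; push_cast; ring
  -- real versions of m bounds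
  have he1 : 4 / η * X = 4 * X ^ 2 / L := by rw [hη]; field_simp
  have he2 : K / η * X = K * X ^ 2 / L := by rw [hη]; field_simp
  rw [he1] at hm1
  rw [he2] at hm2
  have hmL1 : 4 * X ^ 2 ≤ (m:ℝ) * L := by
    rw [div_le_iff₀ hL0] at hm1; linarith
  have hmL2 : (m:ℝ) * L ≤ K * X ^ 2 := by
    rw [le_div_iff₀ hL0] at hm2; linarith
  have hm1z : (1:ℤ) ≤ m := by
    by_contra h
    push_neg at h
    have : (m:ℝ) ≤ 0 := by exact_mod_cast (by omega : m ≤ 0)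
    nlinarith
  have hmR0 : (0:ℝ) < (m:ℝ) := by exact_mod_cast hm1z.trans_lt' (by norm_num)
  -- define q = ceil(m / b) via euclidean division
  obtain ⟨q, hq⟩ : ∃ q : ℤ, q = (m + b - 1) / b := ⟨_, rfl⟩
  have hdiv : q * b + (m + b - 1) % b = m + b - 1 := by
    rw [hq, mul_comm]; exact Int.mul_ediv_add_emod (m + b - 1) b
  have hr0 : 0 ≤ (m + b - 1) % b := Int.emod_nonneg _ (by omega)
  have hrb : (m + b - 1) % b < b := Int.emod_lt_of_pos _ (by omega)
  have hqb1 : m ≤ q * b := by omega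
  have hqb2 : q * b ≤ m + b - 1 := by omega
  have hq1 : 1 ≤ q := by
    by_contra h
    push_neg at h
    have h0 : q ≤ 0 := by omega
    have : q * b ≤ 0 := mul_nonpos_of_nonpos_of_nonneg h0 (by omega)
    omega
  -- real casts
  have hqbR1 : (m:ℝ) ≤ (q:ℝ) * b := by exact_mod_cast hqb1
  have hqbR2 : (q:ℝ) * b ≤ (m:ℝ) + b - 1 := by exact_mod_cast hqb2
  have hq0R : (0:ℝ) ≤ (q:ℝ) := by exact_mod_cast (by omega : (0:ℤ) ≤ q)
  -- key inequality: q * x₀ ≤ m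
  have hqx : q * x₀ ≤ m := by
    have key : ((m:ℝ) + b - 1) * x₀ ≤ (m:ℝ) * b := by
      have ha : (b:ℝ) * x₀ ≤ (b:ℝ) * b := mul_le_mul_of_nonneg_left hx0bR hbR.le
      have hbb : (b:ℝ) * b ≤ X * X := mul_le_mul hbXR.le hbXR.le hbR.le hX0.le
      have h1 : ((b:ℝ) - 1) * x₀ ≤ X ^ 2 := by nlinarith [ha, hbb, hx0R]
      have h2 : 2 * X ^ 2 ≤ (m:ℝ) * ((L:ℝ) - 1) := by
        nlinarith [mul_nonneg hmR0.le (by linarith : (0:ℝ) ≤ (L:ℝ) - 2), hmL1]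
      have hmb' : (m:ℝ) * b = (m:ℝ) * x₀ + (m:ℝ) * L - m := by rw [hbx0R]; ring
      nlinarith [h1, h2, hmb', sq_nonneg X]
    have hR : (q:ℝ) * x₀ ≤ (m:ℝ) := by
      have step : (q:ℝ) * x₀ * b ≤ (m:ℝ) * b := by
        have h3 := mul_le_mul_of_nonneg_right hqbR2 hx0R
        linarith [key, h3]
      exact le_of_mul_le_mul_right step hbR
    exact_mod_cast hR
  -- bound q ≤ ⌈2K/η²⌉₊
  have hc : 2 * K / η ^ 2 = 2 * K * X ^ 2 / L ^ 2 := by rw [hη]; field_simp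
  have hmb : (m:ℝ) / b ≤ 2 * K * X ^ 2 / L ^ 2 := by
    rw [div_le_div_iff₀ hbR (by positivity)]
    have hbL : (L:ℝ) - 1 ≤ (b:ℝ) := by linarith
    have hKX : (0:ℝ) ≤ K * X ^ 2 := by positivity
    have h1 : (m:ℝ) * L * L ≤ K * X ^ 2 * L := mul_le_mul_of_nonneg_right hmL2 hL0.le
    have h2 : K * X ^ 2 * L ≤ K * X ^ 2 * (2 * b) :=
      mul_le_mul_of_nonneg_left (by linarith) hKX
    linarith [h1, h2]
  have hqc : (q:ℝ) < 2 * K / η ^ 2 + 1 := by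
    rw [hc]
    have hq1' : (q:ℝ) - 1 < (m:ℝ) / b := by
      rw [lt_div_iff₀ hbR]; linarith [hqbR2, hbR]
    linarith
  refine ⟨q.toNat, by omega, ?_, ?_⟩
  · by_contra h
    push_neg at h
    have h1 : (⌈2 * K / η ^ 2⌉₊ : ℝ) + 1 ≤ (q.toNat : ℝ) := by exact_mod_cast h
    have h2 : ((q.toNat : ℕ) : ℝ) = (q:ℝ) := by exact_mod_cast Int.toNat_of_nonneg (by omega)
    have := Nat.le_ceil (2 * K / η ^ 2)
    linarith
  · rw [hI']
    have hcast : (((q.toNat - 1 : ℕ)) : ℤ) + 1 = q := by omega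
    have hmem := key_sumset x₀ b hxb (q.toNat - 1) m (by rw [hcast]; exact hqx)
      (by rw [hcast]; exact hqb1)
    have hjj : q.toNat - 1 + 1 = q.toNat := by omega
    rwa [hjj] at hmem
end

section
/- Let ε, U, V be real parameters with 0 < ε ≤ 2^{−44} and U, V ≥ 64/ε. Suppose that Ω ⊆ ℤ² ∩ ([−U, U] × [−V, V]) has size at least εUV. Then at least ε⁷UV integers n with |n| ≤ 2UV may be written as n = u₁v₁ + u₂v₂ with (u₁, v₁), (u₂, v₂) ∈ Ω. -/
open scoped BigOperators

attribute [local instance] Classical.propDecidable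

/-!
Discard the points of `Ω` with `|v| < εV/16` (fewer than `εUV/2` of them) and the pairs of points
whose second coordinates have gcd `d > T = 4096/ε²` (at most about `U²V² ∑_{d > T} d⁻² ≪ ε²U²V²`
of them); at least `ε²U²V²/8` pairs remain. For a remaining pair with second coordinates `(v, w)`,
the solutions of `a v + b w = n` are determined by `a`, which runs through a residue class modulo
`|w| / gcd(v, w) ≥ εV/(16T)`; so every `n` has at most `9V² (2¹⁸ U/(ε³V) + 1)` representations.
Dividing gives `ε⁷UV` values of `n` once `V ≤ U`, which the symmetry `(u, v) ↦ (v, u)` allows.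
-/

open Finset

lemma mem_Icc_neg_floor_floor_of_abs_le {x : ℤ} {W : ℝ} (h : |(x : ℝ)| ≤ W) :
    x ∈ Icc (-⌊W⌋) ⌊W⌋ := by
  rw [abs_le] at h
  rw [mem_Icc, neg_le, Int.le_floor, Int.le_floor]
  push_cast
  constructor <;> linarith

lemma card_Icc_neg_floor_floor_le {W : ℝ} (hW : 0 ≤ W) :
    (#(Icc (-⌊W⌋) ⌊W⌋) : ℝ) ≤ 2 * W + 1 := by
  have hcard := Int.card_Icc_of_le (a := -⌊W⌋) (b := ⌊W⌋)
    (by have := Int.floor_nonneg.mpr hW; omega)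
  have hfloor := Int.floor_le W
  rw [← Int.cast_natCast, hcard]
  push_cast
  linarith

lemma card_le_of_forall_abs_le {s : Finset (ℤ × ℤ)} {A B : ℝ} (hA : 0 ≤ A) (hB : 0 ≤ B)
    (hs : ∀ p ∈ s, |(p.1 : ℝ)| ≤ A ∧ |(p.2 : ℝ)| ≤ B) :
    (#s : ℝ) ≤ (2 * A + 1) * (2 * B + 1) := by
  have hsub : s ⊆ Icc (-⌊A⌋) ⌊A⌋ ×ˢ Icc (-⌊B⌋) ⌊B⌋ := fun p hp =>
    mem_product.mpr ⟨mem_Icc_neg_floor_floor_of_abs_le (hs p hp).1,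
      mem_Icc_neg_floor_floor_of_abs_le (hs p hp).2⟩
  calc (#s : ℝ) ≤ #(Icc (-⌊A⌋) ⌊A⌋ ×ˢ Icc (-⌊B⌋) ⌊B⌋) := by exact_mod_cast card_le_card hsub
    _ = #(Icc (-⌊A⌋) ⌊A⌋) * #(Icc (-⌊B⌋) ⌊B⌋) := by rw [card_product, Nat.cast_mul]
    _ ≤ (2 * A + 1) * (2 * B + 1) :=
      mul_le_mul (card_Icc_neg_floor_floor_le hA) (card_Icc_neg_floor_floor_le hB)
        (by positivity) (by positivity)

lemma card_le_of_forall_modEq_of_abs_sub_le {s : Finset ℤ} {m u₀ : ℤ} {N : ℝ} (hm : 0 < m)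
    (hN : 0 ≤ N) (hs : ∀ u ∈ s, u ≡ u₀ [ZMOD m] ∧ |((u - u₀ : ℤ) : ℝ)| ≤ N) :
    (#s : ℝ) ≤ 2 * N / m + 1 := by
  have hm' : (0 : ℝ) < m := by exact_mod_cast hm
  have hdvd : ∀ u ∈ s, m ∣ u - u₀ := fun u hu => (hs u hu).1.symm.dvd
  have hinj : Set.InjOn (fun u => (u - u₀) / m) s := by
    intro a ha b hb hab
    have := congrArg (· * m) hab
    simp only [Int.ediv_mul_cancel (hdvd a ha), Int.ediv_mul_cancel (hdvd b hb)] at this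
    omega
  have hmaps : s.image (fun u => (u - u₀) / m) ⊆ Icc (-⌊N / m⌋) ⌊N / m⌋ := by
    simp only [subset_iff, mem_image]
    rintro _ ⟨u, hu, rfl⟩
    apply mem_Icc_neg_floor_floor_of_abs_le
    rw [Int.cast_div (hdvd u hu) hm'.ne', abs_div, abs_of_pos hm']
    exact div_le_div_of_nonneg_right (hs u hu).2 hm'.le
  calc (#s : ℝ) = #(s.image fun u => (u - u₀) / m) := by rw [card_image_of_injOn hinj]
    _ ≤ #(Icc (-⌊N / m⌋) ⌊N / m⌋) := by exact_mod_cast card_le_card hmaps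
    _ ≤ 2 * (N / m) + 1 := card_Icc_neg_floor_floor_le (by positivity)
    _ = 2 * N / m + 1 := by ring

lemma card_le_of_forall_dvd_of_abs_le {t : Finset ℤ} {d : ℤ} {V : ℝ} (hd : 0 < d)
    (hdV : (d : ℝ) ≤ V) (ht : ∀ u ∈ t, d ∣ u ∧ |(u : ℝ)| ≤ V) :
    (#t : ℝ) ≤ 3 * V / d := by
  have hd' : (0 : ℝ) < d := by exact_mod_cast hd
  calc (#t : ℝ) ≤ 2 * V / d + 1 :=
        card_le_of_forall_modEq_of_abs_sub_le (u₀ := 0) hd (hd'.le.trans hdV) fun u hu =>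
          ⟨Int.modEq_zero_iff_dvd.mpr (ht u hu).1, by simpa using (ht u hu).2⟩
    _ ≤ 3 * V / d := by
        rw [div_add_one hd'.ne', div_le_div_iff_of_pos_right hd']
        linarith

lemma card_le_card_mul_of_fiber_le {α β : Type*} [DecidableEq β] {s : Finset α} {t : Finset β}
    {f : α → β} (hf : ∀ a ∈ s, f a ∈ t) {B : ℝ} (hB : ∀ b ∈ t, (#{a ∈ s | f a = b} : ℝ) ≤ B) :
    (#s : ℝ) ≤ #t * B := by
  rw [card_eq_sum_card_fiberwise hf, Nat.cast_sum]
  exact (sum_le_sum hB).trans_eq (by rw [sum_const, nsmul_eq_mul])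

lemma card_le_of_forall_lt_gcd {s : Finset (ℤ × ℤ)} {V T : ℝ} (hT : 0 < T)
    (hs : ∀ x ∈ s, x.1 ≠ 0 ∧ |(x.1 : ℝ)| ≤ V ∧ |(x.2 : ℝ)| ≤ V ∧ T < Int.gcd x.1 x.2) :
    (#s : ℝ) ≤ 18 * V ^ 2 / T := by
  have hmaps : ∀ x ∈ s, Int.gcd x.1 x.2 ∈ Ioo ⌊T⌋₊ (⌊V⌋₊ + 1) := by
    intro x hx
    obtain ⟨hx0, hx1, -, hxT⟩ := hs x hx
    have hle : (Int.gcd x.1 x.2 : ℝ) ≤ |(x.1 : ℝ)| := by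
      rw [← Int.cast_abs, Int.abs_eq_natAbs, Int.cast_natCast, Nat.cast_le]
      exact Int.gcd_le_natAbs_left _ hx0
    rw [mem_Ioo, Nat.floor_lt hT.le, Nat.lt_add_one_iff]
    exact ⟨hxT, Nat.le_floor (hle.trans hx1)⟩
  have hfiber : ∀ d ∈ Ioo ⌊T⌋₊ (⌊V⌋₊ + 1),
      (#{x ∈ s | Int.gcd x.1 x.2 = d} : ℝ) ≤ 9 * V ^ 2 * ((d : ℝ) ^ 2)⁻¹ := by
    intro d hd
    rw [mem_Ioo, Nat.lt_add_one_iff] at hd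
    have hd0 : (0 : ℤ) < d := by exact_mod_cast (Nat.zero_le _).trans_lt hd.1
    have hdV : ((d : ℤ) : ℝ) ≤ V := (Nat.le_floor_iff' (by omega)).mp hd.2
    have hV0 : 0 ≤ V := (Int.cast_nonneg (R := ℝ) hd0.le).trans hdV
    set F := {x ∈ s | Int.gcd x.1 x.2 = d}
    have hF : ∀ x ∈ F, ((d : ℤ) ∣ x.1 ∧ |(x.1 : ℝ)| ≤ V) ∧ ((d : ℤ) ∣ x.2 ∧ |(x.2 : ℝ)| ≤ V) := by
      intro x hx
      rw [mem_filter] at hx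
      obtain ⟨-, h1, h2, -⟩ := hs x hx.1
      rw [← hx.2]
      exact ⟨⟨Int.gcd_dvd_left _ _, h1⟩, Int.gcd_dvd_right _ _, h2⟩
    calc (#F : ℝ) ≤ #(F.image Prod.fst) * #(F.image Prod.snd) := by
          exact_mod_cast (card_le_card subset_product).trans_eq (card_product _ _)
      _ ≤ (3 * V / d) * (3 * V / d) := by
          refine mul_le_mul (card_le_of_forall_dvd_of_abs_le hd0 hdV ?_)
            (card_le_of_forall_dvd_of_abs_le hd0 hdV ?_) (by positivity) (by positivity) <;>
            simp only [forall_mem_image]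
          exacts [fun x hx => (hF x hx).1, fun x hx => (hF x hx).2]
      _ = 9 * V ^ 2 * ((d : ℝ) ^ 2)⁻¹ := by ring
  calc (#s : ℝ) ≤ ∑ d ∈ Ioo ⌊T⌋₊ (⌊V⌋₊ + 1), 9 * V ^ 2 * ((d : ℝ) ^ 2)⁻¹ := by
        rw [card_eq_sum_card_fiberwise hmaps, Nat.cast_sum]
        exact sum_le_sum hfiber
    _ ≤ 9 * V ^ 2 * (2 / (⌊T⌋₊ + 1)) := by
        rw [← mul_sum]
        exact mul_le_mul_of_nonneg_left (sum_Ioo_inv_sq_le _ _) (by positivity)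
    _ ≤ 9 * V ^ 2 * (2 / T) := by
        gcongr
        exact (Nat.lt_floor_add_one T).le
    _ = 18 * V ^ 2 / T := by ring

lemma card_le_of_forall_mul_add_mul_eq {s : Finset (ℤ × ℤ)} {v w n : ℤ} {A : ℝ} (hw : w ≠ 0)
    (hA : 0 ≤ A) (hs : ∀ x ∈ s, |(x.1 : ℝ)| ≤ A ∧ x.1 * v + x.2 * w = n) :
    (#s : ℝ) ≤ 4 * A * Int.gcd v w / |(w : ℝ)| + 1 := by
  obtain rfl | ⟨x₀, hx₀⟩ := s.eq_empty_or_nonempty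
  · simp only [card_empty, Nat.cast_zero]
    positivity
  have hinj : Set.InjOn Prod.fst (s : Set (ℤ × ℤ)) := by
    intro x hx y hy hxy
    have hsnd : x.2 * w = y.2 * w := by
      linear_combination (hs x hx).2 - (hs y hy).2 - v * hxy
    exact Prod.ext hxy (mul_right_cancel₀ hw hsnd)
  set g : ℤ := (Int.gcd |w| v : ℤ)
  have hg : (g : ℝ) = Int.gcd v w := by
    simp only [g, Int.gcd, Int.natAbs_abs, Nat.gcd_comm, Int.cast_natCast]
  have hg0 : (0 : ℝ) < g := by
    rw [hg]
    exact_mod_cast Int.gcd_pos_of_ne_zero_right v hw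
  have hm : ((|w| / g : ℤ) : ℝ) = |(w : ℝ)| / g := by
    rw [Int.cast_div (Int.gcd_dvd_left _ _) hg0.ne', Int.cast_abs]
  have hm0 : 0 < |w| / g := by
    have : (0 : ℝ) < |(w : ℝ)| / g := div_pos (by positivity) hg0
    exact_mod_cast hm ▸ this
  have hcong : ∀ u ∈ s.image Prod.fst,
      u ≡ x₀.1 [ZMOD |w| / g] ∧ |((u - x₀.1 : ℤ) : ℝ)| ≤ 2 * A := by
    simp only [forall_mem_image]
    intro x hx
    refine ⟨Int.ModEq.cancel_right_div_gcd (abs_pos.mpr hw) ?_, ?_⟩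
    · rw [Int.modEq_iff_dvd, abs_dvd]
      exact ⟨x.2 - x₀.2, by linear_combination (hs x₀ hx₀).2 - (hs x hx).2⟩
    · push_cast
      exact (abs_sub _ _).trans (by linarith [(hs x hx).1, (hs x₀ hx₀).1])
  calc (#s : ℝ) = #(s.image Prod.fst) := by rw [card_image_of_injOn hinj]
    _ ≤ 2 * (2 * A) / ((|w| / g : ℤ) : ℝ) + 1 :=
        card_le_of_forall_modEq_of_abs_sub_le hm0 (by positivity) hcong
    _ = 4 * A * Int.gcd v w / |(w : ℝ)| + 1 := by
        rw [hm, ← hg]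
        field_simp
        ring

lemma card_filter_snd_snd_eq {α β : Type*} [DecidableEq β] (s : Finset ((α × β) × (α × β)))
    (b : β × β) :
    #{x ∈ s | (x.1.2, x.2.2) = b} =
      #({x ∈ s | (x.1.2, x.2.2) = b}.image fun x => (x.1.1, x.2.1)) := by
  refine (card_image_of_injOn fun x hx y hy hxy => ?_).symm
  have hx' := (mem_filter.mp hx).2.trans (mem_filter.mp hy).2.symm
  simp only [Prod.mk.injEq] at hxy hx'
  exact Prod.ext (Prod.ext hxy.1 hx'.1) (Prod.ext hxy.2 hx'.2)

lemma card_filter_lt_gcd_le {P : Finset (ℤ × ℤ)} {U V T : ℝ} (hU : 0 ≤ U) (hT : 0 < T)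
    (hP : ∀ p ∈ P, |(p.1 : ℝ)| ≤ U ∧ p.2 ≠ 0 ∧ |(p.2 : ℝ)| ≤ V) :
    (#{x ∈ P ×ˢ P | T < Int.gcd x.1.2 x.2.2} : ℝ) ≤ 18 * V ^ 2 / T * (2 * U + 1) ^ 2 := by
  set R := {x ∈ P ×ˢ P | T < Int.gcd x.1.2 x.2.2}
  have hR : ∀ x ∈ R, x.1 ∈ P ∧ x.2 ∈ P ∧ T < Int.gcd x.1.2 x.2.2 := by
    simp only [R, mem_filter, mem_product]
    exact fun x hx => ⟨hx.1.1, hx.1.2, hx.2⟩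
  have hsnds : (#(R.image fun x => (x.1.2, x.2.2)) : ℝ) ≤ 18 * V ^ 2 / T := by
    refine card_le_of_forall_lt_gcd hT ?_
    simp only [forall_mem_image]
    intro x hx
    obtain ⟨h1, h2, hgcd⟩ := hR x hx
    exact ⟨(hP _ h1).2.1, (hP _ h1).2.2, (hP _ h2).2.2, hgcd⟩
  have hfiber : ∀ b ∈ R.image (fun x => (x.1.2, x.2.2)),
      (#{x ∈ R | (x.1.2, x.2.2) = b} : ℝ) ≤ (2 * U + 1) ^ 2 := by
    intro b _
    rw [card_filter_snd_snd_eq, sq]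
    refine card_le_of_forall_abs_le hU hU ?_
    simp only [forall_mem_image, mem_filter]
    exact fun x hx => ⟨(hP _ (hR x hx.1).1).1, (hP _ (hR x hx.1).2.1).1⟩
  calc (#R : ℝ) ≤ #(R.image fun x => (x.1.2, x.2.2)) * (2 * U + 1) ^ 2 :=
        card_le_card_mul_of_fiber_le (fun x hx => mem_image_of_mem _ hx) hfiber
    _ ≤ 18 * V ^ 2 / T * (2 * U + 1) ^ 2 := by gcongr

lemma card_filter_mul_add_mul_eq_le {P : Finset (ℤ × ℤ)} {Q : Finset ((ℤ × ℤ) × (ℤ × ℤ))}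
    {U V L T : ℝ} (hU : 0 ≤ U) (hV : 0 ≤ V) (hL : 0 < L) (hT : 0 ≤ T)
    (hP : ∀ p ∈ P, |(p.1 : ℝ)| ≤ U ∧ L ≤ |(p.2 : ℝ)| ∧ |(p.2 : ℝ)| ≤ V)
    (hQ : ∀ x ∈ Q, x.1 ∈ P ∧ x.2 ∈ P ∧ (Int.gcd x.1.2 x.2.2 : ℝ) ≤ T) (n : ℤ) :
    (#{x ∈ Q | x.1.1 * x.1.2 + x.2.1 * x.2.2 = n} : ℝ) ≤
      (2 * V + 1) ^ 2 * (4 * U * T / L + 1) := by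
  set R := {x ∈ Q | x.1.1 * x.1.2 + x.2.1 * x.2.2 = n}
  have hR : ∀ x ∈ R, x.1 ∈ P ∧ x.2 ∈ P ∧ (Int.gcd x.1.2 x.2.2 : ℝ) ≤ T ∧
      x.1.1 * x.1.2 + x.2.1 * x.2.2 = n := by
    simp only [R, mem_filter]
    exact fun x hx => ⟨(hQ x hx.1).1, (hQ x hx.1).2.1, (hQ x hx.1).2.2, hx.2⟩
  have hsnds : (#(R.image fun x => (x.1.2, x.2.2)) : ℝ) ≤ (2 * V + 1) ^ 2 := by
    rw [sq]
    refine card_le_of_forall_abs_le hV hV ?_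
    simp only [forall_mem_image]
    exact fun x hx => ⟨(hP _ (hR x hx).1).2.2, (hP _ (hR x hx).2.1).2.2⟩
  have hfiber : ∀ b ∈ R.image (fun x => (x.1.2, x.2.2)),
      (#{x ∈ R | (x.1.2, x.2.2) = b} : ℝ) ≤ 4 * U * T / L + 1 := by
    simp only [forall_mem_image]
    intro x₀ hx₀
    obtain ⟨-, hx₀P, hx₀T, -⟩ := hR x₀ hx₀
    have hw : L ≤ |(x₀.2.2 : ℝ)| := (hP _ hx₀P).2.1
    rw [card_filter_snd_snd_eq]
    calc _ ≤ 4 * U * Int.gcd x₀.1.2 x₀.2.2 / |(x₀.2.2 : ℝ)| + 1 := by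
          have hw0 : x₀.2.2 ≠ 0 := by
            rintro h
            simp only [h, Int.cast_zero, abs_zero] at hw
            linarith
          refine card_le_of_forall_mul_add_mul_eq (n := n) hw0 hU ?_
          simp only [forall_mem_image, mem_filter, Prod.mk.injEq]
          rintro x ⟨hx, hx12, hx22⟩
          rw [← hx12, ← hx22]
          exact ⟨(hP _ (hR x hx).1).1, (hR x hx).2.2.2⟩
      _ ≤ 4 * U * T / L + 1 := by
          gcongr
  calc (#R : ℝ) ≤ #(R.image fun x => (x.1.2, x.2.2)) * (4 * U * T / L + 1) :=
        card_le_card_mul_of_fiber_le (fun x hx => mem_image_of_mem _ hx) hfiber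
    _ ≤ (2 * V + 1) ^ 2 * (4 * U * T / L + 1) := by gcongr

lemma card_sub_le_card_filter_le_abs_snd {Ω : Finset (ℤ × ℤ)} {U L : ℝ} (hU : 0 ≤ U)
    (hL : 0 ≤ L) (hΩ : ∀ p ∈ Ω, |(p.1 : ℝ)| ≤ U) :
    (#Ω : ℝ) - (2 * U + 1) * (2 * L + 1) ≤ #{p ∈ Ω | L ≤ |(p.2 : ℝ)|} := by
  have hsplit := card_filter_add_card_filter_not (s := Ω) (fun p => L ≤ |(p.2 : ℝ)|)
  have hsmall : (#{p ∈ Ω | ¬L ≤ |(p.2 : ℝ)|} : ℝ) ≤ (2 * U + 1) * (2 * L + 1) := by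
    refine card_le_of_forall_abs_le hU hL fun p hp => ?_
    rw [mem_filter, not_le] at hp
    exact ⟨hΩ p hp.1, hp.2.le⟩
  rw [← hsplit, Nat.cast_add]
  linarith

lemma le_card_filter_gcd_le {P : Finset (ℤ × ℤ)} {ε U V T : ℝ} (hε : 0 < ε) (hU : 1 ≤ U)
    (hV : 0 ≤ V) (hT : 1296 ≤ ε ^ 2 * T)
    (hP : ∀ p ∈ P, |(p.1 : ℝ)| ≤ U ∧ p.2 ≠ 0 ∧ |(p.2 : ℝ)| ≤ V) (hPcard : ε * U * V / 2 ≤ #P) :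
    ε ^ 2 * U ^ 2 * V ^ 2 / 8 ≤ #{x ∈ P ×ˢ P | (Int.gcd x.1.2 x.2.2 : ℝ) ≤ T} := by
  have hT0 : 0 < T := pos_of_mul_pos_right (a := ε ^ 2) (by linarith) (by positivity)
  have hsplit := card_filter_add_card_filter_not (s := P ×ˢ P)
    (fun x => (Int.gcd x.1.2 x.2.2 : ℝ) ≤ T)
  simp only [not_le, card_product] at hsplit
  have hsplit' : (#{x ∈ P ×ˢ P | (Int.gcd x.1.2 x.2.2 : ℝ) ≤ T} : ℝ) +
      #{x ∈ P ×ˢ P | T < Int.gcd x.1.2 x.2.2} = #P * #P := by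
    exact_mod_cast hsplit
  have hbad : 18 * V ^ 2 / T * (2 * U + 1) ^ 2 ≤ ε ^ 2 * U ^ 2 * V ^ 2 / 8 := by
    have hU3 : (2 * U + 1) ^ 2 ≤ 9 * U ^ 2 := by nlinarith
    have hTinv : 18 * V ^ 2 / T ≤ 18 * V ^ 2 * ε ^ 2 / 1296 := by
      rw [div_le_div_iff₀ hT0 (by norm_num)]
      nlinarith [sq_nonneg V]
    calc 18 * V ^ 2 / T * (2 * U + 1) ^ 2 ≤ 18 * V ^ 2 * ε ^ 2 / 1296 * (9 * U ^ 2) := by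
          gcongr
      _ = ε ^ 2 * U ^ 2 * V ^ 2 / 8 := by ring
  have hPsq := mul_le_mul hPcard hPcard (by positivity) (by positivity)
  linarith [card_filter_lt_gcd_le (by linarith) hT0 hP]

def sumsOfTwoProducts (Ω : Finset (ℤ × ℤ)) : Finset ℤ :=
  (Ω ×ˢ Ω).image fun x => x.1.1 * x.1.2 + x.2.1 * x.2.2

lemma sumsOfTwoProducts_mono {P Ω : Finset (ℤ × ℤ)} (h : P ⊆ Ω) :
    sumsOfTwoProducts P ⊆ sumsOfTwoProducts Ω :=
  image_subset_image (product_subset_product h h)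

lemma sumsOfTwoProducts_image_swap (Ω : Finset (ℤ × ℤ)) :
    sumsOfTwoProducts (Ω.image Prod.swap) = sumsOfTwoProducts Ω := by
  ext n
  simp only [sumsOfTwoProducts, mem_image, mem_product, Prod.exists, Prod.swap_prod_mk,
    Prod.mk.injEq]
  constructor
  · rintro ⟨_, _, _, _, ⟨⟨a, b, hab, rfl, rfl⟩, ⟨c, d, hcd, rfl, rfl⟩⟩, rfl⟩
    exact ⟨a, b, c, d, ⟨hab, hcd⟩, by ring⟩
  · rintro ⟨a, b, c, d, ⟨hab, hcd⟩, rfl⟩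
    exact ⟨b, a, d, c, ⟨⟨a, b, hab, rfl, rfl⟩, ⟨c, d, hcd, rfl, rfl⟩⟩, by ring⟩

lemma sumsOfTwoProducts_subset_filter_Icc {Ω : Finset (ℤ × ℤ)} {U V : ℝ}
    (hΩ : ∀ p ∈ Ω, |(p.1 : ℝ)| ≤ U ∧ |(p.2 : ℝ)| ≤ V) :
    sumsOfTwoProducts Ω ⊆ (Icc (-⌊2 * U * V⌋) ⌊2 * U * V⌋).filter
      (fun n : ℤ => ∃ p ∈ Ω, ∃ q ∈ Ω, n = p.1 * p.2 + q.1 * q.2) := by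
  simp only [sumsOfTwoProducts, subset_iff, mem_image, mem_product, mem_filter]
  rintro _ ⟨⟨p, q⟩, ⟨hp, hq⟩, rfl⟩
  refine ⟨mem_Icc_neg_floor_floor_of_abs_le ?_, p, hp, q, hq, rfl⟩
  have hprod : ∀ r ∈ Ω, |(r.1 : ℝ) * r.2| ≤ U * V := fun r hr => by
    rw [abs_mul]
    exact mul_le_mul (hΩ r hr).1 (hΩ r hr).2 (abs_nonneg _) ((abs_nonneg _).trans (hΩ r hr).1)
  push_cast
  linarith [abs_add_le ((p.1 : ℝ) * p.2) (q.1 * q.2), hprod p hp, hprod q hq]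

lemma card_le_card_sumsOfTwoProducts_mul {P : Finset (ℤ × ℤ)} {U V L T : ℝ} (hU : 0 ≤ U)
    (hV : 0 ≤ V) (hL : 0 < L) (hT : 0 ≤ T)
    (hP : ∀ p ∈ P, |(p.1 : ℝ)| ≤ U ∧ L ≤ |(p.2 : ℝ)| ∧ |(p.2 : ℝ)| ≤ V) :
    (#{x ∈ P ×ˢ P | (Int.gcd x.1.2 x.2.2 : ℝ) ≤ T} : ℝ) ≤
      #(sumsOfTwoProducts P) * ((2 * V + 1) ^ 2 * (4 * U * T / L + 1)) := by
  refine card_le_card_mul_of_fiber_le (f := fun x => x.1.1 * x.1.2 + x.2.1 * x.2.2)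
    (fun x hx => ?_) fun n _ => ?_
  · exact mem_image_of_mem (fun x => x.1.1 * x.1.2 + x.2.1 * x.2.2) (mem_filter.mp hx).1
  refine card_filter_mul_add_mul_eq_le hU hV hL hT hP (fun x hx => ?_) n
  rw [mem_filter, mem_product] at hx
  exact ⟨hx.1.1, hx.1.2, hx.2⟩

lemma pow_seven_mul_fiber_bound_le {ε U V : ℝ} (hε : 0 < ε) (hε' : ε ≤ 1 / 8192) (hV : 1 ≤ V)
    (hVU : V ≤ U) :
    ε ^ 7 * U * V * ((2 * V + 1) ^ 2 * (4 * U * (4096 / ε ^ 2) / (ε * V / 16) + 1)) ≤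
      ε ^ 2 * U ^ 2 * V ^ 2 / 8 := by
  have hone : 1 ≤ 262144 * U / (ε ^ 3 * V) := by
    rw [one_le_div (by positivity)]
    nlinarith [pow_le_one₀ (n := 3) hε.le (by linarith)]
  have hε2 : ε ^ 2 ≤ 1 / 67108864 := by nlinarith
  have hU0 : 0 ≤ U := by linarith
  have hV3 : (2 * V + 1) ^ 2 ≤ 9 * V ^ 2 := by nlinarith
  calc _ = ε ^ 7 * U * V * ((2 * V + 1) ^ 2 * (262144 * U / (ε ^ 3 * V) + 1)) := by
        field_simp
        ring
    _ ≤ ε ^ 7 * U * V * (9 * V ^ 2 * (2 * (262144 * U / (ε ^ 3 * V)))) := by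
        gcongr
        linarith
    _ = 4718592 * ε ^ 2 * (ε ^ 2 * U ^ 2 * V ^ 2) := by
        field_simp
        ring
    _ ≤ 4718592 * (1 / 67108864) * (ε ^ 2 * U ^ 2 * V ^ 2) := by gcongr
    _ ≤ ε ^ 2 * U ^ 2 * V ^ 2 / 8 := by
        have : 0 ≤ ε ^ 2 * U ^ 2 * V ^ 2 := by positivity
        linarith

lemma le_card_sumsOfTwoProducts_of_le {ε U V : ℝ} (hε : 0 < ε) (hε' : ε ≤ 1 / 8192)
    (hU : 64 ≤ ε * U) (hV : 64 ≤ ε * V) (hVU : V ≤ U) {Ω : Finset (ℤ × ℤ)}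
    (hΩ : ∀ p ∈ Ω, |(p.1 : ℝ)| ≤ U ∧ |(p.2 : ℝ)| ≤ V) (hcard : ε * U * V ≤ #Ω) :
    ε ^ 7 * U * V ≤ #(sumsOfTwoProducts Ω) := by
  have hU1 : 1 ≤ U := by nlinarith
  have hV1 : 1 ≤ V := by nlinarith
  set L := ε * V / 16 with hLdef
  have hL : 0 < L := by positivity
  set P := {p ∈ Ω | L ≤ |(p.2 : ℝ)|}
  have hPΩ : P ⊆ Ω := filter_subset _ _
  have hP : ∀ p ∈ P, |(p.1 : ℝ)| ≤ U ∧ L ≤ |(p.2 : ℝ)| ∧ |(p.2 : ℝ)| ≤ V := fun p hp =>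
    ⟨(hΩ p (hPΩ hp)).1, (mem_filter.mp hp).2, (hΩ p (hPΩ hp)).2⟩
  have hP0 : ∀ p ∈ P, p.2 ≠ 0 := by
    intro p hp h
    have := (hP p hp).2.1
    rw [h, Int.cast_zero, abs_zero] at this
    linarith
  have hPcard : ε * U * V / 2 ≤ #P := by
    have := card_sub_le_card_filter_le_abs_snd (by linarith) hL.le fun p hp => (hΩ p hp).1
    have : (2 * U + 1) * (2 * L + 1) ≤ 3 * U * (9 * (ε * V) / 64) := by
      gcongr <;> linarith [hLdef]
    linarith
  have hQcard := le_card_filter_gcd_le (T := 4096 / ε ^ 2) hε hU1 (by linarith)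
    (by field_simp; norm_num) (fun p hp => ⟨(hP p hp).1, hP0 p hp, (hP p hp).2.2⟩) hPcard
  have hQS := card_le_card_sumsOfTwoProducts_mul (T := 4096 / ε ^ 2) (by linarith)
    (by linarith) hL (by positivity) hP
  have hS : ε ^ 7 * U * V ≤ #(sumsOfTwoProducts P) :=
    le_of_mul_le_mul_right
      ((pow_seven_mul_fiber_bound_le hε hε' hV1 hVU).trans (hQcard.trans hQS))
      (by positivity)
  exact hS.trans (by exact_mod_cast card_le_card (sumsOfTwoProducts_mono hPΩ))

theorem sums_of_two_products (ε U V : ℝ) (hε : 0 < ε) (hε' : ε ≤ 2 ^ (-44 : ℤ))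
    (hU : 64 / ε ≤ U) (hV : 64 / ε ≤ V)
    (Ω : Finset (ℤ × ℤ)) (hΩ : ∀ p ∈ Ω, |(p.1 : ℝ)| ≤ U ∧ |(p.2 : ℝ)| ≤ V)
    (hcard : ε * U * V ≤ (Ω.card : ℝ)) :
    ε ^ 7 * U * V ≤
      (((Finset.Icc (-⌊2 * U * V⌋) ⌊2 * U * V⌋).filter
        (fun n : ℤ => ∃ p ∈ Ω, ∃ q ∈ Ω, n = p.1 * p.2 + q.1 * q.2)).card : ℝ) := by
  have hε_small : ε ≤ 1 / 8192 := hε'.trans (by norm_num)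
  rw [div_le_iff₀' hε] at hU hV
  refine le_trans ?_ (Nat.cast_le.mpr (card_le_card (sumsOfTwoProducts_subset_filter_Icc hΩ)))
  rcases le_total V U with hVU | hUV
  · exact le_card_sumsOfTwoProducts_of_le hε hε_small hU hV hVU hΩ hcard
  · have hΩ' : ∀ p ∈ Ω.image Prod.swap, |(p.1 : ℝ)| ≤ V ∧ |(p.2 : ℝ)| ≤ U := by
      simpa only [forall_mem_image, Prod.fst_swap, Prod.snd_swap] using
        fun p hp => (hΩ p hp).symm
    have hcard' : ε * V * U ≤ #(Ω.image Prod.swap) := by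
      rw [card_image_of_injective _ Prod.swap_injective]
      linarith
    rw [← sumsOfTwoProducts_image_swap]
    linarith [le_card_sumsOfTwoProducts_of_le hε hε_small hV hU hUV hΩ' hcard']
end

section
/- Let X ≥ 1 be real, let t ≥ 1 be an integer, and suppose that S₁, ..., S_t are sets of integers contained in [−X, X] with |S_i| ≥ ηX for each i, where η > 0. Then |⋂_{i=1}^t (S_i − S_i)| ≥ (η/5)^t X. -/
open scoped BigOperators Pointwise

attribute [local instance] Classical.propDecidable

lemma double_count (A B : Finset ℤ) :
    ∑ a ∈ (A - B), ((A.filter (fun x => x - a ∈ B)).card : ℕ) = A.card * B.card := by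
  have : ∀ a, (A.filter (fun x => x - a ∈ B)).card = ∑ x ∈ A, if x - a ∈ B then 1 else 0 := by
    intro a; rw [Finset.card_filter]
  simp_rw [this]
  rw [Finset.sum_comm]
  have h2 : ∀ x ∈ A, (∑ a ∈ (A - B), if x - a ∈ B then 1 else 0) = B.card := by
    intro x hx
    rw [← Finset.card_filter]
    symm
    apply Finset.card_bij (fun b _ => x - b)
    · intro b hb
      exact Finset.mem_filter.mpr ⟨Finset.sub_mem_sub hx hb, by simpa using hb⟩
    · intro a ha b hb h; omega
    · intro a ha
      exact ⟨x - a, (Finset.mem_filter.mp ha).2, by ring⟩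
  rw [Finset.sum_congr rfl h2, Finset.sum_const, smul_eq_mul]

lemma exists_shift (X : ℝ) (hX : 1 ≤ X) (A B : Finset ℤ)
    (hA : ∀ x ∈ A, |(x : ℝ)| ≤ X) (hB : ∀ x ∈ B, |(x : ℝ)| ≤ X)
    (hAne : A.Nonempty) (hBne : B.Nonempty) :
    ∃ a : ℤ, (A.card : ℝ) * B.card / (5 * X) ≤ ((A.filter (fun x => x - a ∈ B)).card : ℝ) := by
  set D := A - B with hD
  have hDne : D.Nonempty := ⟨hAne.choose - hBne.choose, Finset.sub_mem_sub hAne.choose_spec hBne.choose_spec⟩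
  have hDcard : (D.card : ℝ) ≤ 5 * X := by
    have hsub : D ⊆ Finset.Icc (⌈-(2*X)⌉) (⌊2*X⌋) := by
      intro d hd
      obtain ⟨x, hx, y, hy, rfl⟩ := Finset.mem_sub.mp hd
      have h1 := abs_le.mp (hA x hx)
      have h2 := abs_le.mp (hB y hy)
      rw [Finset.mem_Icc]
      constructor
      · apply Int.ceil_le.mpr; push_cast; linarith
      · apply Int.le_floor.mpr; push_cast; linarith
    have := Finset.card_le_card hsub
    rw [Int.card_Icc] at this
    have h3 : (⌊2*X⌋ : ℝ) ≤ 2 * X := Int.floor_le _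
    have h4 : -(2*X) ≤ (⌈-(2*X)⌉ : ℝ) := Int.le_ceil _
    have h5 : (D.card : ℝ) ≤ ((⌊2*X⌋ + 1 - ⌈-(2*X)⌉).toNat : ℝ) := by exact_mod_cast this
    have h6 : ((⌊2*X⌋ + 1 - ⌈-(2*X)⌉).toNat : ℝ) ≤ ((⌊2*X⌋:ℝ) + 1 - ⌈-(2*X)⌉) ⊔ 0 := by
      rcases le_or_gt (⌊2*X⌋ + 1 - ⌈-(2*X)⌉) 0 with h | h
      · simp [Int.toNat_of_nonpos h]
      · have h' : ((⌊2*X⌋ + 1 - ⌈-(2*X)⌉).toNat : ℝ) = ((⌊2*X⌋:ℝ) + 1 - ⌈-(2*X)⌉) := by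
          have := Int.toNat_of_nonneg h.le
          exact_mod_cast congrArg (Int.cast : ℤ → ℝ) this
        rw [h']; exact le_max_left _ _
    have h7 : ((⌊2*X⌋:ℝ) + 1 - ⌈-(2*X)⌉) ⊔ 0 ≤ 5 * X := by
      apply max_le _ (by linarith)
      linarith
    linarith
  -- pigeonhole
  have hkey : ∃ a ∈ D, (A.card : ℝ) * B.card / D.card ≤ ((A.filter (fun x => x - a ∈ B)).card : ℝ) := by
    by_contra h
    push_neg at h
    have hsum : (∑ a ∈ D, ((A.filter (fun x => x - a ∈ B)).card : ℝ)) < ∑ a ∈ D, (A.card : ℝ) * B.card / D.card :=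
      Finset.sum_lt_sum_of_nonempty hDne h
    rw [Finset.sum_const, nsmul_eq_mul, mul_div_cancel₀] at hsum
    · rw [← Nat.cast_sum, double_count] at hsum
      push_cast at hsum
      linarith
    · exact_mod_cast hDne.card_pos.ne'
  obtain ⟨a, ha, hle⟩ := hkey
  refine ⟨a, le_trans ?_ hle⟩
  apply div_le_div_of_nonneg_left _ _ hDcard
  · positivity
  · exact_mod_cast hDne.card_pos

/-- If `S₁,...,S_t ⊆ [-X,X]` are sets of integers with `|S_i| ≥ ηX`, then the intersection
of the difference sets `S_i - S_i` has size at least `(η/5)^t X`. -/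
theorem intersection_of_difference_sets (X : ℝ) (hX : 1 ≤ X) (t : ℕ) (ht : 0 < t)
    (η : ℝ) (hη : 0 < η) (S : Fin t → Finset ℤ)
    (hS : ∀ i, ∀ s ∈ S i, |(s : ℝ)| ≤ X)
    (hcard : ∀ i, η * X ≤ ((S i).card : ℝ)) :
    (η / 5) ^ t * X ≤
      ((((S ⟨0, ht⟩ - S ⟨0, ht⟩)).filter (fun x => ∀ i, x ∈ S i - S i)).card : ℝ) := by
  have hX0 : (0:ℝ) < X := lt_of_lt_of_le one_pos hX
  -- main induction
  have key : ∀ k : ℕ, k < t → ∃ T : Finset ℤ, T ⊆ S ⟨0, ht⟩ ∧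
      (∀ i : Fin t, (i : ℕ) ≤ k → ∀ x ∈ T, ∀ y ∈ T, x - y ∈ S i - S i) ∧
      η * X * (η / 5) ^ k ≤ (T.card : ℝ) := by
    intro k
    induction k with
    | zero =>
      intro _
      refine ⟨S ⟨0, ht⟩, Finset.Subset.refl _, ?_, by simpa using hcard ⟨0, ht⟩⟩
      intro i hi x hx y hy
      have : i = ⟨0, ht⟩ := Fin.ext (Nat.le_zero.mp hi)
      rw [this]
      exact Finset.sub_mem_sub hx hy
    | succ k ih =>
      intro hk1
      obtain ⟨T, hT0, hTd, hTc⟩ := ih (Nat.lt_of_succ_lt hk1)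
      have hTpos : (0:ℝ) < T.card := lt_of_lt_of_le (by positivity) hTc
      have hTne : T.Nonempty := Finset.card_pos.mp (by exact_mod_cast hTpos)
      set j : Fin t := ⟨k + 1, hk1⟩
      have hSne : (S j).Nonempty := Finset.card_pos.mp (by
        have := hcard j
        have : (0:ℝ) < ((S j).card : ℝ) := lt_of_lt_of_le (by positivity) this
        exact_mod_cast this)
      obtain ⟨a, ha⟩ := exists_shift X hX T (S j) (fun x hx => hS ⟨0, ht⟩ x (hT0 hx))
        (hS j) hTne hSne
      refine ⟨T.filter (fun x => x - a ∈ S j), (Finset.filter_subset _ _).trans hT0, ?_, ?_⟩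
      · intro i hi x hx y hy
        rcases Nat.lt_or_ge (i : ℕ) (k + 1) with h | h
        · exact hTd i (Nat.lt_succ_iff.mp h) x (Finset.filter_subset _ _ hx)
            y (Finset.filter_subset _ _ hy)
        · have hij : i = j := Fin.ext (le_antisymm hi h)
          rw [hij]
          have hx' := (Finset.mem_filter.mp hx).2
          have hy' := (Finset.mem_filter.mp hy).2
          have : x - y = (x - a) - (y - a) := by ring
          rw [this]
          exact Finset.sub_mem_sub hx' hy'
      · refine le_trans ?_ ha
        have h1 : η * X * (η / 5) ^ (k + 1) = (η * X * (η / 5) ^ k) * (η * X) / (5 * X) := by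
          field_simp
          ring
        rw [h1]
        apply div_le_div_of_nonneg_right ?_ (by positivity)
        exact mul_le_mul hTc (hcard j) (by positivity) (le_of_lt hTpos)
  obtain ⟨T, hT0, hTd, hTc⟩ := key (t - 1) (by omega)
  have hTd' : ∀ i : Fin t, ∀ x ∈ T, ∀ y ∈ T, x - y ∈ S i - S i := by
    intro i x hx y hy
    exact hTd i (by omega) x hx y hy
  have hTpos : (0:ℝ) < T.card := lt_of_lt_of_le (by positivity) hTc
  have hTne : T.Nonempty := Finset.card_pos.mp (by exact_mod_cast hTpos)
  obtain ⟨t0, ht0⟩ := hTne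
  have hsub : T.image (fun x => x - t0) ⊆
      (S ⟨0, ht⟩ - S ⟨0, ht⟩).filter (fun x => ∀ i, x ∈ S i - S i) := by
    intro y hy
    obtain ⟨x, hx, rfl⟩ := Finset.mem_image.mp hy
    exact Finset.mem_filter.mpr ⟨Finset.sub_mem_sub (hT0 hx) (hT0 ht0),
      fun i => hTd' i x hx t0 ht0⟩
  have hcard' : (T.image (fun x => x - t0)).card = T.card :=
    Finset.card_image_of_injective _ (fun a b h => by omega)
  have hfinal : (T.card : ℝ) ≤
      (((S ⟨0, ht⟩ - S ⟨0, ht⟩).filter (fun x => ∀ i, x ∈ S i - S i)).card : ℝ) := by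
    rw [← hcard']
    exact_mod_cast Finset.card_le_card hsub
  refine le_trans ?_ (le_trans hTc hfinal)
  -- (η/5)^t * X ≤ η * X * (η/5)^(t-1)
  have hts : (η / 5) ^ t = (η / 5) ^ (t - 1) * (η / 5) := by
    rw [← pow_succ]; congr 1; omega
  rw [hts]
  have h5 : η / 5 ≤ η := by linarith
  have : (η / 5) ^ (t - 1) * (η / 5) * X ≤ (η / 5) ^ (t - 1) * η * X := by
    apply mul_le_mul_of_nonneg_right _ (le_of_lt hX0)
    exact mul_le_mul_of_nonneg_left h5 (by positivity)
  linarith [this]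
end

section
/- Suppose that α ∈ ℝ and that L ≥ 1 is an integer. Suppose that δ₁, δ₂ are positive real numbers satisfying δ₂ ≥ 32δ₁, that there are at least δ₂L integers n ∈ {1, ..., L} for which ‖αn‖ ≤ δ₁, and that L ≥ 16/δ₂. Then there is some positive integer q ≤ 16/δ₂ such that ‖αq‖ ≤ δ₁ δ₂^{−1} L^{−1}. -/
open scoped BigOperators

attribute [local instance] Classical.propDecidable

/-- The distance from a real number to the nearest integer. -/
noncomputable def distNearestInt (x : ℝ) : ℝ := |x - (round x : ℝ)|

namespace VinogradovAux

lemma dni_nonneg (x : ℝ) : 0 ≤ distNearestInt x := abs_nonneg _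

lemma dni_le (x : ℝ) (z : ℤ) : distNearestInt x ≤ |x - (z : ℝ)| := round_le x z

lemma dni_neg (x : ℝ) : distNearestInt (-x) = distNearestInt x := by
  have h1 : distNearestInt (-x) ≤ |(-x) - ((-(round x) : ℤ) : ℝ)| := dni_le _ _
  have h2 : distNearestInt x ≤ |x - ((-(round (-x)) : ℤ) : ℝ)| := dni_le _ _
  push_cast at h1 h2
  have e1 : (-x) - (-(round x : ℝ)) = -(x - (round x : ℝ)) := by ring
  have e2 : x - (-(round (-x) : ℝ)) = -((-x) - (round (-x) : ℝ)) := by ring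
  rw [e1, abs_neg] at h1
  rw [e2, abs_neg] at h2
  exact le_antisymm h1 h2

lemma dni_zero : distNearestInt 0 = 0 := by
  unfold distNearestInt
  norm_num

lemma abs_lt_of_floor_eq {b x y : ℝ} (hb : 0 < b)
    (h : ⌊x / b⌋ = ⌊y / b⌋) : |x - y| < b := by
  have h1 : x / b < ⌊x / b⌋ + 1 := Int.lt_floor_add_one _
  have h2 : (⌊x / b⌋ : ℝ) ≤ x / b := Int.floor_le _
  have h3 : y / b < ⌊y / b⌋ + 1 := Int.lt_floor_add_one _
  have h4 : (⌊y / b⌋ : ℝ) ≤ y / b := Int.floor_le _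
  rw [h] at h1 h2
  have h5 : |x - y| / b < 1 := by
    have e : x / b - y / b = (x - y) / b := by ring
    have : |x / b - y / b| < 1 := by
      rw [abs_lt]; constructor <;> linarith
    rw [e, abs_div, abs_of_pos hb] at this
    exact this
  exact (div_lt_one hb).mp h5

/-- Core counting lemma: blocks of length `P` × separation `b` within blocks. -/
lemma count_bound (α ε b : ℝ) (L P : ℕ) (A : Finset ℕ)
    (hA : A ⊆ Finset.Icc 1 L)
    (hAe : ∀ n ∈ A, distNearestInt (α * n) ≤ ε)
    (hε : 0 ≤ ε) (hb : 0 < b) (hP : 0 < P)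
    (hsep : ∀ j : ℕ, 1 ≤ j → j < P → b ≤ distNearestInt (α * j)) :
    (2 * A.card + 1 : ℝ) ≤ ((((2 * L : ℤ) / (P : ℤ) : ℤ) : ℝ) + 1) * (2 * ε / b + 1) := by
  classical
  set K₁ : ℤ := (2 * L : ℤ) / (P : ℤ) with hK₁def
  set K₂ : ℤ := ⌊2 * ε / b⌋ with hK₂def
  set E : ℤ → ℝ := fun m => α * m - round (α * m) with hEdef
  have hEabs : ∀ m : ℤ, |E m| = distNearestInt (α * m) := fun m => rfl
  set S : Finset ℤ :=
    ((A.image (fun n : ℕ => (n : ℤ))) ∪ (A.image (fun n : ℕ => -(n : ℤ)))) ∪ {0} with hSdef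
  have hPZ : (0 : ℤ) < (P : ℤ) := by exact_mod_cast hP
  -- membership facts
  have hSmem : ∀ m ∈ S, (-(L : ℤ) ≤ m ∧ m ≤ (L : ℤ) ∧ distNearestInt (α * m) ≤ ε) := by
    intro m hm
    simp only [hSdef, Finset.mem_union, Finset.mem_image, Finset.mem_singleton] at hm
    rcases hm with (⟨n, hn, rfl⟩ | ⟨n, hn, rfl⟩) | rfl
    · obtain ⟨hn1, hn2⟩ := Finset.mem_Icc.mp (hA hn)
      have h0 : (0 : ℤ) ≤ (n : ℤ) := Int.natCast_nonneg n
      have hL0 : (0 : ℤ) ≤ (L : ℤ) := Int.natCast_nonneg L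
      refine ⟨by linarith, by exact_mod_cast hn2, ?_⟩
      have := hAe n hn
      have e : α * ((n : ℤ) : ℝ) = α * (n : ℝ) := by push_cast; ring
      rw [e]; exact this
    · obtain ⟨hn1, hn2⟩ := Finset.mem_Icc.mp (hA hn)
      have h0 : (0 : ℤ) ≤ (n : ℤ) := Int.natCast_nonneg n
      refine ⟨?_, by linarith [Int.natCast_nonneg L], ?_⟩
      · have : (n : ℤ) ≤ (L : ℤ) := by exact_mod_cast hn2
        linarith
      · have := hAe n hn
        have e : α * ((-(n : ℤ) : ℤ) : ℝ) = -(α * (n : ℝ)) := by push_cast; ring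
        rw [e, dni_neg]; exact this
    · refine ⟨by linarith [Int.natCast_nonneg L], by linarith [Int.natCast_nonneg L], ?_⟩
      have e : α * ((0 : ℤ) : ℝ) = 0 := by norm_num
      rw [e, dni_zero]; exact hε
  -- cardinality of S
  have hinj1 : Function.Injective (fun n : ℕ => (n : ℤ)) := fun a b h => by simpa using h
  have hinj2 : Function.Injective (fun n : ℕ => -(n : ℤ)) := fun a b h => by
    simpa using h
  have hd1 : Disjoint (A.image (fun n : ℕ => (n : ℤ))) (A.image (fun n : ℕ => -(n : ℤ))) := by
    rw [Finset.disjoint_left]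
    rintro m hm1 hm2
    obtain ⟨n, hn, rfl⟩ := Finset.mem_image.mp hm1
    obtain ⟨n', hn', he⟩ := Finset.mem_image.mp hm2
    obtain ⟨h1, _⟩ := Finset.mem_Icc.mp (hA hn)
    obtain ⟨h1', _⟩ := Finset.mem_Icc.mp (hA hn')
    omega
  have hd2 : Disjoint ((A.image (fun n : ℕ => (n : ℤ))) ∪ (A.image (fun n : ℕ => -(n : ℤ))))
      ({0} : Finset ℤ) := by
    rw [Finset.disjoint_right]
    intro m hm hm'
    simp only [Finset.mem_singleton] at hm
    subst hm
    rcases Finset.mem_union.mp hm' with h | h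
    · obtain ⟨n, hn, he⟩ := Finset.mem_image.mp h
      obtain ⟨h1, _⟩ := Finset.mem_Icc.mp (hA hn)
      omega
    · obtain ⟨n, hn, he⟩ := Finset.mem_image.mp h
      obtain ⟨h1, _⟩ := Finset.mem_Icc.mp (hA hn)
      omega
  have hScard : S.card = 2 * A.card + 1 := by
    rw [hSdef, Finset.card_union_of_disjoint hd2, Finset.card_union_of_disjoint hd1,
      Finset.card_image_of_injective _ hinj1, Finset.card_image_of_injective _ hinj2]
    simp; ring
  -- the injection
  set f : ℤ → ℤ × ℤ := fun m => ((m + L) / (P : ℤ), ⌊(E m + ε) / b⌋) with hfdef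
  have hK₁0 : 0 ≤ K₁ := Int.ediv_nonneg (by positivity) (le_of_lt hPZ)
  have hK₂0 : 0 ≤ K₂ := Int.floor_nonneg.mpr (by positivity)
  have hmaps : ∀ m ∈ S, f m ∈ Finset.Icc (0 : ℤ) K₁ ×ˢ Finset.Icc (0 : ℤ) K₂ := by
    intro m hm
    obtain ⟨h1, h2, h3⟩ := hSmem m hm
    have hEm : |E m| ≤ ε := by rw [hEabs]; exact h3
    obtain ⟨hEm1, hEm2⟩ := abs_le.mp hEm
    rw [Finset.mem_product, Finset.mem_Icc, Finset.mem_Icc]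
    refine ⟨⟨Int.ediv_nonneg (by linarith) (le_of_lt hPZ), ?_⟩, ?_, ?_⟩
    · apply Int.ediv_le_ediv hPZ
      linarith
    · apply Int.floor_nonneg.mpr
      apply div_nonneg _ hb.le
      linarith
    · apply Int.floor_le_floor
      apply div_le_div_of_nonneg_right ?_ hb.le
      linarith
  have hinjOn : Set.InjOn f S := by
    intro m hm m' hm' hf
    by_contra hne
    have h1 : (m + L) / (P : ℤ) = (m' + L) / (P : ℤ) := congrArg Prod.fst hf
    have h2 : ⌊(E m + ε) / b⌋ = ⌊(E m' + ε) / b⌋ := congrArg Prod.snd hf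
    -- from equal keys: |m - m'| < P
    have hdm : |m - m'| < (P : ℤ) := by
      have r1 : 0 ≤ (m + L) % (P : ℤ) := Int.emod_nonneg _ (ne_of_gt hPZ)
      have r2 : (m + L) % (P : ℤ) < (P : ℤ) := Int.emod_lt_of_pos _ hPZ
      have r3 : 0 ≤ (m' + L) % (P : ℤ) := Int.emod_nonneg _ (ne_of_gt hPZ)
      have r4 : (m' + L) % (P : ℤ) < (P : ℤ) := Int.emod_lt_of_pos _ hPZ
      have e3 : m - m' = (m + L) % (P : ℤ) - (m' + L) % (P : ℤ) := by
        have e1 := Int.mul_ediv_add_emod (m + L) (P : ℤ)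
        have e2 := Int.mul_ediv_add_emod (m' + L) (P : ℤ)
        rw [h1] at e1
        linarith [e1, e2]
      rw [abs_lt]
      constructor <;> linarith
    -- from equal floors: |E m - E m'| < b
    have hEb : |E m - E m'| < b := by
      have := abs_lt_of_floor_eq hb h2
      have e : (E m + ε) - (E m' + ε) = E m - E m' := by ring
      rwa [e] at this
    -- separation
    set j : ℕ := (m - m').natAbs with hjdef
    have hj1 : 1 ≤ j := by
      have : m - m' ≠ 0 := sub_ne_zero.mpr hne
      have := Int.natAbs_pos.mpr this
      omega
    have hjP : j < P := by
      have : ((m - m').natAbs : ℤ) < (P : ℤ) := by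
        rw [← Int.abs_eq_natAbs]; exact hdm
      exact_mod_cast this
    have hsep' : b ≤ distNearestInt (α * j) := hsep j hj1 hjP
    have hcast : distNearestInt (α * (j : ℝ)) = distNearestInt (α * ((m - m' : ℤ) : ℝ)) := by
      have hj : (j : ℝ) = |((m - m' : ℤ) : ℝ)| := by
        rw [hjdef]
        exact_mod_cast Nat.cast_natAbs (α := ℝ) (m - m')
      rcases abs_cases ((m - m' : ℤ) : ℝ) with ⟨he, _⟩ | ⟨he, _⟩
      · rw [hj, he]
      · rw [hj, he, mul_neg, dni_neg]
    have hle : distNearestInt (α * ((m - m' : ℤ) : ℝ)) ≤ |E m - E m'| := by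
      have h := dni_le (α * ((m - m' : ℤ) : ℝ)) (round (α * (m : ℝ)) - round (α * (m' : ℝ)))
      have e : α * ((m - m' : ℤ) : ℝ) -
          ((round (α * (m : ℝ)) - round (α * (m' : ℝ)) : ℤ) : ℝ) = E m - E m' := by
        simp only [hEdef]
        push_cast
        ring
      rwa [e] at h
    rw [hcast] at hsep'
    linarith
  -- conclude
  have hcard : S.card ≤ (Finset.Icc (0 : ℤ) K₁ ×ˢ Finset.Icc (0 : ℤ) K₂).card :=
    Finset.card_le_card_of_injOn f hmaps hinjOn
  have hcard2 : (Finset.Icc (0 : ℤ) K₁ ×ˢ Finset.Icc (0 : ℤ) K₂).card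
      = (K₁ + 1).toNat * (K₂ + 1).toNat := by
    rw [Finset.card_product, Int.card_Icc, Int.card_Icc]
    congr 1 <;> congr 1 <;> ring
  have hreal : (S.card : ℝ) ≤ ((K₁ : ℝ) + 1) * ((K₂ : ℝ) + 1) := by
    rw [hcard2] at hcard
    have h1 : (((K₁ + 1).toNat : ℤ) : ℝ) = (K₁ : ℝ) + 1 := by
      rw [Int.toNat_of_nonneg (by omega)]; push_cast; ring
    have h2 : (((K₂ + 1).toNat : ℤ) : ℝ) = (K₂ : ℝ) + 1 := by
      rw [Int.toNat_of_nonneg (by omega)]; push_cast; ring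
    have h1' : (((K₁ + 1).toNat : ℕ) : ℝ) = (K₁ : ℝ) + 1 := by exact_mod_cast h1
    have h2' : (((K₂ + 1).toNat : ℕ) : ℝ) = (K₂ : ℝ) + 1 := by exact_mod_cast h2
    calc (S.card : ℝ) ≤ (((K₁ + 1).toNat * (K₂ + 1).toNat : ℕ) : ℝ) := by exact_mod_cast hcard
      _ = ((K₁ : ℝ) + 1) * ((K₂ : ℝ) + 1) := by rw [Nat.cast_mul, h1', h2']
  have hK₂le : (K₂ : ℝ) ≤ 2 * ε / b := Int.floor_le _
  have hfinal : ((K₁ : ℝ) + 1) * ((K₂ : ℝ) + 1) ≤ ((K₁ : ℝ) + 1) * (2 * ε / b + 1) := by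
    apply mul_le_mul_of_nonneg_left (by linarith) (by exact_mod_cast by omega)
  have hcast3 : (S.card : ℝ) = 2 * A.card + 1 := by
    rw [hScard]; push_cast; ring
  linarith [hreal, hfinal, hcast3 ▸ hreal]

/-- Key arithmetic lemma about consecutive best approximations. -/
lemma key (α b : ℝ) (p p' : ℕ) (hp : 1 ≤ p) (hpp' : p < p')
    (hbdef : distNearestInt (α * p) = b) (hbpos : 0 < b)
    (hσ : distNearestInt (α * p') < b)
    (hmin : ∀ j : ℕ, 1 ≤ j → j < p' → b ≤ distNearestInt (α * j)) :
    1 ≤ (p : ℝ) * distNearestInt (α * p') + (p' : ℝ) * b := by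
  obtain ⟨a, hγabs⟩ : ∃ a : ℤ, |α * (p : ℝ) - (a : ℝ)| = b := ⟨_, hbdef⟩
  obtain ⟨a', hγ'abs⟩ : ∃ a' : ℤ, |α * (p' : ℝ) - (a' : ℝ)| = distNearestInt (α * p') :=
    ⟨_, rfl⟩
  obtain ⟨σ, hσdef⟩ : ∃ σ : ℝ, distNearestInt (α * (p' : ℝ)) = σ := ⟨_, rfl⟩
  rw [hσdef] at hγ'abs
  obtain ⟨γ, hγdef⟩ : ∃ γ : ℝ, α * (p : ℝ) - (a : ℝ) = γ := ⟨_, rfl⟩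
  obtain ⟨γ', hγ'def⟩ : ∃ γ' : ℝ, α * (p' : ℝ) - (a' : ℝ) = γ' := ⟨_, rfl⟩
  rw [hγdef] at hγabs
  rw [hγ'def] at hγ'abs
  rw [hσdef] at hσ ⊢
  have hσb : σ < b := hσ
  have hσ0 : 0 ≤ σ := hσdef ▸ dni_nonneg (α * (p' : ℝ))
  have hp0 : (0 : ℝ) ≤ (p : ℝ) := Nat.cast_nonneg p
  have hp'0 : (0 : ℝ) < (p' : ℝ) := by
    have : 0 < p' := by omega
    exact_mod_cast this
  -- opposite signs
  have hsign : γ * γ' ≤ 0 := by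
    by_contra h
    push_neg at h
    have hccast : ((p' - p : ℕ) : ℝ) = (p' : ℝ) - (p : ℝ) := by
      push_cast [Nat.cast_sub hpp'.le]; ring
    have h1 : distNearestInt (α * ((p' - p : ℕ) : ℝ)) ≤
        |α * ((p' - p : ℕ) : ℝ) - ((a' - a : ℤ) : ℝ)| := dni_le _ _
    have h2 : α * ((p' - p : ℕ) : ℝ) - ((a' - a : ℤ) : ℝ) = γ' - γ := by
      rw [hccast]; push_cast; rw [← hγdef, ← hγ'def]; ring
    have h3 : |γ' - γ| < b := by
      rcases mul_pos_iff.mp h with ⟨h4, h5⟩ | ⟨h4, h5⟩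
      · rw [abs_lt]
        constructor
        · nlinarith [le_abs_self γ]
        · nlinarith [le_abs_self γ']
      · rw [abs_lt]
        constructor
        · nlinarith [neg_abs_le γ']
        · nlinarith [neg_abs_le γ]
    rw [h2] at h1
    have := hmin (p' - p) (by omega) (by omega)
    linarith
  -- |p γ' - p' γ| = p σ + p' b
  have habs : |(p : ℝ) * γ' - (p' : ℝ) * γ| = (p : ℝ) * σ + (p' : ℝ) * b := by
    rcases lt_trichotomy γ 0 with hγneg | hγ0 | hγpos
    · have hγ'0 : 0 ≤ γ' := by nlinarith
      have e1 : |γ| = -γ := abs_of_neg hγneg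
      have e2 : |γ'| = γ' := abs_of_nonneg hγ'0
      rw [abs_of_nonneg (by nlinarith)]
      rw [← hγabs, ← hγ'abs, e1, e2]; ring
    · exfalso; rw [hγ0] at hγabs; simp at hγabs; linarith
    · have hγ'0 : γ' ≤ 0 := by nlinarith
      have e1 : |γ| = γ := abs_of_pos hγpos
      have e2 : |γ'| = -γ' := abs_of_nonpos hγ'0
      rw [abs_of_nonpos (by nlinarith)]
      rw [← hγabs, ← hγ'abs, e1, e2]; ring
  -- integer identity
  have hid : (p : ℝ) * γ' - (p' : ℝ) * γ = (((p' : ℤ) * a - (p : ℤ) * a' : ℤ) : ℝ) := by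
    rw [← hγdef, ← hγ'def]
    push_cast
    ring
  obtain ⟨z, hzdef⟩ : ∃ z : ℤ, (p' : ℤ) * a - (p : ℤ) * a' = z := ⟨_, rfl⟩
  rw [hzdef] at hid
  have hz0 : z ≠ 0 := by
    intro hz
    rw [hz] at hid
    simp only [Int.cast_zero] at hid
    rw [hid] at habs
    simp only [abs_zero] at habs
    nlinarith
  have hz1 : (1 : ℝ) ≤ |(z : ℝ)| := by
    have h6 := Int.one_le_abs hz0
    calc (1 : ℝ) = ((1 : ℤ) : ℝ) := by norm_num
      _ ≤ ((|z| : ℤ) : ℝ) := by exact_mod_cast h6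
      _ = |(z : ℝ)| := by push_cast; ring
  rw [← hid, habs] at hz1
  exact hz1

end VinogradovAux

/-- Vinogradov-type lemma: if `‖αn‖ ≤ δ₁` for at least `δ₂L` values `n ∈ {1,...,L}`,
where `δ₂ ≥ 32δ₁` and `L ≥ 16/δ₂`, then there is a positive integer `q ≤ 16/δ₂`
with `‖αq‖ ≤ δ₁ δ₂⁻¹ L⁻¹`. -/
theorem vinogradov_lemma (α : ℝ) (L : ℕ) (hL : 1 ≤ L)
    (δ₁ δ₂ : ℝ) (h₁ : 0 < δ₁) (h₂ : 0 < δ₂) (h₂₁ : 32 * δ₁ ≤ δ₂)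
    (hcount : δ₂ * L ≤
      (((Finset.Icc 1 L).filter (fun n : ℕ => distNearestInt (α * n) ≤ δ₁)).card : ℝ))
    (hLbig : 16 / δ₂ ≤ (L : ℝ)) :
    ∃ q : ℕ, 0 < q ∧ (q : ℝ) ≤ 16 / δ₂ ∧
      distNearestInt (α * q) ≤ δ₁ / δ₂ / L := by
  classical
  obtain ⟨A, hAdef⟩ : ∃ A : Finset ℕ,
      (Finset.Icc 1 L).filter (fun n : ℕ => distNearestInt (α * n) ≤ δ₁) = A := ⟨_, rfl⟩
  rw [hAdef] at hcount
  have hAsub : A ⊆ Finset.Icc 1 L := by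
    rw [← hAdef]; exact Finset.filter_subset _ _
  have hAe : ∀ n ∈ A, distNearestInt (α * n) ≤ δ₁ := by
    intro n hn
    rw [← hAdef] at hn
    exact (Finset.mem_filter.mp hn).2
  have hLpos : (0 : ℝ) < L := by
    have : 0 < L := hL
    exact_mod_cast this
  have h16 : (16 : ℝ) ≤ δ₂ * L := by
    rw [div_le_iff₀ h₂] at hLbig
    linarith
  have hcardL : (A.card : ℝ) ≤ L := by
    have h1 : A.card ≤ (Finset.Icc 1 L).card := Finset.card_le_card hAsub
    have h2 : (Finset.Icc 1 L).card = L := by rw [Nat.card_Icc]; omega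
    rw [h2] at h1
    exact_mod_cast h1
  have hδ₂1 : δ₂ ≤ 1 := by nlinarith
  have hτpos : 0 < δ₁ / δ₂ / L := by positivity
  obtain ⟨Q, hQdef⟩ : ∃ Q : ℕ, ⌊(16 : ℝ) / δ₂⌋₊ = Q := ⟨_, rfl⟩
  have hQ1 : 1 ≤ Q := by
    rw [← hQdef]
    apply Nat.le_floor
    rw [Nat.cast_one, le_div_iff₀ h₂]
    nlinarith
  have hQle : (Q : ℝ) ≤ 16 / δ₂ := by
    rw [← hQdef]; exact Nat.floor_le (by positivity)
  have hQfl : (16 : ℝ) / δ₂ < (Q : ℝ) + 1 := by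
    rw [← hQdef]; exact Nat.lt_floor_add_one _
  obtain ⟨p, hpmem, hpmin⟩ := Finset.exists_min_image (Finset.Icc 1 Q)
    (fun j : ℕ => distNearestInt (α * j)) ⟨1, Finset.mem_Icc.mpr ⟨le_refl 1, hQ1⟩⟩
  obtain ⟨hp1, hpQ⟩ := Finset.mem_Icc.mp hpmem
  by_cases hcase : distNearestInt (α * p) ≤ δ₁ / δ₂ / L
  · exact ⟨p, by omega, le_trans (by exact_mod_cast Nat.cast_le.mpr hpQ) hQle, hcase⟩
  push_neg at hcase
  exfalso
  obtain ⟨b, hbdef⟩ : ∃ b : ℝ, distNearestInt (α * (p : ℝ)) = b := ⟨_, rfl⟩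
  rw [hbdef] at hcase
  have hbpos : 0 < b := lt_trans hτpos hcase
  have hpminb : ∀ j : ℕ, 1 ≤ j → j ≤ Q → b ≤ distNearestInt (α * j) := by
    intro j hj1 hj2
    have h5 : distNearestInt (α * (p : ℝ)) ≤ distNearestInt (α * (j : ℝ)) :=
      hpmin j (Finset.mem_Icc.mpr ⟨hj1, hj2⟩)
    rw [hbdef] at h5
    exact h5
  by_cases hex : ∃ j : ℕ, 1 ≤ j ∧ j ≤ 2 * L ∧ distNearestInt (α * j) < b
  · -- Case 2b : a small-norm index exists below 2L; leads to contradiction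
    obtain ⟨p', hp'1, hp'σ, hp'min, hp'le⟩ :
        ∃ p' : ℕ, 1 ≤ p' ∧ distNearestInt (α * p') < b ∧
          (∀ j : ℕ, 1 ≤ j → j < p' → b ≤ distNearestInt (α * j)) ∧ p' ≤ 2 * L := by
      obtain ⟨j, h1, h2, h3⟩ := hex
      have hfind : ∃ i : ℕ, 1 ≤ i ∧ distNearestInt (α * i) < b := ⟨j, h1, h3⟩
      refine ⟨Nat.find hfind, (Nat.find_spec hfind).1, (Nat.find_spec hfind).2, ?_, ?_⟩
      · intro i hi1 hi2
        by_contra hc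
        push_neg at hc
        exact Nat.find_min hfind hi2 ⟨hi1, hc⟩
      · exact le_trans (Nat.find_min' hfind ⟨h1, h3⟩) h2
    have hQp' : Q < p' := by
      by_contra h
      push_neg at h
      have h5 := hpminb p' hp'1 h
      linarith
    have hpp' : p < p' := lt_of_le_of_lt hpQ hQp'
    have hkey := VinogradovAux.key α b p p' hp1 hpp' hbdef hbpos hp'σ hp'min
    have hxpos : (0 : ℝ) < (p' : ℝ) := by
      have h0 : 0 < p' := by omega
      exact_mod_cast h0
    have hx2 : (p' : ℝ) ≤ 2 * (L : ℝ) := by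
      have h0 := (Nat.cast_le (α := ℝ)).mpr hp'le
      push_cast at h0
      linarith
    have hx1 : 16 < δ₂ * (p' : ℝ) := by
      have h7 : (Q : ℝ) + 1 ≤ (p' : ℝ) := by
        have h0 : Q + 1 ≤ p' := hQp'
        have h0' := (Nat.cast_le (α := ℝ)).mpr h0
        push_cast at h0'
        linarith
      rw [div_lt_iff₀ h₂] at hQfl
      have h8 := mul_le_mul_of_nonneg_left h7 h₂.le
      linarith only [hQfl, h8]
    have hx3 : 1 ≤ 2 * (p' : ℝ) * b := by
      have hple : (p : ℝ) ≤ (p' : ℝ) := by exact_mod_cast hpp'.le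
      have hσ0 : 0 ≤ distNearestInt (α * p') := VinogradovAux.dni_nonneg _
      have h9 : (p : ℝ) * distNearestInt (α * p') ≤ (p' : ℝ) * b :=
        mul_le_mul hple hp'σ.le hσ0 (le_of_lt hxpos)
      linarith only [hkey, h9]
    have hcb := VinogradovAux.count_bound α δ₁ b L p' A hAsub hAe h₁.le hbpos (by omega)
      hp'min
    have hK₁0 : (0 : ℤ) ≤ (2 * L : ℤ) / (p' : ℤ) :=
      Int.ediv_nonneg (by positivity) (by positivity)
    have hK : (((2 * L : ℤ) / (p' : ℤ) : ℤ) : ℝ) ≤ 2 * (L : ℝ) / (p' : ℝ) := by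
      rw [le_div_iff₀ hxpos]
      have hne : ((p' : ℤ)) ≠ 0 := by positivity
      have h1 : ((2 * L : ℤ) / (p' : ℤ)) * (p' : ℤ) ≤ 2 * L := by
        have e := Int.mul_ediv_add_emod (2 * L : ℤ) (p' : ℤ)
        have r : 0 ≤ (2 * L : ℤ) % (p' : ℤ) := Int.emod_nonneg _ hne
        linarith
      calc (((2 * L : ℤ) / (p' : ℤ) : ℤ) : ℝ) * (p' : ℝ)
          = ((((2 * L : ℤ) / (p' : ℤ)) * (p' : ℤ) : ℤ) : ℝ) := by push_cast; ring
        _ ≤ ((2 * L : ℤ) : ℝ) := by exact_mod_cast h1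
        _ = 2 * (L : ℝ) := by push_cast; ring
    have ht1 : 2 * δ₁ / b ≤ 4 * δ₁ * (p' : ℝ) := by
      rw [div_le_iff₀ hbpos]
      have h9 := mul_le_mul_of_nonneg_left hx3 h₁.le
      linarith only [h9]
    have h2Lx : 2 * (L : ℝ) / (p' : ℝ) ≤ δ₂ * L / 8 := by
      rw [div_le_div_iff₀ hxpos (by norm_num)]
      have h9 := mul_le_mul_of_nonneg_left hx1.le hLpos.le
      linarith only [h9]
    have hKb : (((2 * L : ℤ) / (p' : ℤ) : ℤ) : ℝ) * (2 * δ₁ / b) ≤ δ₂ * L / 4 := by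
      have hnn : (0 : ℝ) ≤ (((2 * L : ℤ) / (p' : ℤ) : ℤ) : ℝ) := by exact_mod_cast hK₁0
      have hnn2 : (0 : ℝ) ≤ 2 * δ₁ / b := by positivity
      have e : 2 * (L : ℝ) / (p' : ℝ) * (4 * δ₁ * (p' : ℝ)) = 8 * δ₁ * L := by
        field_simp
        ring
      calc (((2 * L : ℤ) / (p' : ℤ) : ℤ) : ℝ) * (2 * δ₁ / b)
          ≤ (2 * (L : ℝ) / (p' : ℝ)) * (4 * δ₁ * (p' : ℝ)) := by
            apply mul_le_mul hK ht1 hnn2 (by positivity)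
        _ = 8 * δ₁ * L := e
        _ ≤ δ₂ * L / 4 := by
            have h9 := mul_le_mul_of_nonneg_right h₂₁ hLpos.le
            linarith only [h9]
    have hK8 : (((2 * L : ℤ) / (p' : ℤ) : ℤ) : ℝ) ≤ δ₂ * L / 8 := le_trans hK h2Lx
    have ht1' : 2 * δ₁ / b ≤ δ₂ * L / 4 := by
      calc 2 * δ₁ / b ≤ 4 * δ₁ * (p' : ℝ) := ht1
        _ ≤ 8 * δ₁ * L := by
            have h9 := mul_le_mul_of_nonneg_left hx2 (by positivity : (0:ℝ) ≤ 4 * δ₁)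
            linarith only [h9]
        _ ≤ δ₂ * L / 4 := by
            have h9 := mul_le_mul_of_nonneg_right h₂₁ hLpos.le
            linarith only [h9]
    have hrhs : ((((2 * L : ℤ) / (p' : ℤ) : ℤ) : ℝ) + 1) * (2 * δ₁ / b + 1)
        = (((2 * L : ℤ) / (p' : ℤ) : ℤ) : ℝ) * (2 * δ₁ / b)
          + (((2 * L : ℤ) / (p' : ℤ) : ℤ) : ℝ) + 2 * δ₁ / b + 1 := by ring
    rw [hrhs] at hcb
    linarith only [hcount, hcb, hKb, hK8, ht1', h16]
  · -- Case 2a : all indices up to 2L have norm ≥ b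
    push_neg at hex
    have hsep : ∀ j : ℕ, 1 ≤ j → j < 2 * L + 1 → b ≤ distNearestInt (α * j) := by
      intro j h1 h2
      exact hex j h1 (by omega)
    have hcb := VinogradovAux.count_bound α δ₁ b L (2 * L + 1) A hAsub hAe h₁.le hbpos
      (by omega) hsep
    have hzero : ((2 * L : ℤ) / ((2 * L + 1 : ℕ) : ℤ)) = 0 := by
      apply Int.ediv_eq_zero_of_lt (by positivity)
      push_cast; omega
    rw [hzero] at hcb
    rw [Int.cast_zero, zero_add, one_mul] at hcb
    have hkb : 2 * (A.card : ℝ) * b ≤ 2 * δ₁ := by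
      have h1 : 2 * (A.card : ℝ) ≤ 2 * δ₁ / b := by linarith only [hcb]
      rw [le_div_iff₀ hbpos] at h1
      linarith only [h1]
    have hτeq : δ₁ / δ₂ / L * (δ₂ * L) = δ₁ := by
      field_simp
    have c1 : 0 ≤ ((A.card : ℝ) - δ₂ * L) * b :=
      mul_nonneg (by linarith only [hcount]) hbpos.le
    have c2 : δ₁ / δ₂ / L * (δ₂ * L) < b * (δ₂ * L) :=
      mul_lt_mul_of_pos_right hcase (mul_pos h₂ hLpos)
    nlinarith only [hkb, c1, c2, hτeq]
end
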